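/- arXiv:1403.7190 — 6 statements merged into one kernel-verified Lean document; each statement's English description precedes it below -/
import Mathlib

section
/- Let G be a group and k a field. The map sending a subgroup K of G to the left ideal of the group algebra k[G] generated by the elements (x - 1) for x in K is an injective, order-preserving map from the poset of subgroups of G to the poset of left ideals of k[G]. Consequently, if k[G] is left noetherian then every ascending chain of subgroups of G stabilizes, i.e., every subgroup of G is finitely generated. -/
section Aux
variable {k G : Type*} [Field k] [Group G]

private lemma mapDomainSub {k α β : Type*} [Field k] (f : α → β) (a b : α →₀ k) :
    Finsupp.mapDomain f (a - b) = Finsupp.mapDomain f a - Finsupp.mapDomain f b :=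
  map_sub (Finsupp.lmapDomain k k f) a b

private lemma single_mul_eq' (g : G) (c : k) (f : MonoidAlgebra k G) :
    ((MonoidAlgebra.single g c) * f).coeff = c • Finsupp.mapDomain (fun h => g * h) f.coeff := by
  ext x
  rw [MonoidAlgebra.coeff_single_mul_apply, Finsupp.smul_apply]
  congr 1
  conv_rhs => rw [show x = g * (g⁻¹ * x) by group]
  rw [Finsupp.mapDomain_apply (mul_right_injective g)]

/-- the kernel of the coset-collapse map, as a left ideal -/
private def P (K : Subgroup G) (k : Type*) [Field k] :
    Submodule (MonoidAlgebra k G) (MonoidAlgebra k G) where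
  carrier := {f | Finsupp.mapDomain (QuotientGroup.mk : G → G ⧸ K) f.coeff = 0}
  zero_mem' := Finsupp.mapDomain_zero
  add_mem' := by
    intro a b ha hb
    simp only [Set.mem_setOf_eq] at *
    rw [MonoidAlgebra.coeff_add, Finsupp.mapDomain_add, ha, hb, add_zero]
  smul_mem' := by
    intro a f hf
    simp only [Set.mem_setOf_eq] at *
    rw [smul_eq_mul]
    induction a using MonoidAlgebra.induction_linear with
    | zero => rw [zero_mul, MonoidAlgebra.coeff_zero, Finsupp.mapDomain_zero]
    | add p q hp hq => rw [add_mul, MonoidAlgebra.coeff_add, Finsupp.mapDomain_add, hp, hq, add_zero]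
    | single g c =>
        rw [
          single_mul_eq', Finsupp.mapDomain_smul]
        rw [show Finsupp.mapDomain (QuotientGroup.mk : G → G ⧸ K)
              (Finsupp.mapDomain (fun h => g * h) f.coeff)
            = Finsupp.mapDomain (fun q : G ⧸ K => g • q)
              (Finsupp.mapDomain (QuotientGroup.mk : G → G ⧸ K) f.coeff) by
            rw [← Finsupp.mapDomain_comp, ← Finsupp.mapDomain_comp]
            rfl]
        rw [hf, Finsupp.mapDomain_zero, smul_zero]

private lemma mem_aug_iff (K : Subgroup G) (x : G) :
    (MonoidAlgebra.of k G x : MonoidAlgebra k G) - 1 ∈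
      Submodule.span (MonoidAlgebra k G)
        ((fun g => (MonoidAlgebra.of k G g : MonoidAlgebra k G) - 1) '' (K : Set G))
    ↔ x ∈ K := by
  have h1 : (1 : MonoidAlgebra k G).coeff = Finsupp.single 1 1 := rfl
  constructor
  · intro hx
    have hle : Submodule.span (MonoidAlgebra k G)
        ((fun g => (MonoidAlgebra.of k G g : MonoidAlgebra k G) - 1) '' (K : Set G)) ≤ P K k := by
      rw [Submodule.span_le]
      rintro _ ⟨y, hy, rfl⟩
      show Finsupp.mapDomain (QuotientGroup.mk : G → G ⧸ K)
        ((MonoidAlgebra.of k G y : MonoidAlgebra k G) - 1).coeff = 0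
      have h2 : (MonoidAlgebra.of k G y : MonoidAlgebra k G).coeff = Finsupp.single y 1 := rfl
      have hq : (QuotientGroup.mk y : G ⧸ K) = QuotientGroup.mk 1 :=
        (QuotientGroup.eq).mpr (by simpa using hy)
      rw [MonoidAlgebra.coeff_sub, h1, h2, mapDomainSub, Finsupp.mapDomain_single, Finsupp.mapDomain_single, hq, sub_self]
    have h := hle hx
    have h2 : (MonoidAlgebra.of k G x : MonoidAlgebra k G).coeff = Finsupp.single x 1 := rfl
    replace h : Finsupp.mapDomain (QuotientGroup.mk : G → G ⧸ K)
        ((MonoidAlgebra.of k G x : MonoidAlgebra k G) - 1).coeff = 0 := h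
    rw [MonoidAlgebra.coeff_sub, h1, h2, mapDomainSub, Finsupp.mapDomain_single, Finsupp.mapDomain_single,
      sub_eq_zero] at h
    rcases (Finsupp.single_eq_single_iff _ _ _ _).mp h with ⟨hq, -⟩ | ⟨h0, -⟩
    · simpa using (QuotientGroup.eq).mp hq
    · exact absurd h0 one_ne_zero
  · intro hx
    exact Submodule.subset_span ⟨x, hx, rfl⟩

end Aux

/-- The map sending a subgroup `K` of `G` to the left ideal of the group algebra `k[G]`
generated by the elements `x - 1` for `x ∈ K` is injective and order-preserving; consequently,
if `k[G]` is left noetherian then every subgroup of `G` is finitely generated. -/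
theorem stmt0 (k G : Type*) [Field k] [Group G] :
    Function.Injective (fun K : Subgroup G =>
      Submodule.span (MonoidAlgebra k G)
        ((fun g => (MonoidAlgebra.of k G g : MonoidAlgebra k G) - 1) '' (K : Set G))) ∧
    Monotone (fun K : Subgroup G =>
      Submodule.span (MonoidAlgebra k G)
        ((fun g => (MonoidAlgebra.of k G g : MonoidAlgebra k G) - 1) '' (K : Set G))) ∧
    (IsNoetherianRing (MonoidAlgebra k G) → ∀ K : Subgroup G, K.FG) := by
  classical
  set f : G → MonoidAlgebra k G := fun g => (MonoidAlgebra.of k G g : MonoidAlgebra k G) - 1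
    with hf
  set Φ : Subgroup G → Submodule (MonoidAlgebra k G) (MonoidAlgebra k G) :=
    fun K => Submodule.span (MonoidAlgebra k G) (f '' (K : Set G)) with hΦ
  have key : ∀ (K : Subgroup G) (x : G), f x ∈ Φ K ↔ x ∈ K := fun K x => mem_aug_iff K x
  have hinj : Function.Injective Φ := by
    intro K₁ K₂ h
    ext x
    rw [← key K₁ x, ← key K₂ x, h]
  have hmono : Monotone Φ := fun K₁ K₂ h =>
    Submodule.span_mono (Set.image_mono h)
  refine ⟨hinj, hmono, ?_⟩
  intro hN K
  have hfg : (Φ K).FG := IsNoetherian.noetherian _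
  obtain ⟨S, hS⟩ := hfg
  -- each generator lies in the span of finitely many of the `f x`, `x ∈ K`
  have hmem : ∀ s ∈ S, ∃ T : Finset (MonoidAlgebra k G),
      ↑T ⊆ f '' (K : Set G) ∧ s ∈ Submodule.span (MonoidAlgebra k G) (T : Set (MonoidAlgebra k G)) := by
    intro s hs
    have : s ∈ Φ K := hS ▸ Submodule.subset_span hs
    exact Submodule.mem_span_finite_of_mem_span this
  choose T hT1 hT2 using hmem
  set U : Finset (MonoidAlgebra k G) := S.attach.biUnion (fun s => T s s.2) with hU
  have hUsub : (U : Set (MonoidAlgebra k G)) ⊆ f '' (K : Set G) := by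
    intro x hx
    simp only [hU, Finset.coe_biUnion, Set.mem_iUnion, Finset.mem_coe] at hx
    obtain ⟨s, -, hx⟩ := hx
    exact hT1 s s.2 hx
  have hspanU : Φ K = Submodule.span (MonoidAlgebra k G) (U : Set (MonoidAlgebra k G)) := by
    apply le_antisymm
    · rw [← hS, Submodule.span_le]
      intro s hs
      refine Submodule.span_le.mpr ?_ (hT2 s hs)
      intro x hx
      apply Submodule.subset_span
      simp only [hU, Finset.coe_biUnion, Set.mem_iUnion, Finset.mem_coe]
      exact ⟨⟨s, hs⟩, Finset.mem_attach _ _, hx⟩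
    · rw [Submodule.span_le]
      exact fun x hx => Submodule.subset_span (hUsub hx)
  -- pull `U` back to a finite subset of `K`
  have hc : ∀ t : (U : Set (MonoidAlgebra k G)), ∃ g, g ∈ (K : Set G) ∧ f g = (t : MonoidAlgebra k G) :=
    fun t => hUsub t.2
  choose g hg1 hg2 using hc
  have : Finite (U : Set (MonoidAlgebra k G)) := U.finite_toSet.to_subtype
  set u : Set G := Set.range g with hu
  have hufin : u.Finite := Set.finite_range g
  have husub : u ⊆ (K : Set G) := by rintro _ ⟨t, rfl⟩; exact hg1 t
  have hUim : (U : Set (MonoidAlgebra k G)) ⊆ f '' u := by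
    intro t ht; exact ⟨g ⟨t, ht⟩, ⟨⟨t, ht⟩, rfl⟩, hg2 ⟨t, ht⟩⟩
  set H : Subgroup G := Subgroup.closure u with hH
  have hHK : H ≤ K := (Subgroup.closure_le K).mpr husub
  have hΦeq : Φ H = Φ K := by
    apply le_antisymm (hmono hHK)
    rw [hspanU, Submodule.span_le]
    intro x hx
    exact Submodule.span_mono (Set.image_mono Subgroup.subset_closure) (Submodule.subset_span (hUim hx))
  have : H = K := hinj hΦeq
  rw [← this, hH]
  exact (Subgroup.fg_iff _).mpr ⟨u, rfl, hufin⟩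
end

section
/- Let H be a Hopf algebra over a field k that is free as a right module over a Hopf subalgebra A. If H is left noetherian, then A is left noetherian. -/
/-- Let `H` be a Hopf algebra over a field `k` and let `A` be a Hopf subalgebra
(a subalgebra closed under comultiplication and the antipode).  If `H` is free as a
right `A`-module and `H` is left noetherian, then `A` is left noetherian. -/
theorem stmt2 (k H : Type*) [Field k] [Ring H] [HopfAlgebra k H]
    (A : Subalgebra k H)
    (hcomul : ∀ a ∈ A, Coalgebra.comul (R := k) a ∈
      LinearMap.range (TensorProduct.map A.val.toLinearMap A.val.toLinearMap))
    (hantipode : ∀ a ∈ A, HopfAlgebra.antipode (R := k) a ∈ A)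
    (hfree : ∃ (ι : Type) (b : ι → H),
      Function.Bijective (fun f : ι →₀ A => f.sum (fun i a => b i * (a : H))))
    (hH : IsNoetherianRing H) : IsNoetherianRing A := by
  classical
  obtain ⟨ι, b, hbij⟩ := hfree
  -- the coordinate map as an additive hom
  have hadd : ∀ f g : ι →₀ A, (f + g).sum (fun i a => b i * (a : H))
      = f.sum (fun i a => b i * (a : H)) + g.sum (fun i a => b i * (a : H)) := by
    intro f g
    apply Finsupp.sum_add_index' <;> intros <;> simp [mul_add]
  let Φ : (ι →₀ A) →+ H := AddMonoidHom.mk' (fun f => f.sum fun i a => b i * (a : H)) hadd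
  have hΦbij : Function.Bijective Φ := hbij
  let E := AddEquiv.ofBijective Φ hΦbij
  let e : H ≃+ (ι →₀ A) := E.symm
  have he : ∀ f : ι →₀ A, e (Φ f) = f := fun f => E.symm_apply_apply f
  have he' : ∀ h : H, Φ (e h) = h := fun h => E.apply_symm_apply h
  -- key : right multiplication by a ∈ A acts coordinatewise
  have key : ∀ (h : H) (a : A) (j : ι), e (h * (a : H)) j = e h j * a := by
    intro h a j
    have h2 : h * (a : H) = Φ (Finsupp.mapRange (· * a) (zero_mul a) (e h)) := by
      conv_lhs => rw [← he' h]
      show Φ (e h) * (a : H) = _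
      show (e h).sum (fun i x => b i * (x : H)) * (a : H)
          = (Finsupp.mapRange (· * a) (zero_mul a) (e h)).sum (fun i x => b i * (x : H))
      rw [Finsupp.sum_mul, Finsupp.sum_mapRange_index (by intro i; simp)]
      simp [mul_assoc]
    rw [h2, he, Finsupp.mapRange_apply]
  have hsingle : ∀ (i : ι) (a : A), e (b i * (a : H)) = Finsupp.single i a := by
    intro i a
    have : b i * (a : H) = Φ (Finsupp.single i a) := by
      show _ = (Finsupp.single i a).sum (fun i x => b i * (x : H))
      rw [Finsupp.sum_single_index (by simp)]
    rw [this, he]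
  -- H is nontrivial, so ι is nonempty
  have h10 : (1 : H) ≠ 0 := by
    intro h
    have := map_one (Bialgebra.counitAlgHom k H)
    rw [h, map_zero] at this
    exact one_ne_zero this.symm
  have hι : ∃ i0 : ι, True := by
    by_contra hno
    push_neg at hno
    apply h10
    have : e (1 : H) = 0 := Finsupp.ext fun i => (hno i).elim
    have := congrArg Φ this
    rwa [he', map_zero] at this
  obtain ⟨i0, -⟩ := hι
  -- the ideal of all elements with coordinates in I
  let T : Ideal A → Ideal H := fun I =>
    { carrier := {h : H | ∀ j : ι, e h j ∈ I}
      add_mem' := by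
        intro x y hx hy j
        rw [map_add, Finsupp.add_apply]
        exact I.add_mem (hx j) (hy j)
      zero_mem' := by intro j; simp
      smul_mem' := by
        intro c x hx
        intro j
        have hx' : (c • x : H) = (e x).sum (fun i a => (c * b i) * (a : H)) := by
          show c * x = _
          conv_lhs => rw [← he' x]
          show c * (e x).sum (fun i a => b i * (a : H)) = _
          rw [Finsupp.mul_sum]
          simp [mul_assoc]
        rw [hx', map_finsuppSum, Finsupp.sum_apply]
        refine Submodule.sum_mem I ?_
        intro i hi
        show (e (c * b i * ((e x i : A) : H))) j ∈ I
        rw [key (c * b i) (e x i) j]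
        exact I.mul_mem_left _ (hx i) }
  let F : Ideal A → Ideal H := fun I => Submodule.span H (Subtype.val '' (I : Set A))
  have hFT : ∀ I : Ideal A, F I ≤ T I := by
    intro I
    apply Submodule.span_le.mpr
    rintro _ ⟨a, ha, rfl⟩ j
    have : e ((a : H)) j = e 1 j * a := by
      have := key 1 a j; rwa [one_mul] at this
    rw [this]
    exact I.mul_mem_left _ ha
  have hFmono : Monotone F := fun I J hIJ =>
    Submodule.span_mono (Set.image_mono hIJ)
  have hstrict : StrictMono F := by
    intro I J hIJ
    obtain ⟨x, hxJ, hxI⟩ := SetLike.exists_of_lt hIJ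
    refine lt_of_le_of_ne (hFmono hIJ.le) ?_
    intro hEq
    have hb : b i0 * (x : H) ∈ F J :=
      Ideal.mul_mem_left _ (b i0) (Submodule.subset_span ⟨x, hxJ, rfl⟩)
    rw [← hEq] at hb
    have := hFT I hb i0
    rw [hsingle i0 x, Finsupp.single_eq_same] at this
    exact hxI this
  rw [isNoetherianRing_iff, isNoetherian_iff']
  haveI : WellFoundedGT (Ideal H) := (isNoetherianRing_iff.mp hH).wellFoundedGT
  exact hstrict.wellFoundedGT
end

section
/- Let R be a k-algebra with finite Gelfand-Kirillov dimension generated by a finite-dimensional subspace V containing 1, and let G be a finitely generated nilpotent-by-finite group acting on R by k-algebra automorphisms such that V^g = V for all g ∈ G. Then the smash product R # k[G] has finite Gelfand-Kirillov dimension. -/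
open Pointwise
open scoped commutatorElement

set_option linter.unusedSectionVars false
set_option linter.unusedVariables false
namespace Stmt4Aux
variable {G : Type*} [Group G] [DecidableEq G]

/-- value of a weighted word -/
def wval (l : List (G × ℕ)) : G := (l.map Prod.fst).prod

@[simp] lemma wval_nil : wval ([] : List (G × ℕ)) = 1 := rfl
@[simp] lemma wval_cons (p : G × ℕ) (l : List (G × ℕ)) : wval (p :: l) = p.1 * wval l := by
  simp [wval]
@[simp] lemma wval_append (l₁ l₂ : List (G × ℕ)) : wval (l₁ ++ l₂) = wval l₁ * wval l₂ := by
  simp [wval]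

/-- one conjugation step on a letter -/
def conj1 (c : ℕ) (x : G) (p : G × ℕ) : List (G × ℕ) :=
  if p.2 + 1 < c then [p, (⁅p.1⁻¹, x⁻¹⁆, p.2 + 1)] else [p]

def conjW (c : ℕ) (x : G) (l : List (G × ℕ)) : List (G × ℕ) := l.flatMap (conj1 c x)

def conjIter (c : ℕ) (x : G) : ℕ → List (G × ℕ) → List (G × ℕ)
  | 0, l => l
  | a+1, l => conjIter c x a (conjW c x l)

def collectL (c : ℕ) (px : G × ℕ) : List (G × ℕ) → ℕ × List (G × ℕ)
  | [] => (0, [])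
  | p :: t =>
    let r := collectL c px t
    if p = px then (r.1 + 1, r.2) else (r.1, conjIter c px.1 r.1 [p] ++ r.2)

lemma collectL_cons (c : ℕ) (px p : G × ℕ) (t : List (G × ℕ)) :
    collectL c px (p :: t) = if p = px then ((collectL c px t).1 + 1, (collectL c px t).2)
      else ((collectL c px t).1, conjIter c px.1 (collectL c px t).1 [p] ++ (collectL c px t).2) :=
  rfl

def wvalid (c : ℕ) (l : List (G × ℕ)) : Prop := ∀ p ∈ l, p.1 ∈ (⊤ : Subgroup G).lowerCentralSeries p.2

lemma comm_wt {a x : G} {i : ℕ} (ha : a ∈ (⊤ : Subgroup G).lowerCentralSeries i) :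
    ⁅a⁻¹, x⁻¹⁆ ∈ (⊤ : Subgroup G).lowerCentralSeries (i + 1) := by
  show _ ∈ ⁅(⊤ : Subgroup G).lowerCentralSeries i, (⊤ : Subgroup G)⁆
  exact Subgroup.commutator_mem_commutator (inv_mem ha) (Subgroup.mem_top _)

lemma conj1_wval {c : ℕ} (hc : (⊤ : Subgroup G).lowerCentralSeries c = ⊥) (x : G) (p : G × ℕ)
    (hp : p.1 ∈ (⊤ : Subgroup G).lowerCentralSeries p.2) :
    wval (conj1 c x p) = x⁻¹ * p.1 * x := by
  unfold conj1
  split_ifs with h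
  · simp only [wval_cons, wval_nil, commutatorElement_def, mul_one]
    group
  · have h2 : ⁅p.1⁻¹, x⁻¹⁆ ∈ (⊤ : Subgroup G).lowerCentralSeries (p.2 + 1) := comm_wt hp
    have h3 : (⊤ : Subgroup G).lowerCentralSeries (p.2 + 1) ≤ ⊥ := hc ▸ (Subgroup.lowerCentralSeries_antitone ⊤) (by omega)
    have h4 : ⁅p.1⁻¹, x⁻¹⁆ = 1 := by simpa using h3 h2
    have : p.1⁻¹ * x⁻¹ * p.1 * x = 1 := by
      simpa [commutatorElement_def, mul_assoc] using h4
    have h5 : x⁻¹ * p.1 * x = p.1 := by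
      have := congrArg (fun y => p.1 * y) this
      simp only [mul_one] at this
      rw [← mul_assoc, ← mul_assoc] at this
      have h6 : p.1 * p.1⁻¹ * x⁻¹ * p.1 * x = p.1 := by
        rw [mul_assoc, mul_assoc, mul_assoc] at this ⊢
        rw [this]
      simpa [mul_assoc] using h6
    simp [h5]

lemma conjW_wval {c : ℕ} (hc : (⊤ : Subgroup G).lowerCentralSeries c = ⊥) (x : G) (l : List (G × ℕ))
    (hl : wvalid c l) : wval (conjW c x l) = x⁻¹ * wval l * x := by
  induction l with
  | nil => simp [conjW]
  | cons p t ih =>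
    have hp := hl p (List.mem_cons_self)
    have ht : wvalid c t := fun q hq => hl q (List.mem_cons_of_mem _ hq)
    show wval (conj1 c x p ++ conjW c x t) = _
    rw [wval_append, ih ht, conj1_wval hc x p hp, wval_cons]
    group


/-- creation chains from one letter (collecting the letter `x`). -/
inductive Chain (c : ℕ) (x : G) : G × ℕ → G × ℕ → Prop
  | refl (p) : Chain c x p p
  | step {p q} : Chain c x p q → q.2 + 1 < c → Chain c x p (⁅q.1⁻¹, x⁻¹⁆, q.2 + 1)

lemma Chain.trans {c : ℕ} {x : G} {p q r : G × ℕ} (h1 : Chain c x p q) (h2 : Chain c x q r) :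
    Chain c x p r := by
  induction h2 with
  | refl => exact h1
  | step h hlt ih => exact (ih).step hlt

lemma Chain.wt_le {c : ℕ} {x : G} {p q : G × ℕ} (h : Chain c x p q) : p.2 ≤ q.2 := by
  induction h with
  | refl => exact le_rfl
  | step h hlt ih => exact ih.trans (Nat.le_succ _)

lemma Chain.eq_or_wt {c : ℕ} {x : G} {p q : G × ℕ} (h : Chain c x p q) :
    q = p ∨ p.2 + 1 ≤ q.2 := by
  induction h with
  | refl => exact Or.inl rfl
  | step h hlt ih =>
    right
    rcases ih with rfl | hw
    · exact le_rfl
    · exact hw.trans (Nat.le_succ _)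

lemma Chain.valid {c : ℕ} {x : G} {p q : G × ℕ} (h : Chain c x p q)
    (hp : p.1 ∈ (⊤ : Subgroup G).lowerCentralSeries p.2) : q.1 ∈ (⊤ : Subgroup G).lowerCentralSeries q.2 := by
  induction h with
  | refl => exact hp
  | step h hlt ih => exact comm_wt ih

lemma conj1_chain {c : ℕ} {x : G} {p : G × ℕ} : ∀ q ∈ conj1 c x p, Chain c x p q := by
  intro q hq
  unfold conj1 at hq
  split_ifs at hq with h
  · simp only [List.mem_cons, List.not_mem_nil, or_false] at hq
    rcases hq with rfl | rfl
    · exact Chain.refl _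
    · exact (Chain.refl _).step h
  · simp only [List.mem_cons, List.not_mem_nil, or_false] at hq
    subst hq; exact Chain.refl _

lemma conjW_chain {c : ℕ} {x : G} {l : List (G × ℕ)} :
    ∀ q ∈ conjW c x l, ∃ p ∈ l, Chain c x p q := by
  intro q hq
  rw [conjW, List.mem_flatMap] at hq
  obtain ⟨p, hp, hq⟩ := hq
  exact ⟨p, hp, conj1_chain q hq⟩

lemma conjIter_chain {c : ℕ} {x : G} {a : ℕ} :
    ∀ {l : List (G × ℕ)}, ∀ q ∈ conjIter c x a l, ∃ p ∈ l, Chain c x p q := by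
  induction a with
  | zero => exact fun q hq => ⟨q, hq, Chain.refl q⟩
  | succ a ih =>
    intro l q hq
    obtain ⟨p, hp, hchain⟩ := ih q hq
    obtain ⟨p0, hp0, hchain0⟩ := conjW_chain p hp
    exact ⟨p0, hp0, hchain0.trans hchain⟩

lemma collectL_out {c : ℕ} {px : G × ℕ} :
    ∀ {l : List (G × ℕ)}, ∀ q ∈ (collectL c px l).2, ∃ p ∈ l, p ≠ px ∧ Chain c px.1 p q := by
  intro l
  induction l with
  | nil => intro q hq; simp [collectL] at hq
  | cons p t ih =>
    intro q hq
    unfold collectL at hq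
    split_ifs at hq with h
    · obtain ⟨p0, hp0, hne, hch⟩ := ih q hq
      exact ⟨p0, List.mem_cons_of_mem _ hp0, hne, hch⟩
    · simp only [List.mem_append] at hq
      rcases hq with hq | hq
      · obtain ⟨p0, hp0, hch⟩ := conjIter_chain q hq
        simp only [List.mem_singleton] at hp0
        exact ⟨p, List.mem_cons_self, h, hp0 ▸ hch⟩
      · obtain ⟨p0, hp0, hne, hch⟩ := ih q hq
        exact ⟨p0, List.mem_cons_of_mem _ hp0, hne, hch⟩
lemma conjW_valid {c : ℕ} {x : G} {l : List (G × ℕ)} (hl : wvalid c l) :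
    wvalid c (conjW c x l) := fun q hq => by
  obtain ⟨p, hp, hch⟩ := conjW_chain q hq
  exact hch.valid (hl p hp)

lemma conjIter_wval {c : ℕ} (hc : (⊤ : Subgroup G).lowerCentralSeries c = ⊥) (x : G) (a : ℕ)
    (l : List (G × ℕ)) (hl : wvalid c l) :
    wval (conjIter c x a l) = x⁻¹ ^ a * wval l * x ^ a := by
  induction a generalizing l with
  | zero => simp [conjIter]
  | succ a ih =>
    show wval (conjIter c x a (conjW c x l)) = _
    rw [ih _ (conjW_valid hl), conjW_wval hc x l hl]
    rw [pow_succ' x⁻¹ a, pow_succ x a]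
    group

lemma collectL_valid {c : ℕ} {px : G × ℕ} {l : List (G × ℕ)} (hl : wvalid c l) :
    wvalid c (collectL c px l).2 := fun q hq => by
  obtain ⟨p, hp, _, hch⟩ := collectL_out q hq
  exact hch.valid (hl p hp)

lemma collectL_wval {c : ℕ} (hc : (⊤ : Subgroup G).lowerCentralSeries c = ⊥) (px : G × ℕ)
    (l : List (G × ℕ)) (hl : wvalid c l) :
    wval l = px.1 ^ (collectL c px l).1 * wval (collectL c px l).2 := by
  induction l with
  | nil => simp [collectL]
  | cons p t ih =>
    have hp := hl p (List.mem_cons_self)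
    have ht : wvalid c t := fun q hq => hl q (List.mem_cons_of_mem _ hq)
    rw [wval_cons, ih ht, collectL_cons]
    split_ifs with h
    · subst h
      dsimp only
      rw [← mul_assoc, ← pow_succ']
    · dsimp only
      rw [wval_append]
      have hvp : wvalid c [p] := by
        intro q hq
        simp only [List.mem_singleton] at hq
        subst hq; exact hp
      rw [conjIter_wval hc px.1 _ [p] hvp, wval_cons, wval_nil]
      group

lemma collectL_fst_le {c : ℕ} {px : G × ℕ} (l : List (G × ℕ)) :
    (collectL c px l).1 ≤ l.length := by
  induction l with
  | nil => simp [collectL]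
  | cons p t ih =>
    unfold collectL
    split_ifs with h
    · simpa using Nat.succ_le_succ ih
    · simpa using Nat.le_succ_of_le ih
lemma conjW_append (c : ℕ) (x : G) (l₁ l₂ : List (G × ℕ)) :
    conjW c x (l₁ ++ l₂) = conjW c x l₁ ++ conjW c x l₂ := by
  simp [conjW]

lemma conjIter_append (c : ℕ) (x : G) (a : ℕ) (l₁ l₂ : List (G × ℕ)) :
    conjIter c x a (l₁ ++ l₂) = conjIter c x a l₁ ++ conjIter c x a l₂ := by
  induction a generalizing l₁ l₂ with
  | zero => rfl
  | succ a ih =>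
    show conjIter c x a (conjW c x (l₁ ++ l₂)) = _
    rw [conjW_append, ih]
    rfl

lemma conjIter_singleton_len (c : ℕ) (x : G) :
    ∀ (a : ℕ) (p : G × ℕ), (conjIter c x a [p]).length ≤ (a + 1) ^ (c - p.2) := by
  intro a
  induction a with
  | zero => intro p; simp [conjIter]
  | succ a ih =>
    intro p
    show (conjIter c x a (conjW c x [p])).length ≤ _
    have hW : conjW c x [p] = conj1 c x p := by simp [conjW]
    rw [hW]
    unfold conj1
    split_ifs with h
    · have e2 : 2 ≤ c - p.2 := by omega
      have : ([p, (⁅p.1⁻¹, x⁻¹⁆, p.2 + 1)] : List (G × ℕ)) = [p] ++ [(⁅p.1⁻¹, x⁻¹⁆, p.2 + 1)] :=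
        rfl
      rw [this, conjIter_append, List.length_append]
      have h1 := ih p
      have h2 := ih (⁅p.1⁻¹, x⁻¹⁆, p.2 + 1)
      have hsub : c - (p.2 + 1) = (c - p.2) - 1 := by omega
      rw [hsub] at h2
      set e := c - p.2 with he
      calc (conjIter c x a [p]).length + (conjIter c x a [(⁅p.1⁻¹, x⁻¹⁆, p.2 + 1)]).length
          ≤ (a + 1) ^ e + (a + 1) ^ (e - 1) := Nat.add_le_add h1 h2
        _ = (a + 1) ^ (e - 1) * (a + 1) + (a + 1) ^ (e - 1) := by
            congr 1
            rw [← pow_succ]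
            congr 1
            omega
        _ = (a + 1) ^ (e - 1) * (a + 2) := by ring
        _ ≤ (a + 2) ^ (e - 1) * (a + 2) := by
            exact Nat.mul_le_mul_right _ (Nat.pow_le_pow_left (by omega) _)
        _ = (a + 2) ^ (e - 1 + 1) := by rw [pow_succ]
        _ = (a + 2) ^ e := by congr 1; omega
    · calc (conjIter c x a [p]).length ≤ (a + 1) ^ (c - p.2) := ih p
        _ ≤ (a + 2) ^ (c - p.2) := Nat.pow_le_pow_left (by omega) _

lemma conjIter_singleton_len' (c : ℕ) (x : G) (a : ℕ) (p : G × ℕ) :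
    (conjIter c x a [p]).length ≤ (a + 1) ^ c :=
  (conjIter_singleton_len c x a p).trans
    (Nat.pow_le_pow_right (by omega) (Nat.sub_le _ _))

lemma collectL_len (c : ℕ) (px : G × ℕ) (l : List (G × ℕ)) :
    (collectL c px l).2.length ≤ l.length * (l.length + 1) ^ c := by
  induction l with
  | nil => simp [collectL]
  | cons p t ih =>
    rw [collectL_cons]
    have hfst := collectL_fst_le (c := c) (px := px) t
    split_ifs with h
    · dsimp only
      calc (collectL c px t).2.length ≤ t.length * (t.length + 1) ^ c := ih
        _ ≤ (p :: t).length * ((p :: t).length + 1) ^ c := by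
            simp only [List.length_cons]
            exact Nat.mul_le_mul (Nat.le_succ _) (Nat.pow_le_pow_left (by omega) _)
    · dsimp only
      rw [List.length_append]
      calc (conjIter c px.1 (collectL c px t).1 [p]).length + (collectL c px t).2.length
          ≤ ((collectL c px t).1 + 1) ^ c + t.length * (t.length + 1) ^ c :=
            Nat.add_le_add (conjIter_singleton_len' _ _ _ _) ih
        _ ≤ (t.length + 1) ^ c + t.length * (t.length + 1) ^ c := by
            exact Nat.add_le_add_right (Nat.pow_le_pow_left (by omega) _) _
        _ = (t.length + 1) * (t.length + 1) ^ c := by ring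
        _ ≤ (t.length + 1) * (t.length + 2) ^ c :=
            Nat.mul_le_mul_left _ (Nat.pow_le_pow_left (by omega) _)
        _ = (p :: t).length * ((p :: t).length + 1) ^ c := by simp
def collectAll (c : ℕ) : List (G × ℕ) → List (G × ℕ) → List ℕ × List (G × ℕ)
  | [], w => ([], w)
  | px :: t, w =>
    let r := collectL c px w
    let s := collectAll c t r.2
    (r.1 :: s.1, s.2)

lemma collectAll_cons (c : ℕ) (px : G × ℕ) (t w : List (G × ℕ)) :
    collectAll c (px :: t) w =
      ((collectL c px w).1 :: (collectAll c t (collectL c px w).2).1,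
        (collectAll c t (collectL c px w).2).2) := rfl

def ordProd : List (G × ℕ) → List ℕ → G
  | [], _ => 1
  | _ :: _, [] => 1
  | px :: t, a :: as => px.1 ^ a * ordProd t as

lemma collectAll_wval {c : ℕ} (hc : (⊤ : Subgroup G).lowerCentralSeries c = ⊥) (LX : List (G × ℕ)) :
    ∀ (w : List (G × ℕ)), wvalid c w →
      wval w = ordProd LX (collectAll c LX w).1 * wval (collectAll c LX w).2 := by
  induction LX with
  | nil => intro w _; simp [collectAll, ordProd]
  | cons px t ih =>
    intro w hw
    rw [collectAll_cons]
    show wval w = ordProd (px :: t) ((collectL c px w).1 :: _) * _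
    show wval w = px.1 ^ (collectL c px w).1 * ordProd t _ * _
    rw [mul_assoc, ← ih _ (collectL_valid hw)]
    exact collectL_wval hc px w hw

lemma collectAll_valid {c : ℕ} (LX : List (G × ℕ)) :
    ∀ (w : List (G × ℕ)), wvalid c w → wvalid c (collectAll c LX w).2 := by
  induction LX with
  | nil => intro w hw; exact hw
  | cons px t ih => intro w hw; exact ih _ (collectL_valid hw)

/-- letters reachable from a finite alphabet by the collection process -/
inductive ReachSet (c : ℕ) (X : Finset (G × ℕ)) : G × ℕ → Prop
  | base {p} : p ∈ X → ReachSet c X p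
  | step {p} (px : G × ℕ) : ReachSet c X p → px ∈ X → p.2 + 1 < c →
      ReachSet c X (⁅p.1⁻¹, px.1⁻¹⁆, p.2 + 1)

lemma Chain.reach {c : ℕ} {X : Finset (G × ℕ)} {px p q : G × ℕ} (hpx : px ∈ X)
    (hp : ReachSet c X p) (h : Chain c px.1 p q) : ReachSet c X q := by
  induction h with
  | refl => exact hp
  | step h hlt ih => exact ih.step px hpx hlt

lemma collectAll_reach {c : ℕ} {X : Finset (G × ℕ)} (LX : List (G × ℕ))
    (hLX : ∀ px ∈ LX, px ∈ X) :
    ∀ (w : List (G × ℕ)), (∀ p ∈ w, ReachSet c X p) →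
      ∀ q ∈ (collectAll c LX w).2, ReachSet c X q := by
  induction LX with
  | nil => intro w hw q hq; exact hw q hq
  | cons px t ih =>
    intro w hw q hq
    refine ih (fun p hp => hLX p (List.mem_cons_of_mem _ hp)) _ ?_ q hq
    intro p hp
    obtain ⟨p0, hp0, _, hch⟩ := collectL_out p hp
    exact hch.reach (hLX px (List.mem_cons_self)) (hw p0 hp0)

lemma collectAll_wt {c : ℕ} (W : ℕ) (LX : List (G × ℕ)) (hLX : ∀ px ∈ LX, W ≤ px.2) :
    ∀ (w : List (G × ℕ)), (∀ p ∈ w, W + 1 ≤ p.2 ∨ (W ≤ p.2 ∧ p ∈ LX)) →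
      ∀ q ∈ (collectAll c LX w).2, W + 1 ≤ q.2 := by
  induction LX with
  | nil =>
    intro w hw q hq
    rcases hw q hq with h | ⟨_, h⟩
    · exact h
    · simp at h
  | cons px t ih =>
    intro w hw q hq
    refine ih (fun p hp => hLX p (List.mem_cons_of_mem _ hp)) _ ?_ q hq
    intro p hp
    obtain ⟨p0, hp0, hne, hch⟩ := collectL_out p hp
    have hp02 : W ≤ p0.2 := by
      rcases hw p0 hp0 with h | ⟨h, _⟩
      · omega
      · exact h
    rcases hch.eq_or_wt with rfl | hwt
    · rcases hw _ hp0 with h | ⟨h, hm⟩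
      · exact Or.inl h
      · rcases List.mem_cons.mp hm with rfl | hm
        · exact absurd rfl hne
        · exact Or.inr ⟨h, hm⟩
    · exact Or.inl (by omega)

/-- iterated length bound function -/
def FB (c m : ℕ) : ℕ := (m + 1) ^ (c + 1)

lemma le_FB (c m : ℕ) : m ≤ FB c m := by
  calc m ≤ m + 1 := Nat.le_succ _
    _ = (m + 1) ^ 1 := (pow_one _).symm
    _ ≤ (m + 1) ^ (c + 1) := Nat.pow_le_pow_right (by omega) (by omega)

lemma FB_mono (c : ℕ) {m m' : ℕ} (h : m ≤ m') : FB c m ≤ FB c m' :=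
  Nat.pow_le_pow_left (by omega) _

lemma FB_iter_mono (c j : ℕ) {m m' : ℕ} (h : m ≤ m') : (FB c)^[j] m ≤ (FB c)^[j] m' := by
  induction j generalizing m m' with
  | zero => exact h
  | succ j ih =>
    rw [Function.iterate_succ_apply, Function.iterate_succ_apply]
    exact ih (FB_mono c h)

lemma le_FB_iter (c j m : ℕ) : m ≤ (FB c)^[j] m := by
  induction j generalizing m with
  | zero => exact le_rfl
  | succ j ih =>
    rw [Function.iterate_succ_apply]
    exact (le_FB c m).trans (ih _)

lemma collectAll_len {c : ℕ} (LX : List (G × ℕ)) :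
    ∀ (w : List (G × ℕ)),
      (collectAll c LX w).2.length ≤ (FB c)^[LX.length] w.length ∧
      ∀ a ∈ (collectAll c LX w).1, a ≤ (FB c)^[LX.length] w.length := by
  induction LX with
  | nil => intro w; exact ⟨le_rfl, by simp [collectAll]⟩
  | cons px t ih =>
    intro w
    rw [collectAll_cons]
    have hstage : (collectL c px w).2.length ≤ FB c w.length := by
      calc (collectL c px w).2.length ≤ w.length * (w.length + 1) ^ c := collectL_len _ _ _
        _ ≤ (w.length + 1) * (w.length + 1) ^ c :=
            Nat.mul_le_mul_right _ (Nat.le_succ _)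
        _ = (w.length + 1) ^ (c + 1) := by rw [pow_succ]; ring
    have hIH := ih (collectL c px w).2
    have hbig : (FB c)^[t.length] (collectL c px w).2.length ≤
        (FB c)^[(px :: t).length] w.length := by
      simp only [List.length_cons, Function.iterate_succ_apply]
      exact FB_iter_mono c t.length (hstage.trans (FB_mono c le_rfl)) |>.trans
        (FB_iter_mono c t.length le_rfl)
    constructor
    · exact hIH.1.trans hbig
    · intro a ha
      rcases List.mem_cons.mp ha with rfl | ha
      · calc (collectL c px w).1 ≤ w.length := collectL_fst_le w
          _ ≤ (FB c)^[(px :: t).length] w.length := le_FB_iter _ _ _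
      · exact (hIH.2 a ha).trans hbig
def stepF (X₀ A : Finset (G × ℕ)) : Finset (G × ℕ) :=
  A ∪ (A ×ˢ X₀).image (fun pq => (⁅pq.1.1⁻¹, pq.2.1⁻¹⁆, pq.1.2 + 1))

lemma subset_stepF (X₀ A : Finset (G × ℕ)) : A ⊆ stepF X₀ A :=
  Finset.subset_union_left

lemma subset_stepF_iter (X₀ : Finset (G × ℕ)) (j : ℕ) (A : Finset (G × ℕ)) :
    A ⊆ (stepF X₀)^[j] A := by
  induction j generalizing A with
  | zero => exact subset_rfl
  | succ j ih =>
    rw [Function.iterate_succ_apply]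
    exact (subset_stepF X₀ A).trans (ih _)

lemma stepF_iter_mono_idx (X₀ : Finset (G × ℕ)) {j j' : ℕ} (h : j ≤ j')
    (A : Finset (G × ℕ)) : (stepF X₀)^[j] A ⊆ (stepF X₀)^[j'] A := by
  induction j' with
  | zero => simpa [Nat.le_zero.mp h]
  | succ j' ih =>
    rcases Nat.lt_or_ge j (j' + 1) with hlt | hge
    · refine (ih (by omega)).trans ?_
      rw [Function.iterate_succ_apply']
      exact subset_stepF _ _
    · have : j = j' + 1 := by omega
      subst this; exact subset_rfl

lemma reach_wt_lt {c : ℕ} {X : Finset (G × ℕ)} {q : G × ℕ} (h : ReachSet c X q) :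
    q ∈ X ∨ q.2 < c := by
  induction h with
  | base hp => exact Or.inl hp
  | step px h hpx hlt ih => exact Or.inr (by simpa using hlt)

lemma reach_mem_stepF {c : ℕ} {X : Finset (G × ℕ)} {q : G × ℕ} (h : ReachSet c X q) :
    q ∈ (stepF X)^[q.2 + 1] X := by
  induction h with
  | base hp => exact subset_stepF_iter X _ X hp
  | step px h hpx hlt ih =>
    show _ ∈ (stepF X)^[_ + 1 + 1] X
    rw [Function.iterate_succ_apply']
    refine Finset.mem_union_right _ ?_
    refine Finset.mem_image.mpr ⟨(_, px), Finset.mem_product.mpr ⟨ih, hpx⟩, rfl⟩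

lemma reach_subset {c : ℕ} {X : Finset (G × ℕ)} {q : G × ℕ} (h : ReachSet c X q) :
    q ∈ (stepF X)^[c] X ∪ X := by
  rcases reach_wt_lt h with hq | hq
  · exact Finset.mem_union_right _ hq
  · exact Finset.mem_union_left _
      (stepF_iter_mono_idx X (by omega) X (reach_mem_stepF h))

lemma reach_valid {c : ℕ} {X : Finset (G × ℕ)}
    (hX : ∀ p ∈ X, p.1 ∈ (⊤ : Subgroup G).lowerCentralSeries p.2) {q : G × ℕ} (h : ReachSet c X q) :
    q.1 ∈ (⊤ : Subgroup G).lowerCentralSeries q.2 := by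
  induction h with
  | base hp => exact hX _ hp
  | step px h hpx hlt ih => exact comm_wt ih

lemma reach_wt_ge {c W : ℕ} {X : Finset (G × ℕ)} (hX : ∀ p ∈ X, W ≤ p.2)
    {q : G × ℕ} (h : ReachSet c X q) : W ≤ q.2 := by
  induction h with
  | base hp => exact hX _ hp
  | step px h hpx hlt ih => omega

/-- membership in pointwise powers of a finset via words -/
lemma mem_finset_pow {X : Finset G} : ∀ {n : ℕ} {g : G},
    g ∈ X ^ n ↔ ∃ l : List G, (∀ x ∈ l, x ∈ X) ∧ l.length = n ∧ l.prod = g := by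
  intro n
  induction n with
  | zero =>
    intro g
    simp only [pow_zero, Finset.mem_one]
    constructor
    · rintro rfl; exact ⟨[], by simp⟩
    · rintro ⟨l, _, hlen, hprod⟩
      rw [List.length_eq_zero_iff] at hlen
      subst hlen; simpa using hprod.symm
  | succ n ih =>
    intro g
    rw [pow_succ, Finset.mem_mul]
    constructor
    · rintro ⟨a, ha, b, hb, rfl⟩
      obtain ⟨l, hl, hlen, rfl⟩ := ih.mp ha
      exact ⟨l ++ [b], by
        constructor
        · intro x hx
          rcases List.mem_append.mp hx with hx | hx
          · exact hl x hx
          · simpa using List.mem_singleton.mp hx ▸ hb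
        · simp [hlen]⟩
    · rintro ⟨l, hl, hlen, rfl⟩
      rcases List.eq_nil_or_concat l with rfl | ⟨l', b, rfl⟩
      · simp at hlen
      · refine ⟨l'.prod, ih.mpr ⟨l', fun x hx => hl x (by simp [hx]), by
          simpa using hlen, rfl⟩, b, hl b (by simp), by simp⟩

lemma one_mem_pow {X : Finset G} (hX : (1 : G) ∈ X) (n : ℕ) : (1 : G) ∈ X ^ n := by
  induction n with
  | zero => simp
  | succ n ih =>
    rw [pow_succ]
    simpa using Finset.mul_mem_mul ih hX

/-- value of a short word lies in a power of the alphabet (with 1 adjoined) -/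
lemma wval_mem_pow {F : Finset G} (h1 : (1 : G) ∈ F) :
    ∀ (B : ℕ) (l : List (G × ℕ)), (∀ q ∈ l, q.1 ∈ F) → l.length ≤ B → wval l ∈ F ^ B := by
  intro B
  induction B with
  | zero =>
    intro l _ hlen
    rw [Nat.le_zero, List.length_eq_zero_iff] at hlen
    subst hlen; simp
  | succ B ih =>
    intro l hl hlen
    rcases l with _ | ⟨q, t⟩
    · simpa using one_mem_pow h1 (B + 1)
    · rw [wval_cons, pow_succ']
      exact Finset.mul_mem_mul (hl q (List.mem_cons_self))
        (ih t (fun p hp => hl p (List.mem_cons_of_mem _ hp)) (by simpa using hlen))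

/-- finset of ordered products with all exponents at most `B` -/
def ordProdF : List (G × ℕ) → ℕ → Finset G
  | [], _ => {1}
  | px :: t, B => (Finset.range (B + 1)).image (px.1 ^ ·) * ordProdF t B

lemma ordProdF_card (LX : List (G × ℕ)) (B : ℕ) :
    (ordProdF LX B).card ≤ (B + 1) ^ LX.length := by
  induction LX with
  | nil => simp [ordProdF]
  | cons px t ih =>
    calc (ordProdF (px :: t) B).card
        ≤ ((Finset.range (B + 1)).image (px.1 ^ ·)).card * (ordProdF t B).card :=
          Finset.card_mul_le
      _ ≤ (B + 1) * (B + 1) ^ t.length := by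
          refine Nat.mul_le_mul ?_ ih
          exact (Finset.card_image_le).trans (by simp)
      _ = (B + 1) ^ (px :: t).length := by rw [List.length_cons]; ring
lemma one_mem_ordProdF (LX : List (G × ℕ)) (B : ℕ) : (1 : G) ∈ ordProdF LX B := by
  induction LX with
  | nil => simp [ordProdF]
  | cons px t ih =>
    have : (1 : G) = px.1 ^ 0 * 1 := by simp
    rw [ordProdF, this]
    refine Finset.mul_mem_mul ?_ ih
    exact Finset.mem_image.mpr ⟨0, by simp, rfl⟩

lemma ordProd_mem (LX : List (G × ℕ)) : ∀ (as : List ℕ) (B : ℕ), (∀ a ∈ as, a ≤ B) →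
    ordProd LX as ∈ ordProdF LX B := by
  induction LX with
  | nil => intro as B _; simp [ordProd, ordProdF]
  | cons px t ih =>
    intro as B has
    rcases as with _ | ⟨a, as⟩
    · show (1 : G) ∈ _
      exact one_mem_ordProdF _ _
    · show px.1 ^ a * ordProd t as ∈ _
      refine Finset.mul_mem_mul ?_ (ih as B fun b hb => has b (List.mem_cons_of_mem _ hb))
      exact Finset.mem_image.mpr ⟨a, by
        simp only [Finset.mem_range]
        exact Nat.lt_succ_of_le (has a (List.mem_cons_self)), rfl⟩

lemma lift_word (X : Finset (G × ℕ)) : ∀ (l : List G), (∀ v ∈ l, v ∈ X.image Prod.fst) →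
    ∃ w : List (G × ℕ), (∀ q ∈ w, q ∈ X) ∧ w.length = l.length ∧ wval w = l.prod := by
  intro l
  induction l with
  | nil => intro _; exact ⟨[], by simp⟩
  | cons v t ih =>
    intro hl
    obtain ⟨w, hw, hlen, hval⟩ := ih fun x hx => hl x (List.mem_cons_of_mem _ hx)
    obtain ⟨p, hp, hpv⟩ := Finset.mem_image.mp (hl v (List.mem_cons_self))
    refine ⟨p :: w, ?_, by simp [hlen], by simp [hval, hpv]⟩
    intro q hq
    rcases List.mem_cons.mp hq with rfl | hq
    · exact hp
    · exact hw q hq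

lemma FB_iter_le (c : ℕ) : ∀ (j m : ℕ), 1 ≤ m → (FB c)^[j] m ≤ (2 * m) ^ ((c + 3) ^ j) := by
  intro j
  induction j with
  | zero => intro m hm; simpa using Nat.le_mul_of_pos_left m (by omega)
  | succ j ih =>
    intro m hm
    rw [Function.iterate_succ_apply]
    have h1 : 2 * FB c m ≤ (2 * m) ^ (c + 3) := by
      have h2 : FB c m ≤ (2 * m) ^ (c + 1) := Nat.pow_le_pow_left (by omega) _
      calc 2 * FB c m ≤ (2 * m) * (2 * m) ^ (c + 1) := Nat.mul_le_mul (by omega) h2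
        _ = (2 * m) ^ (c + 2) := (pow_succ' _ _).symm
        _ ≤ (2 * m) ^ (c + 3) := Nat.pow_le_pow_right (by omega) (by omega)
    have hFB1 : 1 ≤ FB c m := by
      have := le_FB c m; omega
    calc (FB c)^[j] (FB c m) ≤ (2 * FB c m) ^ ((c + 3) ^ j) := ih _ hFB1
      _ ≤ ((2 * m) ^ (c + 3)) ^ ((c + 3) ^ j) := Nat.pow_le_pow_left h1 _
      _ = (2 * m) ^ ((c + 3) ^ (j + 1)) := by rw [← pow_mul, ← pow_succ']
lemma stepF_valid {X A : Finset (G × ℕ)}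
    (hA : ∀ p ∈ A, p.1 ∈ (⊤ : Subgroup G).lowerCentralSeries p.2) :
    ∀ p ∈ stepF X A, p.1 ∈ (⊤ : Subgroup G).lowerCentralSeries p.2 := by
  intro p hp
  rcases Finset.mem_union.mp hp with hp | hp
  · exact hA p hp
  · obtain ⟨⟨q, r⟩, hqr, rfl⟩ := Finset.mem_image.mp hp
    exact comm_wt (hA q (Finset.mem_product.mp hqr).1)

lemma stepF_iter_valid {X : Finset (G × ℕ)} (j : ℕ) {A : Finset (G × ℕ)}
    (hA : ∀ p ∈ A, p.1 ∈ (⊤ : Subgroup G).lowerCentralSeries p.2) :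
    ∀ p ∈ (stepF X)^[j] A, p.1 ∈ (⊤ : Subgroup G).lowerCentralSeries p.2 := by
  induction j generalizing A with
  | zero => exact hA
  | succ j ih =>
    rw [Function.iterate_succ_apply]
    exact ih (stepF_valid hA)

lemma master {c : ℕ} (hc : (⊤ : Subgroup G).lowerCentralSeries c = ⊥) :
    ∀ (d : ℕ) (X : Finset (G × ℕ)),
      (∀ p ∈ X, p.1 ∈ (⊤ : Subgroup G).lowerCentralSeries p.2 ∧ c ≤ p.2 + d) →
      ∃ C D : ℕ, ∀ n : ℕ, 1 ≤ n → ((X.image Prod.fst) ^ n).card ≤ C * n ^ D := by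
  intro d
  induction d with
  | zero =>
    intro X hX
    refine ⟨1, 0, fun n hn => ?_⟩
    have hsub : (X.image Prod.fst : Finset G) ^ n ⊆ {1} := by
      intro g hg
      obtain ⟨l, hl, _, rfl⟩ := mem_finset_pow.mp hg
      have : ∀ v ∈ l, v = (1 : G) := by
        intro v hv
        obtain ⟨p, hp, rfl⟩ := Finset.mem_image.mp (hl v hv)
        have h2 : (⊤ : Subgroup G).lowerCentralSeries p.2 ≤ ⊥ :=
          hc ▸ (Subgroup.lowerCentralSeries_antitone ⊤) (by have := (hX p hp).2; omega)
        exact Subgroup.mem_bot.mp (h2 (hX p hp).1)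
      simp [List.prod_eq_one this]
    calc ((X.image Prod.fst : Finset G) ^ n).card ≤ ({1} : Finset G).card :=
          Finset.card_le_card hsub
      _ = 1 * n ^ 0 := by simp
  | succ d ih =>
    intro X hX
    -- the next-stage alphabet
    set A1 : Finset (G × ℕ) := ((stepF X)^[c] X ∪ X).filter (fun p => c ≤ p.2 + d) with hA1
    set X' : Finset (G × ℕ) := insert ((1 : G), c) A1 with hX'def
    have hX'cond : ∀ p ∈ X', p.1 ∈ (⊤ : Subgroup G).lowerCentralSeries p.2 ∧ c ≤ p.2 + d := by
      intro p hp
      rcases Finset.mem_insert.mp hp with rfl | hp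
      · exact ⟨Subgroup.one_mem _, by omega⟩
      · obtain ⟨hp1, hp2⟩ := Finset.mem_filter.mp hp
        refine ⟨?_, hp2⟩
        rcases Finset.mem_union.mp hp1 with h | h
        · exact stepF_iter_valid c (fun q hq => (hX q hq).1) p h
        · exact (hX p h).1
    obtain ⟨C', D', hIH⟩ := ih X' hX'cond
    set k := X.card with hk
    set E := (c + 3) ^ k with hE
    set M := (E + 1) * k + E * D' with hM
    refine ⟨C' * 2 ^ M, M, fun n hn => ?_⟩
    set LX := X.toList with hLX
    have hLXlen : LX.length = k := Finset.length_toList X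
    set Bn := (FB c)^[k] n with hBn
    have hBn1 : 1 ≤ Bn := le_trans hn (by rw [hBn]; exact le_FB_iter c k n)
    have hF1 : (1 : G) ∈ X'.image Prod.fst :=
      Finset.mem_image.mpr ⟨((1 : G), c), Finset.mem_insert_self _ _, rfl⟩
    -- containment
    have hsub : (X.image Prod.fst : Finset G) ^ n ⊆
        ordProdF LX Bn * (X'.image Prod.fst) ^ Bn := by
      intro g hg
      obtain ⟨l, hl, hlen, rfl⟩ := mem_finset_pow.mp hg
      obtain ⟨w, hw, hwlen, hwval⟩ := lift_word X l hl
      have hwvalid : wvalid c w := fun p hp => (hX p (hw p hp)).1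
      have hsplit := collectAll_wval hc LX w hwvalid
      have hlen2 := collectAll_len (c := c) LX w
      rw [hwlen, hlen, hLXlen] at hlen2
      -- the tail letters lie in X'
      have htail : ∀ q ∈ (collectAll c LX w).2, q.1 ∈ X'.image Prod.fst := by
        intro q hq
        have hreach : ReachSet c X q :=
          collectAll_reach LX (fun px hpx => Finset.mem_toList.mp hpx) w
            (fun p hp => ReachSet.base (hw p hp)) q hq
        have hwt : (c - d - 1) + 1 ≤ q.2 := by
          refine collectAll_wt (c - d - 1) LX ?_ w ?_ q hq
          · intro px hpx
            have := (hX px (Finset.mem_toList.mp hpx)).2; omega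
          · intro p hp
            exact Or.inr ⟨by have := (hX p (hw p hp)).2; omega, Finset.mem_toList.mpr (hw p hp)⟩
        refine Finset.mem_image.mpr ⟨q, ?_, rfl⟩
        refine Finset.mem_insert_of_mem (Finset.mem_filter.mpr ⟨reach_subset hreach, by omega⟩)
      rw [← hwval, hsplit]
      refine Finset.mul_mem_mul ?_ ?_
      · exact ordProd_mem LX _ Bn (by simpa [hLXlen] using hlen2.2)
      · exact wval_mem_pow hF1 Bn _ htail (by simpa using hlen2.1)
    -- counting
    have hBnE : Bn ≤ (2 * n) ^ E := by rw [hBn, hE, ← hLXlen]; simpa [hLXlen] using FB_iter_le c k n hn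
    calc ((X.image Prod.fst : Finset G) ^ n).card
        ≤ (ordProdF LX Bn * (X'.image Prod.fst) ^ Bn).card := Finset.card_le_card hsub
      _ ≤ (ordProdF LX Bn).card * ((X'.image Prod.fst : Finset G) ^ Bn).card :=
          Finset.card_mul_le
      _ ≤ (Bn + 1) ^ k * (C' * Bn ^ D') := by
          refine Nat.mul_le_mul ?_ (hIH Bn hBn1)
          simpa [hLXlen] using ordProdF_card LX Bn
      _ ≤ (2 * Bn) ^ k * (C' * Bn ^ D') :=
          Nat.mul_le_mul_right _ (Nat.pow_le_pow_left (by omega) _)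
      _ ≤ (2 * (2 * n) ^ E) ^ k * (C' * ((2 * n) ^ E) ^ D') := by
          refine Nat.mul_le_mul (Nat.pow_le_pow_left (by omega) _) ?_
          exact Nat.mul_le_mul_left _ (Nat.pow_le_pow_left hBnE _)
      _ ≤ ((2 * n) ^ (E + 1)) ^ k * (C' * ((2 * n) ^ E) ^ D') := by
          refine Nat.mul_le_mul_right _ (Nat.pow_le_pow_left ?_ _)
          rw [pow_succ']
          exact Nat.mul_le_mul_right _ (by omega)
      _ = C' * (2 * n) ^ M := by
          rw [← pow_mul, ← pow_mul, hM]
          ring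
      _ = C' * 2 ^ M * n ^ M := by rw [mul_pow]; ring
lemma growth_nilpotent {H : Type*} [Group H] [DecidableEq H] (hH : Group.IsNilpotent H)
    (Y : Finset H) : ∃ C D : ℕ, ∀ n, 1 ≤ n → (Y ^ n).card ≤ C * n ^ D := by
  obtain ⟨c, hc⟩ := nilpotent_iff_lowerCentralSeries.mp hH
  have hcond : ∀ p ∈ Y.image (fun y => (y, 0)), p.1 ∈ (⊤ : Subgroup H).lowerCentralSeries p.2 ∧ c ≤ p.2 + c := by
    intro p hp
    obtain ⟨y, _, rfl⟩ := Finset.mem_image.mp hp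
    exact ⟨Subgroup.mem_top _, by omega⟩
  obtain ⟨C, D, hCD⟩ := master hc c (Y.image (fun y => (y, 0))) hcond
  refine ⟨C, D, fun n hn => ?_⟩
  have himg : (Y.image (fun y => (y, (0 : ℕ)))).image Prod.fst = Y := by
    ext y
    simp [Finset.mem_image]
  rw [← himg]
  exact hCD n hn

lemma growth_nbf {G : Type*} [Group G] [DecidableEq G] (N : Subgroup G) [hNormal : N.Normal]
    (hnil : Group.IsNilpotent N) (hfi : N.FiniteIndex) (X : Finset G) :
    ∃ C D : ℕ, ∀ n, 1 ≤ n → (X ^ n).card ≤ C * n ^ D := by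
  classical
  haveI : Finite (G ⧸ N) := N.finite_quotient_of_finiteIndex
  haveI := Fintype.ofFinite (G ⧸ N)
  set σ : G ⧸ N → G := fun q => if q = 1 then 1 else Quotient.out q with hσ
  have hσ_spec : ∀ q : G ⧸ N, (QuotientGroup.mk (σ q) : G ⧸ N) = q := by
    intro q
    by_cases h : q = 1
    · subst h; simp [hσ]
    · simp only [hσ, if_neg h]
      exact Quotient.out_eq q
  have hσ1 : σ 1 = 1 := by simp [hσ]
  set Y : Finset G := (Finset.univ ×ˢ X).image
      (fun qx : (G ⧸ N) × G =>
        σ qx.1 * qx.2 * (σ (qx.1 * QuotientGroup.mk qx.2))⁻¹) with hY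
  have hYN : ∀ y ∈ Y, y ∈ N := by
    intro y hy
    obtain ⟨⟨q, x⟩, _, rfl⟩ := Finset.mem_image.mp hy
    rw [← QuotientGroup.eq_one_iff]
    simp only [QuotientGroup.mk_mul, QuotientGroup.mk_inv, hσ_spec]
    group
  have hrewrite : ∀ l : List G, (∀ x ∈ l, x ∈ X) →
      ∃ yl : List G, (∀ y ∈ yl, y ∈ Y) ∧ yl.length = l.length ∧
        l.prod = yl.prod * σ (QuotientGroup.mk l.prod) := by
    intro l
    induction l using List.reverseRecOn with
    | nil => exact fun _ => ⟨[], by simp [hσ1]⟩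
    | append_singleton l x ih =>
      intro hl
      obtain ⟨yl, hyl, hlen, hprod⟩ := ih (fun z hz => hl z (by simp [hz]))
      set q : G ⧸ N := QuotientGroup.mk l.prod with hq
      refine ⟨yl ++ [σ q * x * (σ (q * QuotientGroup.mk x))⁻¹], ?_, by simp [hlen], ?_⟩
      · intro y hy
        rcases List.mem_append.mp hy with hy | hy
        · exact hyl y hy
        · rw [List.mem_singleton] at hy
          subst hy
          exact Finset.mem_image.mpr ⟨(q, x),
            Finset.mem_product.mpr ⟨Finset.mem_univ _, hl x (by simp)⟩, rfl⟩
      · have hmk : (QuotientGroup.mk (l.prod * x) : G ⧸ N) = q * QuotientGroup.mk x := by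
          rw [QuotientGroup.mk_mul, ← hq]
        simp only [List.prod_append, List.prod_singleton]
        rw [hmk, hprod]
        group
  have hsub : ∀ n : ℕ, X ^ n ⊆ Y ^ n * Finset.univ.image σ := by
    intro n g hg
    obtain ⟨l, hl, hlen, rfl⟩ := mem_finset_pow.mp hg
    obtain ⟨yl, hyl, hylen, hprod⟩ := hrewrite l hl
    rw [hprod]
    refine Finset.mul_mem_mul ?_ (Finset.mem_image.mpr ⟨_, Finset.mem_univ _, rfl⟩)
    exact mem_finset_pow.mpr ⟨yl, hyl, by omega, rfl⟩
  -- transfer Y to the subgroup N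
  set YN : Finset N := Y.attach.image (fun y => (⟨y.1, hYN y.1 y.2⟩ : N)) with hYN2
  have hYim : YN.image (fun z : N => (z : G)) = Y := by
    ext g
    simp only [hYN2, Finset.image_image, Finset.mem_image, Function.comp]
    constructor
    · rintro ⟨⟨y, hy⟩, _, rfl⟩; exact hy
    · intro hg; exact ⟨⟨g, hg⟩, Finset.mem_attach _ _, rfl⟩
  have hpowim : ∀ n : ℕ, (YN ^ n).image (fun z : N => (z : G)) = Y ^ n := by
    intro n
    induction n with
    | zero =>
      rw [pow_zero, pow_zero]
      ext g
      simp [Finset.mem_one]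
    | succ n ih =>
      rw [pow_succ, pow_succ, ← ih, ← hYim]
      exact Finset.image_mul (N.subtype : N →* G)
  obtain ⟨C, D, hCD⟩ := growth_nilpotent hnil YN
  refine ⟨C * Fintype.card (G ⧸ N), D, fun n hn => ?_⟩
  have hcard : (Y ^ n).card = (YN ^ n).card := by
    rw [← hpowim n]
    exact Finset.card_image_of_injective _ Subtype.coe_injective
  calc (X ^ n).card ≤ (Y ^ n * Finset.univ.image σ).card := Finset.card_le_card (hsub n)
    _ ≤ (Y ^ n).card * (Finset.univ.image σ).card := Finset.card_mul_le
    _ ≤ (YN ^ n).card * Fintype.card (G ⧸ N) := by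
        rw [hcard]
        exact Nat.mul_le_mul_left _ (Finset.card_image_le.trans (by simp))
    _ ≤ C * n ^ D * Fintype.card (G ⧸ N) := Nat.mul_le_mul_right _ (hCD n hn)
    _ = C * Fintype.card (G ⧸ N) * n ^ D := by ring
section AlgebraPart
variable {k S : Type*} [Field k] [Ring S] [Algebra k S]

lemma finrank_finset_sup {ι : Type*} [DecidableEq ι] (s : Finset ι) (f : ι → Submodule k S)
    (hf : ∀ i, FiniteDimensional k ↥(f i)) (m : ℕ)
    (hm : ∀ i ∈ s, Module.finrank k ↥(f i) ≤ m) :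
    FiniteDimensional k ↥(s.sup f) ∧ Module.finrank k ↥(s.sup f) ≤ s.card * m := by
  classical
  induction s using Finset.induction with
  | empty =>
    constructor
    · rw [Finset.sup_empty]
      infer_instance
    · simp [Finset.sup_empty, finrank_bot]
  | @insert a s ha ih =>
    obtain ⟨ih1, ih2⟩ := ih (fun i hi => hm i (Finset.mem_insert_of_mem hi))
    rw [Finset.sup_insert]
    haveI := hf a
    haveI := ih1
    constructor
    · exact Submodule.finiteDimensional_sup _ _
    · calc Module.finrank k ↥(f a ⊔ s.sup f)
          ≤ Module.finrank k ↥(f a) + Module.finrank k ↥(s.sup f) :=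
            Submodule.finrank_add_le_finrank_add_finrank _ _
        _ ≤ m + s.card * m := Nat.add_le_add (hm a (Finset.mem_insert_self _ _)) ih2
        _ = (insert a s).card * m := by
            rw [Finset.card_insert_of_notMem ha]; ring

end AlgebraPart
end Stmt4Aux

open Stmt4Aux in
/-- Let `R` be a `k`-algebra of finite Gelfand-Kirillov dimension, generated by a
finite-dimensional subspace `V` containing `1`, and let `G` be a finitely generated
nilpotent-by-finite group acting on `R` by `k`-algebra automorphisms with `V^g = V`
for all `g`.  Then the smash product `S = R # k[G]` (encoded by an algebra embedding
`ι : R → S` and a group homomorphism `u : G → Sˣ` satisfying the skew group algebra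
relations, with `S` free as a left `R`-module on the image of `G`) has finite
Gelfand-Kirillov dimension. -/
theorem stmt4 (k R G S : Type*) [Field k] [Ring R] [Algebra k R] [Group G]
    [Ring S] [Algebra k S]
    -- R has finite GK dimension, witnessed by V:
    (V : Submodule k R) [FiniteDimensional k V] (hV1 : (1 : R) ∈ V)
    (hVgen : Algebra.adjoin k (V : Set R) = ⊤)
    (hVpoly : ∃ d C : ℕ, ∀ n : ℕ, 1 ≤ n → Module.finrank k ↥(V ^ n) ≤ C * n ^ d)
    -- G is finitely generated nilpotent-by-finite:
    (hGfg : Group.FG G)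
    (hGnbf : ∃ N : Subgroup G, N.Normal ∧ Group.IsNilpotent N ∧ N.FiniteIndex)
    -- the action of G on R, leaving V invariant:
    (φ : G →* (R ≃ₐ[k] R))
    (hVinv : ∀ g : G, Submodule.map (φ g).toLinearMap V = V)
    -- S is the smash product R # k[G]:
    (ι : R →ₐ[k] S) (u : G →* Sˣ)
    (hrel : ∀ (g : G) (r : R), (u g : S) * ι r = ι (φ g r) * (u g : S))
    (hbasis : Function.Bijective (fun f : G →₀ R => f.sum (fun g r => ι r * (u g : S)))) :
    -- conclusion: S has finite Gelfand-Kirillov dimension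
    ∃ U : Submodule k S, FiniteDimensional k U ∧ (1 : S) ∈ U ∧
      Algebra.adjoin k (U : Set S) = ⊤ ∧
      ∃ d C : ℕ, ∀ n : ℕ, 1 ≤ n → Module.finrank k ↥(U ^ n) ≤ C * n ^ d := by
  classical
  obtain ⟨N, hNorm, hNil, hFI⟩ := hGnbf
  haveI := hNorm
  haveI := hFI
  obtain ⟨dV, CV, hVp⟩ := hVpoly
  -- a symmetric finite generating set containing 1
  obtain ⟨S0, hS0top, hS0fin⟩ := Group.fg_iff.mp hGfg
  set T : Finset G := hS0fin.toFinset ∪ hS0fin.toFinset⁻¹ ∪ {1} with hT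
  have hT1 : (1 : G) ∈ T := by simp [hT]
  have hTS0 : S0 ⊆ (T : Set G) := by
    intro x hx
    simp only [hT, Finset.coe_union, Set.mem_union, Finset.coe_inv, Set.Finite.coe_toFinset]
    exact Or.inl (Or.inl hx)
  have hTtop : Subgroup.closure (T : Set G) = ⊤ := by
    rw [eq_top_iff, ← hS0top]
    exact Subgroup.closure_mono hTS0
  have hTsyminv : (T : Set G)⁻¹ = (T : Set G) := by
    simp only [hT, Finset.coe_union, Finset.coe_inv, Set.Finite.coe_toFinset]
    rw [Set.union_inv, Set.union_inv]
    simp [Set.union_comm, Set.union_assoc, Set.union_left_comm]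
  -- growth of T-balls
  obtain ⟨Cg, Dg, hg⟩ := growth_nbf N hNil hFI T
  -- the linear maps r ↦ ι r * u g
  set μ : G → (R →ₗ[k] S) := fun g => (LinearMap.mulRight k ((u g : S))).comp ι.toLinearMap
    with hμ
  have hμ_apply : ∀ (g : G) (r : R), μ g r = ι r * (u g : S) := fun g r => rfl
  set U : Submodule k S := T.sup (fun t => Submodule.map (μ t) V) with hU
  have hφV : ∀ (g : G), ∀ v ∈ V, φ g v ∈ V := by
    intro g v hv
    rw [show (φ g v) = (φ g).toLinearMap v from rfl, ← hVinv g]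
    exact Submodule.mem_map_of_mem hv
  have hmul : ∀ (g t : G) (v w : R),
      (ι v * (u g : S)) * (ι w * (u t : S)) = ι (v * φ g w) * (u (g * t) : S) := by
    intro g t v w
    have h1 : (u g : S) * (ι w * (u t : S)) = ι (φ g w) * ((u g : S) * (u t : S)) := by
      rw [← mul_assoc, hrel g w, mul_assoc]
    simp only [map_mul, Units.val_mul, mul_assoc]
    rw [h1]
  -- finite-dimensionality facts
  have hVfg : V.FG := Module.Finite.iff_fg.mp ‹FiniteDimensional k ↥V›
  have hVnFD : ∀ n : ℕ, FiniteDimensional k ↥(V ^ n) :=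
    fun n => Module.Finite.iff_fg.mpr (hVfg.pow n)
  have hmapFD : ∀ (n : ℕ) (g : G), FiniteDimensional k ↥((V ^ n).map (μ g)) :=
    fun n g => Module.Finite.iff_fg.mpr ((hVfg.pow n).map (μ g))
  -- power bound
  have hpow : ∀ n : ℕ, 1 ≤ n →
      U ^ n ≤ (T ^ n).sup (fun g => Submodule.map (μ g) (V ^ n)) := by
    intro n hn
    induction n, hn using Nat.le_induction with
    | base =>
      simp only [pow_one]
      exact le_rfl
    | succ n hn ih =>
      have hcore : ∀ g ∈ T ^ n, ∀ t ∈ T,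
          Submodule.map (μ g) (V ^ n) * Submodule.map (μ t) V ≤
            (T ^ (n + 1)).sup (fun g => Submodule.map (μ g) (V ^ (n + 1))) := by
        intro g hgmem t htmem
        refine le_trans ?_ (Finset.le_sup (f := fun g => Submodule.map (μ g) (V ^ (n + 1)))
          (show g * t ∈ T ^ (n + 1) by rw [pow_succ]; exact Finset.mul_mem_mul hgmem htmem))
        rw [Submodule.mul_le]
        rintro x hx y hy
        obtain ⟨v, hv, rfl⟩ := Submodule.mem_map.mp hx
        obtain ⟨w, hw, rfl⟩ := Submodule.mem_map.mp hy
        have hxy : μ g v * μ t w = μ (g * t) (v * φ g w) := by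
          rw [hμ_apply, hμ_apply, hμ_apply, hmul]
        rw [hxy]
        refine Submodule.mem_map_of_mem ?_
        rw [pow_succ]
        exact Submodule.mul_mem_mul hv (hφV g w hw)
      calc U ^ (n + 1) = U ^ n * U := pow_succ U n
        _ ≤ ((T ^ n).sup (fun g => Submodule.map (μ g) (V ^ n))) *
              (T.sup (fun t => Submodule.map (μ t) V)) := mul_le_mul' ih le_rfl
        _ ≤ (T ^ (n + 1)).sup (fun g => Submodule.map (μ g) (V ^ (n + 1))) := by
            rw [Finset.sup_eq_iSup, Finset.sup_eq_iSup, Submodule.iSup_mul]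
            refine iSup_le fun g => ?_
            rw [Submodule.iSup_mul]
            refine iSup_le fun hgmem => ?_
            rw [Submodule.mul_iSup]
            refine iSup_le fun t => ?_
            rw [Submodule.mul_iSup]
            exact iSup_le fun htmem => hcore g hgmem t htmem
  -- U is finite dimensional and the ball sups have bounded finrank
  have hsupFD : ∀ n : ℕ,
      FiniteDimensional k ↥((T ^ n).sup (fun g => Submodule.map (μ g) (V ^ n))) ∧
      Module.finrank k ↥((T ^ n).sup (fun g => Submodule.map (μ g) (V ^ n))) ≤
        (T ^ n).card * Module.finrank k ↥(V ^ n) := by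
    intro n
    refine finrank_finset_sup (T ^ n) _ (fun g => hmapFD n g) _ (fun g _ => ?_)
    exact Submodule.finrank_map_le (μ g) (V ^ n)
  have hUFD : FiniteDimensional k ↥U :=
    (finrank_finset_sup T (fun t => Submodule.map (μ t) V)
      (fun t => Module.Finite.iff_fg.mpr (hVfg.map (μ t)))
      (Module.finrank k ↥V) (fun t _ => Submodule.finrank_map_le (μ t) V)).1
  -- 1 ∈ U
  have h1U : (1 : S) ∈ U := by
    have h1 : μ (1 : G) (1 : R) = (1 : S) := by
      rw [hμ_apply]; simp
    have hmem : (1 : S) ∈ Submodule.map (μ (1 : G)) V := h1 ▸ Submodule.mem_map_of_mem hV1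
    exact (Finset.le_sup (f := fun t => Submodule.map (μ t) V) hT1) hmem
  -- the adjoined algebra is everything
  have hadj : Algebra.adjoin k (U : Set S) = ⊤ := by
    set A := Algebra.adjoin k (U : Set S) with hA
    have hUA : (U : Set S) ⊆ A := Algebra.subset_adjoin
    have hιV : ∀ v ∈ V, ι v ∈ A := by
      intro v hv
      have h1 : μ (1 : G) v = ι v := by rw [hμ_apply]; simp
      have hmem : ι v ∈ Submodule.map (μ (1 : G)) V := h1 ▸ Submodule.mem_map_of_mem hv
      exact hUA ((Finset.le_sup (f := fun t => Submodule.map (μ t) V) hT1) hmem)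
    have hιR : ∀ r : R, ι r ∈ A := by
      intro r
      have hr : r ∈ Algebra.adjoin k (V : Set R) := by rw [hVgen]; trivial
      have hmem : ι r ∈ (Algebra.adjoin k (V : Set R)).map ι :=
        Subalgebra.mem_map.mpr ⟨r, hr, rfl⟩
      rw [AlgHom.map_adjoin] at hmem
      refine Algebra.adjoin_le ?_ hmem
      rintro s ⟨v, hv, rfl⟩
      exact hιV v hv
    have huT : ∀ t ∈ (T : Set G), (u t : S) ∈ A := by
      intro t ht
      have h1 : μ t (1 : R) = (u t : S) := by rw [hμ_apply]; simp
      have hmem : (u t : S) ∈ Submodule.map (μ t) V := h1 ▸ Submodule.mem_map_of_mem hV1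
      exact hUA ((Finset.le_sup (f := fun t => Submodule.map (μ t) V)
        (Finset.mem_coe.mp ht)) hmem)
    have hu : ∀ g : G, (u g : S) ∈ A := by
      intro g
      have hg1 : g ∈ Submonoid.closure ((T : Set G) ∪ (T : Set G)⁻¹) := by
        rw [← Subgroup.closure_toSubmonoid, hTtop]
        simp
      rw [hTsyminv, Set.union_self] at hg1
      induction hg1 using Submonoid.closure_induction with
      | mem x hx => exact huT x hx
      | one => simp only [map_one, Units.val_one]; exact one_mem A
      | mul x y hx hy ihx ihy =>
        rw [map_mul, Units.val_mul]
        exact mul_mem ihx ihy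
    refine eq_top_iff.mpr fun s _ => ?_
    obtain ⟨f, rfl⟩ := hbasis.2 s
    show (∑ g ∈ f.support, ι (f g) * (u g : S)) ∈ A
    exact sum_mem fun g _ => mul_mem (hιR (f g)) (hu g)
  -- conclusion
  refine ⟨U, hUFD, h1U, hadj, dV + Dg, Cg * CV, fun n hn => ?_⟩
  haveI := (hsupFD n).1
  calc Module.finrank k ↥(U ^ n)
      ≤ Module.finrank k ↥((T ^ n).sup fun g => Submodule.map (μ g) (V ^ n)) :=
        Submodule.finrank_mono (hpow n hn)
    _ ≤ (T ^ n).card * Module.finrank k ↥(V ^ n) := (hsupFD n).2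
    _ ≤ (Cg * n ^ Dg) * (CV * n ^ dV) := Nat.mul_le_mul (hg n hn) (hVp n hn)
    _ = Cg * CV * n ^ (dV + Dg) := by rw [pow_add]; ring
end

section
/- Let G be a finitely generated nilpotent-by-finite group and k a field. Then the group algebra k[G] has polynomially bounded growth: for any finite-dimensional generating subspace W spanned by group elements with 1 ∈ W, dim(W^n) is bounded by a polynomial in n. -/
namespace GrowthAux


/-- polynomially bounded sequence -/
def PB (f : ℕ → ℕ) : Prop := ∃ C d : ℕ, ∀ n, f n ≤ C * (n + 1) ^ d

lemma PB.mono {f g : ℕ → ℕ} (h : PB g) (hle : ∀ n, f n ≤ g n) : PB f := by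
  obtain ⟨C, d, hC⟩ := h; exact ⟨C, d, fun n => (hle n).trans (hC n)⟩

lemma PB.const (c : ℕ) : PB (fun _ => c) := ⟨c, 0, by simp⟩

lemma PB.add {f g : ℕ → ℕ} (hf : PB f) (hg : PB g) : PB (fun n => f n + g n) := by
  obtain ⟨C, d, hC⟩ := hf; obtain ⟨C', d', hC'⟩ := hg
  refine ⟨C + C', max d d', fun n => ?_⟩
  have h1 : f n ≤ C * (n+1) ^ max d d' :=
    (hC n).trans (Nat.mul_le_mul_left _ (Nat.pow_le_pow_right (by omega) (le_max_left _ _)))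
  have h2 : g n ≤ C' * (n+1) ^ max d d' :=
    (hC' n).trans (Nat.mul_le_mul_left _ (Nat.pow_le_pow_right (by omega) (le_max_right _ _)))
  calc f n + g n ≤ C * (n+1) ^ max d d' + C' * (n+1) ^ max d d' := Nat.add_le_add h1 h2
    _ = (C + C') * (n+1) ^ max d d' := (Nat.add_mul _ _ _).symm

lemma PB.mul {f g : ℕ → ℕ} (hf : PB f) (hg : PB g) : PB (fun n => f n * g n) := by
  obtain ⟨C, d, hC⟩ := hf; obtain ⟨C', d', hC'⟩ := hg
  exact ⟨C * C', d + d', fun n => by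
    calc f n * g n ≤ (C * (n+1)^d) * (C' * (n+1)^d') := Nat.mul_le_mul (hC n) (hC' n)
      _ = C * C' * (n+1)^(d + d') := by ring⟩

/-- recurrence closure: g (n+1) ≤ f n + g n, g 0 = 0 -/
lemma PB.of_rec {f g : ℕ → ℕ} (hf : PB f) (h0 : g 0 = 0)
    (hrec : ∀ n, g (n + 1) ≤ f n + g n) : PB g := by
  obtain ⟨C, d, hC⟩ := hf
  refine ⟨C, d + 1, fun n => ?_⟩
  induction n with
  | zero => simp [h0]
  | succ n ih =>
    calc g (n+1) ≤ f n + g n := hrec n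
      _ ≤ C * (n+1)^d + C * (n+1)^(d+1) := Nat.add_le_add (hC n) ih
      _ = C * ((n+1)^d * (n + 2)) := by ring
      _ ≤ C * ((n+2)^d * (n+2)) :=
          Nat.mul_le_mul_left _ (Nat.mul_le_mul_right _ (Nat.pow_le_pow_left (by omega) _))
      _ = C * (n+2)^(d+1) := by ring

lemma PB.comp_mul (k : ℕ) {f : ℕ → ℕ} (hf : PB f) : PB (fun n => f (k * n)) := by
  obtain ⟨C, d, hC⟩ := hf
  refine ⟨C * (k+1)^d, d, fun n => ?_⟩
  calc f (k * n) ≤ C * (k * n + 1)^d := hC _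
    _ ≤ C * ((k+1) * (n+1))^d := by
        refine Nat.mul_le_mul_left _ (Nat.pow_le_pow_left ?_ _); nlinarith
    _ = C * (k+1)^d * (n+1)^d := by rw [Nat.mul_pow]; ring

lemma PB.finsetSum (s : Finset ℕ) (f : ℕ → ℕ → ℕ) (hf : ∀ w ∈ s, PB (f · w)) :
    PB (fun n => ∑ w ∈ s, f n w) := by
  classical
  induction s using Finset.induction with
  | empty => simpa using PB.const 0
  | @insert a s' hx ih =>
    have h1 : PB (f · a) := hf a (Finset.mem_insert_self _ _)
    have h2 : PB (fun n => ∑ w ∈ s', f n w) := ih fun w hw => hf w (Finset.mem_insert_of_mem hw)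
    refine (h1.add h2).mono fun n => ?_
    rw [Finset.sum_insert hx]

/-! census functions -/

def shiftc (r : ℕ → ℕ) : ℕ → ℕ := fun w => r w + r (w - 1)

def delta1 : ℕ → ℕ := fun w => if w = 1 then 1 else 0

def ucen : ℕ → ℕ → ℕ
  | 0 => fun _ => 0
  | n + 1 => fun w => shiftc^[n] delta1 w + ucen n w

def rhoc (k : ℕ) : ℕ → ℕ → ℕ
  | 0 => fun _ => 0
  | n + 1 => fun w => ucen (k * n) w + shiftc (rhoc k n) w

lemma shiftc_zero {r : ℕ → ℕ} (h : r 0 = 0) : shiftc r 0 = 0 := by simp [shiftc, h]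

lemma shiftc_iter_zero (n : ℕ) {r : ℕ → ℕ} (h : r 0 = 0) : shiftc^[n] r 0 = 0 := by
  induction n generalizing r with
  | zero => exact h
  | succ n ih => rw [Function.iterate_succ_apply]; exact ih (shiftc_zero h)

lemma shiftc_mono {r r' : ℕ → ℕ} (h : ∀ w, r w ≤ r' w) : ∀ w, shiftc r w ≤ shiftc r' w :=
  fun w => Nat.add_le_add (h w) (h (w - 1))

lemma shiftc_iter_bound (M : ℕ) {r : ℕ → ℕ} (h0 : r 0 = 0) (hM : ∀ w, r w ≤ M) :
    ∀ n w, shiftc^[n] r w ≤ M * (n + 1) ^ w := by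
  intro n
  induction n with
  | zero => intro w; simpa using hM w
  | succ n ih =>
    intro w
    rw [Function.iterate_succ_apply']
    match w with
    | 0 => rw [shiftc_zero (shiftc_iter_zero n h0)]; exact Nat.zero_le _
    | w + 1 =>
      have h1 := ih (w + 1)
      have h2 := ih w
      calc shiftc (shiftc^[n] r) (w+1) = shiftc^[n] r (w+1) + shiftc^[n] r w := by simp [shiftc]
        _ ≤ M * (n+1)^(w+1) + M * (n+1)^w := Nat.add_le_add h1 h2
        _ = M * ((n+1)^w * (n + 2)) := by ring
        _ ≤ M * ((n+2)^w * (n+2)) :=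
            Nat.mul_le_mul_left _ (Nat.mul_le_mul_right _ (Nat.pow_le_pow_left (by omega) _))
        _ = M * (n+2)^(w+1) := by ring

lemma ucen_zero_w (n : ℕ) : ucen n 0 = 0 := by
  induction n with
  | zero => rfl
  | succ n ih => simp [ucen, ih, shiftc_iter_zero n (show delta1 0 = 0 by rfl)]

lemma ucen_bound (n w : ℕ) : ucen n w ≤ n * (n + 1) ^ w := by
  induction n with
  | zero => simp [ucen]
  | succ n ih =>
    have h1 : shiftc^[n] delta1 w ≤ 1 * (n + 1) ^ w :=
      shiftc_iter_bound 1 rfl (fun w => by unfold delta1; split <;> omega) n w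
    calc ucen (n+1) w = shiftc^[n] delta1 w + ucen n w := rfl
      _ ≤ 1 * (n+1)^w + n * (n+1)^w := Nat.add_le_add h1 ih
      _ = (n+1) * (n+1)^w := by ring
      _ ≤ (n+1) * (n+2)^w := Nat.mul_le_mul_left _ (Nat.pow_le_pow_left (by omega) _)

lemma ucen_mono {n n' : ℕ} (h : n ≤ n') (w : ℕ) : ucen n w ≤ ucen n' w := by
  induction n' with
  | zero => simp_all
  | succ m ih =>
    rcases Nat.eq_or_lt_of_le h with rfl | hlt
    · exact le_refl _
    · exact (ih (by omega)).trans (by simp [ucen])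

lemma PB_ucen_w (k w : ℕ) : PB (fun n => ucen (k * n) w) := by
  have hb : PB (fun n => ucen n w) := ⟨1, w + 1, fun n => ?_⟩
  · exact PB.comp_mul k hb
  calc ucen n w ≤ n * (n+1)^w := ucen_bound n w
    _ ≤ (n+1) * (n+1)^w := Nat.mul_le_mul_right _ (by omega)
    _ = 1 * (n+1)^(w+1) := by ring

lemma rhoc_zero_w (k n : ℕ) : rhoc k n 0 = 0 := by
  induction n with
  | zero => rfl
  | succ n ih => simp [rhoc, shiftc, ih, ucen_zero_w]

lemma PB_rhoc (k w : ℕ) : PB (fun n => rhoc k n w) := by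
  induction w with
  | zero => exact (PB.const 0).mono (fun n => by rw [rhoc_zero_w])
  | succ w ih =>
    refine PB.of_rec ((PB_ucen_w k (w+1)).add ih) rfl (fun n => ?_)
    show ucen (k * n) (w+1) + shiftc (rhoc k n) (w+1) ≤ _ + rhoc k n (w+1)
    simp only [shiftc, Nat.add_sub_cancel]
    omega



set_option linter.unusedSectionVars false
set_option maxHeartbeats 1000000
open Pointwise

variable {G : Type*} [Group G] [DecidableEq G]

/-- commutator with the convention `a⁻¹ * b⁻¹ * a * b`. -/
def cmt (a b : G) : G := a⁻¹ * b⁻¹ * a * b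

lemma conj_eq_cmt (a s : G) : s⁻¹ * a * s = a * cmt a s := by
  simp [cmt]; group

lemma cmt_cons (g v s : G) : cmt (g * v) s = (v⁻¹ * cmt g s * v) * cmt v s := by
  simp [cmt]; group

lemma mul_right_cmt (y g : G) : y * g = g * y * cmt y g := by
  simp [cmt]; group

/-- iterated left-normed commutators of weight `w+1` with letters in `S`. -/
def Ct (S : Finset G) : ℕ → Finset G
  | 0 => S
  | w + 1 => Finset.image₂ cmt (Ct S w) S

lemma Ct_subset_lcs (S : Finset G) (i : ℕ) (hS : (S : Set G) ⊆ Subgroup.lowerCentralSeries (⊤ : Subgroup G) i) :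
    ∀ w, (Ct S w : Set G) ⊆ (Subgroup.lowerCentralSeries (⊤ : Subgroup G) (i + w) : Subgroup G) := by
  intro w
  induction w with
  | zero => simpa [Ct] using hS
  | succ w ih =>
    intro x hx
    simp only [Ct, Finset.coe_image₂, Set.mem_image2] at hx
    obtain ⟨a, ha, s, hs, rfl⟩ := hx
    have ha' : a⁻¹ ∈ Subgroup.lowerCentralSeries (⊤ : Subgroup G) (i + w) := (Subgroup.lowerCentralSeries (⊤ : Subgroup G) (i+w)).inv_mem (ih ha)
    open scoped commutatorElement in
    have : cmt a s = ⁅a⁻¹, s⁻¹⁆ := by simp only [cmt, commutatorElement_def, inv_inv]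
    rw [this, show i + (w+1) = (i+w) + 1 by omega, lowerCentralSeries_succ]
    exact Subgroup.commutator_mem_commutator ha' (Subgroup.mem_top _)

/-- A good list: letters are trees with positive index. -/
def GoodL (S : Finset G) (l : List (ℕ × G)) : Prop :=
  ∀ p ∈ l, 1 ≤ p.1 ∧ p.2 ∈ Ct S p.1

/-- count of letters of index `w` -/
def cnt (l : List (ℕ × G)) (w : ℕ) : ℕ := l.countP (fun p => p.1 == w)

/-- products of commutator-words with census bounded by `r`. -/
def Q (S : Finset G) (r : ℕ → ℕ) : Set G :=
  {x | ∃ l : List (ℕ × G), GoodL S l ∧ (∀ w, cnt l w ≤ r w) ∧ (l.map Prod.snd).prod = x}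

lemma one_mem_Q (S : Finset G) (r : ℕ → ℕ) : (1 : G) ∈ Q S r :=
  ⟨[], by simp [GoodL], by simp [cnt], by simp⟩

lemma Q_mono (S : Finset G) {r r' : ℕ → ℕ} (h : ∀ w, r w ≤ r' w) : Q S r ⊆ Q S r' :=
  fun x ⟨l, hg, hc, hp⟩ => ⟨l, hg, fun w => (hc w).trans (h w), hp⟩

lemma Q_mul (S : Finset G) (r r' : ℕ → ℕ) : Q S r * Q S r' ⊆ Q S (fun w => r w + r' w) := by
  rintro z ⟨x, ⟨l, hg, hc, rfl⟩, y, ⟨l', hg', hc', rfl⟩, rfl⟩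
  refine ⟨l ++ l', fun p hp => ?_, fun w => ?_, by simp⟩
  · rcases List.mem_append.mp hp with h | h
    · exact hg p h
    · exact hg' p h
  · simp only [cnt, List.countP_append]
    exact Nat.add_le_add (hc w) (hc' w)

lemma single_mem_Q {S : Finset G} {a : G} {w : ℕ} (hw : 1 ≤ w) (ha : a ∈ Ct S w) :
    a ∈ Q S (fun v => if v = w then 1 else 0) := by
  refine ⟨[(w, a)], fun p hp => ?_, fun v => ?_, by simp⟩
  · simp at hp; subst hp; exact ⟨hw, ha⟩
  · simp only [cnt, List.countP_cons, List.countP_nil]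
    by_cases h : w = v <;> simp [h] <;> omega

/-- conjugation by a single generator -/
lemma conj_mem_Q {S : Finset G} {r : ℕ → ℕ} {x s : G} (hx : x ∈ Q S r) (hs : s ∈ S) :
    s⁻¹ * x * s ∈ Q S (shiftc r) := by
  obtain ⟨l, hg, hc, rfl⟩ := hx
  refine ⟨l.flatMap (fun p => [p, (p.1 + 1, cmt p.2 s)]), ?_, ?_, ?_⟩
  · intro p hp
    simp only [List.mem_flatMap] at hp
    obtain ⟨q, hq, hpq⟩ := hp
    obtain ⟨h1, h2⟩ := hg q hq
    simp only [List.mem_cons, List.mem_singleton, List.not_mem_nil, or_false] at hpq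
    rcases hpq with h | h
    · subst h; exact ⟨h1, h2⟩
    · subst h
      exact ⟨by omega, by simp only [Ct, Finset.mem_image₂]; exact ⟨q.2, h2, s, hs, rfl⟩⟩
  · intro w
    have key : ∀ L : List (ℕ × G), GoodL S L →
        cnt (L.flatMap (fun p => [p, (p.1 + 1, cmt p.2 s)])) w ≤ cnt L w + cnt L (w - 1) := by
      intro L
      induction L with
      | nil => simp [cnt]
      | cons q t ih =>
        intro hgood
        have hq := hgood q (List.mem_cons_self)
        have ht := ih (fun p hp => hgood p (List.mem_cons_of_mem _ hp))
        simp only [List.flatMap_cons, cnt, List.countP_append, List.countP_cons,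
          List.countP_nil] at *
        rcases Nat.lt_or_ge w 1 with hw | hw
        · interval_cases w
          have : (q.1 + 1 == 0) = false := by simp
          simp only [this]
          have h0 : (q.1 == 0) = false := by simp; omega
          simp only [h0] at *
          omega
        · by_cases h1 : q.1 = w
          · have e1 : (q.1 == w) = true := by simp [h1]
            have e2 : (q.1 + 1 == w) = false := by simp; omega
            by_cases h3 : q.1 = w - 1
            · have e3 : (q.1 == w - 1) = true := by simp [h3]
              simp only [e1, e2, e3] at *; omega
            · have e3 : (q.1 == w - 1) = false := by simp [h3]
              simp only [e1, e2, e3] at *; omega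
          · have e1 : (q.1 == w) = false := by simp [h1]
            by_cases h2 : q.1 + 1 = w
            · have e2 : (q.1 + 1 == w) = true := by simp [h2]
              have e3 : (q.1 == w - 1) = true := by simp; omega
              simp only [e1, e2, e3] at *; omega
            · have e2 : (q.1 + 1 == w) = false := by simp [h2]
              by_cases h3 : q.1 = w - 1
              · have e3 : (q.1 == w - 1) = true := by simp [h3]
                simp only [e1, e2, e3] at *; omega
              · have e3 : (q.1 == w - 1) = false := by simp [h3]
                simp only [e1, e2, e3] at *; omega
    exact (key l hg).trans (Nat.add_le_add (hc w) (hc (w - 1)))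
  · have key : ∀ L : List (ℕ × G),
        ((L.flatMap (fun p => [p, (p.1 + 1, cmt p.2 s)])).map Prod.snd).prod
          = s⁻¹ * (L.map Prod.snd).prod * s := by
      intro L
      induction L with
      | nil => simp
      | cons q t ih =>
        simp only [List.flatMap_cons, List.map_append, List.map_cons, List.map_nil,
          List.prod_append, List.prod_cons, List.prod_nil, ih]
        simp only [mul_one, cmt]
        group
    rw [key l]

/-- conjugation by a word in `S` of length `n` -/
lemma conj_word_mem_Q {S : Finset G} {r : ℕ → ℕ} {x : G} (hx : x ∈ Q S r) :
    ∀ n, ∀ v ∈ (S : Set G) ^ n, v⁻¹ * x * v ∈ Q S (shiftc^[n] r) := by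
  intro n
  induction n generalizing r x with
  | zero => intro v hv; simp only [pow_zero, Set.mem_one] at hv; subst hv; simpa using hx
  | succ n ih =>
    intro v hv
    rw [pow_succ'] at hv
    obtain ⟨g, hg, w, hw, rfl⟩ := hv
    have h1 : g⁻¹ * x * g ∈ Q S (shiftc r) := conj_mem_Q hx hg
    have h2 := ih h1 w hw
    rw [Function.iterate_succ_apply]
    convert h2 using 1
    group

/-- the commutator of a word of length `m` with a generator -/
lemma ucomm_mem_Q {S : Finset G} {s : G} (hs : s ∈ S) :
    ∀ m, ∀ u ∈ (S : Set G) ^ m, cmt u s ∈ Q S (ucen m) := by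
  intro m
  induction m with
  | zero =>
    intro u hu; simp only [pow_zero, Set.mem_one] at hu; subst hu
    have : cmt (1 : G) s = 1 := by simp [cmt]
    rw [this]; exact one_mem_Q _ _
  | succ m ih =>
    intro u hu
    rw [pow_succ'] at hu
    obtain ⟨g, hg, v, hv, rfl⟩ := hu
    rw [cmt_cons]
    have h1 : cmt g s ∈ Ct S 1 := by
      simp only [Ct, Finset.mem_image₂]; exact ⟨g, hg, s, hs, rfl⟩
    have h2 : cmt g s ∈ Q S delta1 := by
      have := single_mem_Q (le_refl 1) h1
      refine Q_mono S (fun v => ?_) this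
      unfold delta1; split <;> simp
    have h3 : v⁻¹ * cmt g s * v ∈ Q S (shiftc^[m] delta1) := conj_word_mem_Q h2 m v hv
    have h4 : cmt v s ∈ Q S (ucen m) := ih v hv
    exact Q_mul S _ _ ⟨_, h3, _, h4, rfl⟩



/-- sorted products over a list of generators with exponents ≤ n -/
def EL : List G → ℕ → Finset G
  | [], _ => {1}
  | g :: L, n => (Finset.range (n + 1)).image (g ^ ·) * EL L n

lemma card_EL (L : List G) (n : ℕ) : (EL L n).card ≤ (n + 1) ^ L.length := by
  induction L with
  | nil => simp [EL]
  | cons g L ih =>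
    calc (EL (g :: L) n).card ≤ ((Finset.range (n+1)).image (g ^ ·)).card * (EL L n).card :=
          Finset.card_mul_le
      _ ≤ (n + 1) * (n + 1) ^ L.length :=
          Nat.mul_le_mul ((Finset.card_image_le).trans (by simp)) ih
      _ = (n + 1) ^ (g :: L).length := by simp [List.length_cons]; ring

lemma EL_mono (L : List G) {n n' : ℕ} (h : n ≤ n') : EL L n ⊆ EL L n' := by
  induction L with
  | nil => simp [EL]
  | cons g L ih =>
    intro x hx
    simp only [EL, Finset.mem_mul] at hx ⊢
    obtain ⟨a, ha, b, hb, rfl⟩ := hx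
    refine ⟨a, ?_, b, ih hb, rfl⟩
    simp only [Finset.mem_image, Finset.mem_range] at ha ⊢
    obtain ⟨e, he, rfl⟩ := ha
    exact ⟨e, by omega, rfl⟩

lemma one_mem_EL (L : List G) (n : ℕ) : (1 : G) ∈ EL L n := by
  induction L with
  | nil => simp [EL]
  | cons g L ih =>
    simp only [EL, Finset.mem_mul]
    exact ⟨g ^ 0, Finset.mem_image.mpr ⟨0, by simp⟩, 1, ih, by simp⟩

lemma EL_subset_ball {S : Finset G} : ∀ (L : List G), (∀ a ∈ L, a ∈ S) → ∀ n,
    ∀ x ∈ EL L n, ∃ m ≤ n * L.length, x ∈ (S : Set G) ^ m := by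
  intro L
  induction L with
  | nil => intro _ n x hx; simp [EL] at hx; exact ⟨0, by simp, by simp [hx]⟩
  | cons g L ih =>
    intro hL n x hx
    simp only [EL, Finset.mem_mul] at hx
    obtain ⟨a, ha, b, hb, rfl⟩ := hx
    simp only [Finset.mem_image, Finset.mem_range] at ha
    obtain ⟨e, he, rfl⟩ := ha
    obtain ⟨m, hm, hmem⟩ := ih (fun a ha => hL a (List.mem_cons_of_mem _ ha)) n b hb
    refine ⟨e + m, by rw [List.length_cons, Nat.mul_succ]; omega, ?_⟩
    rw [pow_add]
    refine Set.mul_mem_mul ?_ hmem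
    have hg : g ∈ (S : Set G) := hL g (List.mem_cons_self)
    clear he
    induction e with
    | zero => simp
    | succ e ihe =>
      rw [pow_succ, pow_succ]
      exact Set.mul_mem_mul ihe hg

/-- insertion of a generator into a sorted product -/
lemma EL_insert {S : Finset G} : ∀ (L : List G), (∀ a ∈ L, a ∈ S) → ∀ s ∈ L, ∀ n,
    (EL L n : Set G) * {s} ⊆ (EL L (n + 1) : Set G) * Q S (ucen (n * L.length)) := by
  intro L
  induction L with
  | nil => intro _ s hs; simp at hs
  | cons g L ih =>
    intro hL s hs n x hx
    rw [Set.mul_singleton] at hx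
    obtain ⟨y, hy, rfl⟩ := hx
    simp only [EL, Finset.coe_mul, Set.mem_mul, Finset.mem_coe, Finset.mem_image,
      Finset.mem_range] at hy
    obtain ⟨a, ⟨e, he, rfl⟩, b, hb, hy⟩ := hy
    have hy' : g ^ e * b = y := hy
    subst hy'
    by_cases hsg : s = g
    · subst hsg
      -- g^e * b * s = g^(e+1) * b * cmt b g
      obtain ⟨m, hm, hmem⟩ := EL_subset_ball L (fun a ha => hL a (List.mem_cons_of_mem _ ha)) n b hb
      have hcm : cmt b s ∈ Q S (ucen (n * (s :: L).length)) := by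
        refine Q_mono S (fun w => ucen_mono (hm.trans ?_) w)
          (ucomm_mem_Q (hL s (List.mem_cons_self)) m b hmem)
        rw [List.length_cons, Nat.mul_succ]; omega
      refine ⟨s ^ (e + 1) * b, ?_, cmt b s, hcm, ?_⟩
      · simp only [EL, Finset.coe_mul, Set.mem_mul, Finset.mem_coe, Finset.mem_image,
          Finset.mem_range]
        exact ⟨s ^ (e+1), ⟨e + 1, by omega, rfl⟩, b, EL_mono L (by omega) hb, rfl⟩
      · show s ^ (e + 1) * b * cmt b s = s ^ e * b * s
        have h := mul_right_cmt b s
        calc s ^ (e+1) * b * cmt b s = s ^ e * (s * b * cmt b s) := by rw [pow_succ]; group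
          _ = s ^ e * (b * s) := by rw [← mul_right_cmt]
          _ = s ^ e * b * s := by group
    · have hsL : s ∈ L := by
        rcases List.mem_cons.mp hs with h | h
        · exact absurd h hsg
        · exact h
      have hstep := ih (fun a ha => hL a (List.mem_cons_of_mem _ ha)) s hsL n
        (Set.mul_mem_mul (Finset.mem_coe.mpr hb) (Set.mem_singleton s))
      obtain ⟨b', hb', q, hq, hbq⟩ := hstep
      have hbq' : b' * q = b * s := hbq
      refine ⟨g ^ e * b', ?_, q,
        Q_mono S (fun w => ucen_mono (by rw [List.length_cons, Nat.mul_succ]; omega) w) hq, ?_⟩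
      · simp only [EL, Finset.coe_mul, Set.mem_mul, Finset.mem_coe, Finset.mem_image,
          Finset.mem_range]
        exact ⟨g ^ e, ⟨e, by omega, rfl⟩, b', hb', rfl⟩
      · show g ^ e * b' * q = g ^ e * b * s
        calc g ^ e * b' * q = g ^ e * (b' * q) := by group
          _ = g ^ e * (b * s) := by rw [hbq']
          _ = g ^ e * b * s := by group

/-- MAIN: normal form for balls -/
lemma main_lemma {S : Finset G} : ∀ n,
    ((S : Set G)) ^ n ⊆ (EL S.toList n : Set G) * Q S (rhoc S.card n) := by
  intro n
  induction n with
  | zero =>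
    intro x hx
    simp only [pow_zero, Set.mem_one] at hx; subst hx
    exact ⟨1, Finset.mem_coe.mpr (one_mem_EL _ 0), 1, one_mem_Q _ _, by simp⟩
  | succ n ih =>
    intro x hx
    rw [pow_succ] at hx
    obtain ⟨u, hu, s, hs, hx⟩ := hx
    have hx' : u * s = x := hx
    subst hx'
    obtain ⟨a, ha, q, hq, hu'⟩ := ih hu
    have hu'' : a * q = u := hu'
    subst hu''
    -- a * q * s = a * s * (s⁻¹ q s)
    have h1 : s⁻¹ * q * s ∈ Q S (shiftc (rhoc S.card n)) := conj_mem_Q hq hs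
    have h2 : a * s ∈ (EL S.toList (n+1) : Set G) * Q S (ucen (n * S.toList.length)) :=
      EL_insert S.toList (fun a ha => Finset.mem_toList.mp ha) s (Finset.mem_toList.mpr hs) n
        (Set.mul_mem_mul ha (Set.mem_singleton s))
    obtain ⟨b, hb, q', hq', habq⟩ := h2
    have habq' : b * q' = a * s := habq
    refine ⟨b, hb, q' * (s⁻¹ * q * s), ?_, ?_⟩
    · have hlen : S.toList.length = S.card := S.length_toList
      have := Q_mul S (ucen (n * S.toList.length)) (shiftc (rhoc S.card n))
        ⟨q', hq', _, h1, rfl⟩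
      refine Q_mono S (fun w => ?_) this
      show ucen (n * S.toList.length) w + _ ≤ rhoc S.card (n+1) w
      have : ucen (n * S.toList.length) w ≤ ucen (S.card * n) w := by
        rw [hlen, Nat.mul_comm]
      simp only [rhoc]
      omega
    · show b * (q' * (s⁻¹ * q * s)) = a * q * s
      calc b * (q' * (s⁻¹ * q * s)) = (b * q') * (s⁻¹ * q * s) := by group
        _ = (a * s) * (s⁻¹ * q * s) := by rw [habq']
        _ = a * q * s := by group

lemma pow_subset_pow_of_one_mem {B : Finset G} (h1 : (1:G) ∈ B) {j N : ℕ} (h : j ≤ N) :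
    B ^ j ⊆ B ^ N := by
  induction N with
  | zero => simp_all
  | succ N ih =>
    rcases Nat.eq_or_lt_of_le h with rfl | hlt
    · exact Finset.Subset.refl _
    · refine (ih (by omega)).trans ?_
      intro x hx
      rw [pow_succ]
      have hx1 : x = x * 1 := by group
      rw [hx1]
      exact Finset.mul_mem_mul hx h1

lemma Q_subset_pow {S : Finset G} {m : ℕ}
    (htriv : ∀ w, m < w → ∀ a ∈ Ct S w, a = (1:G)) (r : ℕ → ℕ) :
    Q S r ⊆ ((insert (1:G) ((Finset.Icc 1 m).biUnion (Ct S))) ^ (∑ w ∈ Finset.Icc 1 m, r w)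
      : Finset G) := by
  set B : Finset G := insert (1:G) ((Finset.Icc 1 m).biUnion (Ct S)) with hB
  have h1B : (1 : G) ∈ B := Finset.mem_insert_self _ _
  rintro x ⟨l, hg, hc, rfl⟩
  have step1 : ∀ l : List (ℕ × G), GoodL S l →
      (l.map Prod.snd).prod ∈ B ^ (l.countP (fun p => decide (p.1 ≤ m))) := by
    intro l
    induction l with
    | nil => intro _; simp
    | cons p t ih =>
      intro hgood
      obtain ⟨hp1, hp2⟩ := hgood p (List.mem_cons_self)
      have ht := ih (fun q hq => hgood q (List.mem_cons_of_mem _ hq))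
      by_cases hle : p.1 ≤ m
      · have hcnt : List.countP (fun q : ℕ × G => decide (q.1 ≤ m)) (p :: t)
            = List.countP (fun q : ℕ × G => decide (q.1 ≤ m)) t + 1 := by
          simp [List.countP_cons, hle]
        rw [List.map_cons, List.prod_cons, hcnt, pow_succ']
        refine Finset.mul_mem_mul ?_ ht
        exact Finset.mem_insert_of_mem
          (Finset.mem_biUnion.mpr ⟨p.1, Finset.mem_Icc.mpr ⟨hp1, hle⟩, hp2⟩)
      · have hcnt : List.countP (fun q : ℕ × G => decide (q.1 ≤ m)) (p :: t)
            = List.countP (fun q : ℕ × G => decide (q.1 ≤ m)) t := by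
          simp [List.countP_cons, hle]
        rw [List.map_cons, List.prod_cons, hcnt, htriv p.1 (by omega) p.2 hp2, one_mul]
        exact ht
  have step2 : ∀ l : List (ℕ × G), GoodL S l →
      l.countP (fun p => decide (p.1 ≤ m)) ≤ ∑ w ∈ Finset.Icc 1 m, cnt l w := by
    intro l
    induction l with
    | nil => intro _; simp [cnt]
    | cons p t ih =>
      intro hgood
      obtain ⟨hp1, _⟩ := hgood p (List.mem_cons_self)
      have ht := ih (fun q hq => hgood q (List.mem_cons_of_mem _ hq))
      have hsum : ∀ w, cnt (p :: t) w = cnt t w + if p.1 = w then 1 else 0 := by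
        intro w
        simp only [cnt, List.countP_cons]
        by_cases h : p.1 = w <;> simp [h]
      have hcnt2 : List.countP (fun q : ℕ × G => decide (q.1 ≤ m)) (p :: t)
          = List.countP (fun q : ℕ × G => decide (q.1 ≤ m)) t
            + (if p.1 ≤ m then 1 else 0) := by
        by_cases h : p.1 ≤ m <;> simp [List.countP_cons, h]
      rw [hcnt2]
      calc List.countP (fun q : ℕ × G => decide (q.1 ≤ m)) t + (if p.1 ≤ m then 1 else 0)
          ≤ (∑ w ∈ Finset.Icc 1 m, cnt t w) + (if p.1 ≤ m then 1 else 0) :=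
            Nat.add_le_add ht (le_refl _)
        _ ≤ ∑ w ∈ Finset.Icc 1 m, cnt (p :: t) w := by
            simp only [hsum, Finset.sum_add_distrib]
            refine Nat.add_le_add_left ?_ _
            rw [Finset.sum_ite_eq (Finset.Icc 1 m) p.1 (fun _ => 1)]
            by_cases h : p.1 ≤ m
            · simp [h, Finset.mem_Icc, hp1]
            · simp [h]
  have h3 : (∑ w ∈ Finset.Icc 1 m, cnt l w) ≤ ∑ w ∈ Finset.Icc 1 m, r w :=
    Finset.sum_le_sum (fun w _ => hc w)
  exact pow_subset_pow_of_one_mem h1B ((step2 l hg).trans h3) (step1 l hg)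

lemma pow_subset_one {S : Finset G} (h : S ⊆ {1}) : ∀ n, S ^ n ⊆ ({1} : Finset G) := by
  intro n
  induction n with
  | zero => intro x hx; simpa using Finset.mem_one.mp (by simpa using hx)
  | succ n ih =>
    rw [pow_succ]
    refine (Finset.mul_subset_mul ih h).trans ?_
    intro x hx
    obtain ⟨a, ha, b, hb, rfl⟩ := Finset.mem_mul.mp hx
    simp only [Finset.mem_singleton] at *
    rw [ha, hb, one_mul]

/-- Core polynomial-growth lemma, by induction on the remaining length of the
lower central series below level `i`. -/
lemma growth_of_lcs (t : ℕ) (c : ℕ) (hbot : Subgroup.lowerCentralSeries (⊤ : Subgroup G) c = ⊥) :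
    ∀ (i : ℕ), c ≤ i + t → ∀ S : Finset G,
    (S : Set G) ⊆ (Subgroup.lowerCentralSeries (⊤ : Subgroup G) i : Subgroup G) →
    ∃ C d : ℕ, ∀ n : ℕ, (S ^ n).card ≤ C * (n + 1) ^ d := by
  induction t with
  | zero =>
    intro i hci S hSsub
    refine ⟨1, 0, fun n => ?_⟩
    have hS1 : S ⊆ {1} := by
      intro a ha
      have h1 := hSsub (Finset.mem_coe.mpr ha)
      have h2 : Subgroup.lowerCentralSeries (⊤ : Subgroup G) i ≤ Subgroup.lowerCentralSeries (⊤ : Subgroup G) c := Subgroup.lowerCentralSeries_antitone _ hci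
      have := h2 h1
      rw [hbot] at this
      simpa using this
    calc (S ^ n).card ≤ ({1} : Finset G).card := Finset.card_le_card (pow_subset_one hS1 n)
      _ = 1 := Finset.card_singleton _
      _ ≤ 1 * (n+1)^0 := by simp
  | succ t ih =>
    intro i hci S hSsub
    by_cases hci' : c ≤ i
    · exact ih i (by omega) S hSsub
    -- main case: i < c
    set m : ℕ := c - i - 1 with hm
    have htriv : ∀ w, m < w → ∀ a ∈ Ct S w, a = (1:G) := by
      intro w hw a ha
      have h1 : a ∈ (Subgroup.lowerCentralSeries (⊤ : Subgroup G) (i + w) : Subgroup G) :=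
        Ct_subset_lcs S i hSsub w (Finset.mem_coe.mpr ha)
      have h2 : Subgroup.lowerCentralSeries (⊤ : Subgroup G) (i + w) ≤ Subgroup.lowerCentralSeries (⊤ : Subgroup G) c :=
        Subgroup.lowerCentralSeries_antitone _ (by omega)
      have := h2 h1
      rw [hbot] at this
      simpa using this
    set B : Finset G := insert (1:G) ((Finset.Icc 1 m).biUnion (Ct S)) with hB
    have hBsub : (B : Set G) ⊆ (Subgroup.lowerCentralSeries (⊤ : Subgroup G) (i+1) : Subgroup G) := by
      intro a ha
      simp only [hB, Finset.coe_insert, Set.mem_insert_iff, Finset.mem_coe,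
        Finset.mem_biUnion] at ha
      rcases ha with rfl | ⟨w, hw, haw⟩
      · exact Subgroup.one_mem _
      · have hw' := Finset.mem_Icc.mp hw
        have h1 : a ∈ (Subgroup.lowerCentralSeries (⊤ : Subgroup G) (i + w) : Subgroup G) :=
          Ct_subset_lcs S i hSsub w (Finset.mem_coe.mpr haw)
        exact Subgroup.lowerCentralSeries_antitone _ (by omega) h1
    obtain ⟨C, d, hCd⟩ := ih (i+1) (by omega) B hBsub
    set N : ℕ → ℕ := fun n => ∑ w ∈ Finset.Icc 1 m, rhoc S.card n w with hN
    obtain ⟨C2, d2, hC2⟩ : PB N :=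
      PB.finsetSum (Finset.Icc 1 m) (fun n w => rhoc S.card n w) (fun w _ => PB_rhoc S.card w)
    refine ⟨C * (C2+1)^d, S.card + d2 * d, fun n => ?_⟩
    have hsub : (S ^ n : Finset G) ⊆ EL S.toList n * B ^ (N n) := by
      rw [← Finset.coe_subset, Finset.coe_pow, Finset.coe_mul]
      refine (main_lemma n).trans ?_
      refine Set.mul_subset_mul_left ?_
      intro x hx
      exact Finset.mem_coe.mpr (Q_subset_pow htriv (rhoc S.card n) hx)
    have hcard : (S ^ n).card ≤ (n+1)^S.card * (C * (N n + 1)^d) := by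
      calc (S ^ n).card ≤ (EL S.toList n * B ^ (N n)).card := Finset.card_le_card hsub
        _ ≤ (EL S.toList n).card * (B ^ (N n)).card := Finset.card_mul_le
        _ ≤ (n+1)^S.card * (C * (N n + 1)^d) := by
            refine Nat.mul_le_mul ?_ ?_
            · have := card_EL S.toList n
              rwa [Finset.length_toList] at this
            · exact hCd (N n)
    have hfin : (N n + 1)^d ≤ (C2+1)^d * (n+1)^(d2 * d) := by
      have h1 : N n + 1 ≤ (C2+1) * (n+1)^d2 := by
        have := hC2 n
        have h2 : 1 ≤ (n+1)^d2 := Nat.one_le_pow _ _ (by omega)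
        nlinarith
      calc (N n + 1)^d ≤ ((C2+1) * (n+1)^d2)^d := Nat.pow_le_pow_left h1 d
        _ = (C2+1)^d * (n+1)^(d2 * d) := by rw [Nat.mul_pow, ← Nat.pow_mul]
    calc (S ^ n).card ≤ (n+1)^S.card * (C * (N n + 1)^d) := hcard
      _ ≤ (n+1)^S.card * (C * ((C2+1)^d * (n+1)^(d2 * d))) :=
          Nat.mul_le_mul_left _ (Nat.mul_le_mul_left _ hfin)
      _ = C * (C2+1)^d * (n+1)^(S.card + d2 * d) := by rw [Nat.pow_add]; ring

lemma coe_image_pow {H : Type*} [Group H] [DecidableEq H] [DecidableEq G]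
    (f : H →* G) (A : Finset H) (n : ℕ) : (A ^ n).image f = (A.image f) ^ n := by
  apply Finset.coe_injective
  rw [Finset.coe_image, Finset.coe_pow, Finset.coe_pow, Finset.coe_image]
  exact Set.image_pow f (A : Set H) n

/-- growth of arbitrary finite subsets of a nilpotent-by-finite group -/
lemma growth_virtually_nilpotent {N : Subgroup G} [hNorm : N.Normal]
    (hnil : Group.IsNilpotent ↥N) (hfi : N.FiniteIndex) (T : Finset G) :
    ∃ C d : ℕ, ∀ n : ℕ, (T ^ n).card ≤ C * (n + 1) ^ d := by
  classical
  haveI hfin : Finite (G ⧸ N) := by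
    have h := hfi.index_ne_zero
    rw [Subgroup.index] at h
    exact (Nat.card_ne_zero.mp h).2
  set ρ : G → G := fun x => ((QuotientGroup.mk x : G ⧸ N)).out with hρ
  have hρN : ∀ x : G, x * (ρ x)⁻¹ ∈ N := by
    intro x
    have h1 : (QuotientGroup.mk (ρ x) : G ⧸ N) = QuotientGroup.mk x := Quotient.out_eq' _
    have h2 : (ρ x)⁻¹ * x ∈ N := (QuotientGroup.eq (s := N)).mp h1
    exact hNorm.mem_comm h2
  have hRfin : (Set.range ρ).Finite := by
    have : Set.range ρ ⊆ Set.range (fun q : G ⧸ N => q.out) := by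
      rintro x ⟨y, rfl⟩; exact ⟨_, rfl⟩
    exact (Set.finite_range _).subset this
  set R1 : Finset G := insert 1 hRfin.toFinset with hR1
  set F : Finset G := (R1 ×ˢ T).image (fun p => p.1 * p.2 * (ρ (p.1 * p.2))⁻¹) with hF
  have hFN : ∀ f ∈ F, f ∈ N := by
    intro f hf
    simp only [hF, Finset.mem_image, Finset.mem_product] at hf
    obtain ⟨p, _, rfl⟩ := hf
    exact hρN _
  have hclaim : ∀ n, (T : Set G) ^ n ⊆ (F : Set G) ^ n * (R1 : Set G) := by
    intro n
    induction n with
    | zero =>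
      intro x hx
      simp only [pow_zero, Set.mem_one] at hx; subst hx
      exact ⟨1, Set.mem_one.mpr rfl, 1, by simp [hR1], by simp⟩
    | succ n ih =>
      intro x hx
      rw [pow_succ] at hx
      obtain ⟨u, hu, t, ht, hx'⟩ := hx
      have hx'' : u * t = x := hx'
      subst hx''
      obtain ⟨h, hh, r, hr, hur⟩ := ih hu
      have hur' : h * r = u := hur
      subst hur'
      have hfF : r * t * (ρ (r * t))⁻¹ ∈ F := by
        simp only [hF, Finset.mem_image]
        exact ⟨(r, t), Finset.mem_product.mpr ⟨Finset.mem_coe.mp hr, Finset.mem_coe.mp ht⟩, rfl⟩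
      refine ⟨h * (r * t * (ρ (r * t))⁻¹), ?_, ρ (r * t), ?_, ?_⟩
      · rw [pow_succ]
        exact Set.mul_mem_mul hh (Finset.mem_coe.mpr hfF)
      · simp only [hR1, Finset.coe_insert, Set.mem_insert_iff]
        right
        simp only [Set.Finite.coe_toFinset]
        exact ⟨r * t, rfl⟩
      · show h * (r * t * (ρ (r * t))⁻¹) * ρ (r * t) = h * r * t
        group
  obtain ⟨c, hc⟩ := nilpotent_iff_lowerCentralSeries.mp hnil
  set F' : Finset ↥N := F.attach.image (fun x => (⟨x.1, hFN x.1 x.2⟩ : ↥N)) with hF'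
  have hF'im : F'.image (N.subtype) = F := by
    apply Finset.coe_injective
    ext x
    simp only [Finset.coe_image, Set.mem_image, hF', Finset.mem_coe, Finset.mem_image,
      Finset.mem_attach]
    constructor
    · rintro ⟨y, ⟨z, _, rfl⟩, rfl⟩; exact z.2
    · intro hx; exact ⟨⟨x, hFN x hx⟩, ⟨⟨x, hx⟩, trivial, rfl⟩, rfl⟩
  obtain ⟨C, d, hCd⟩ := growth_of_lcs (G := ↥N) c c hc 0 (by omega) F'
    (by intro x _; simp)
  refine ⟨C * R1.card, d, fun n => ?_⟩
  have hsub : (T ^ n : Finset G) ⊆ F ^ n * R1 := by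
    rw [← Finset.coe_subset, Finset.coe_pow, Finset.coe_mul, Finset.coe_pow]
    exact hclaim n
  have htrans : (F ^ n).card = (F' ^ n).card := by
    rw [← hF'im, ← coe_image_pow, Finset.card_image_of_injective _ N.subtype_injective]
  calc (T ^ n).card ≤ (F ^ n * R1).card := Finset.card_le_card hsub
    _ ≤ (F ^ n).card * R1.card := Finset.card_mul_le
    _ = (F' ^ n).card * R1.card := by rw [htrans]
    _ ≤ (C * (n+1)^d) * R1.card := Nat.mul_le_mul_right _ (hCd n)
    _ = C * R1.card * (n+1)^d := by ring

end GrowthAux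

open Pointwise in
/-- The group algebra of a finitely generated nilpotent-by-finite group has polynomially
bounded growth: for any finite-dimensional generating subspace `W` of `k[G]` spanned by
group elements and containing `1`, `dim W^n` is bounded by a polynomial in `n`. -/
theorem stmt5 (k G : Type*) [Field k] [Group G]
    (hGfg : Group.FG G)
    (hGnbf : ∃ N : Subgroup G, N.Normal ∧ Group.IsNilpotent N ∧ N.FiniteIndex)
    (W : Submodule k (MonoidAlgebra k G)) [FiniteDimensional k W]
    (hW1 : (1 : MonoidAlgebra k G) ∈ W)
    (hWgrp : ∃ T : Set G, W = Submodule.span k ((fun g => (MonoidAlgebra.of k G g :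
      MonoidAlgebra k G)) '' T))
    (hWgen : Algebra.adjoin k (W : Set (MonoidAlgebra k G)) = ⊤) :
    ∃ C d : ℕ, ∀ n : ℕ, 1 ≤ n → Module.finrank k ↥(W ^ n) ≤ C * n ^ d := by
  classical
  obtain ⟨N, hNorm, hnil, hfi⟩ := hGnbf
  obtain ⟨T, hT⟩ := hWgrp
  -- the family of group elements is linearly independent in the group algebra
  have hlin : LinearIndependent k (fun g : G => (MonoidAlgebra.of k G g : MonoidAlgebra k G)) := by
    have hb := (MonoidAlgebra.basis G k).linearIndependent
    have : (fun g : G => (MonoidAlgebra.of k G g : MonoidAlgebra k G))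
        = ⇑(MonoidAlgebra.basis G k) := by
      funext g
      rw [MonoidAlgebra.basis_apply]
      rfl
    rwa [this]
  -- T is finite
  have hfT : T.Finite := by
    have hmem : ∀ t : T, (MonoidAlgebra.of k G t : MonoidAlgebra k G) ∈ W := by
      intro t
      rw [hT]
      exact Submodule.subset_span ⟨t, t.2, rfl⟩
    have hlin2 : LinearIndependent k (fun t : T => (⟨MonoidAlgebra.of k G t, hmem t⟩ : ↥W)) := by
      refine LinearIndependent.of_comp W.subtype ?_
      exact (hlin.comp Subtype.val Subtype.val_injective)
    have : Finite T := hlin2.finite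
    exact Set.finite_coe_iff.mp this
  set Tfin : Finset G := hfT.toFinset with hTfin
  haveI := hNorm
  obtain ⟨C, d, hCd⟩ := GrowthAux.growth_virtually_nilpotent (G := G) (N := N) hnil hfi Tfin
  refine ⟨C * 2 ^ d, d, fun n hn => ?_⟩
  -- identify W ^ n as the span of the group elements in T ^ n
  have hWn : W ^ n = Submodule.span k
      ((MonoidAlgebra.of k G : G →* MonoidAlgebra k G) '' ((Tfin : Set G) ^ n)) := by
    rw [hT, Submodule.span_pow, ← Set.image_pow (MonoidAlgebra.of k G : G →* MonoidAlgebra k G),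
      hfT.coe_toFinset]
  have hrank : Module.finrank k ↥(W ^ n) ≤ (Tfin ^ n).card := by
    rw [hWn, ← Finset.coe_pow, ← Finset.coe_image]
    calc Module.finrank k ↥(Submodule.span k (((Tfin ^ n).image
          (MonoidAlgebra.of k G) : Finset (MonoidAlgebra k G)) : Set (MonoidAlgebra k G)))
        ≤ ((Tfin ^ n).image (MonoidAlgebra.of k G)).card := finrank_span_finset_le_card _
      _ ≤ (Tfin ^ n).card := Finset.card_image_le
  calc Module.finrank k ↥(W ^ n) ≤ (Tfin ^ n).card := hrank
    _ ≤ C * (n + 1) ^ d := hCd n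
    _ ≤ C * (2 * n) ^ d := by
        refine Nat.mul_le_mul_left _ (Nat.pow_le_pow_left (by omega) _)
    _ = C * 2 ^ d * n ^ d := by rw [Nat.mul_pow]; ring
end

section
/- Let R ⊆ S be rings with S a finite free normalizing extension of R, and let M be a simple left S-module. Then M, viewed as a left R-module, is semisimple of finite length. -/
section Aux

variable {R : Type*} [Ring R]

/-- A finite product of semisimple modules is semisimple. -/
lemma FJ_pi_semisimple {ι : Type*} [Finite ι] (N : ι → Type*)
    [∀ i, AddCommGroup (N i)] [∀ i, Module R (N i)] [∀ i, IsSemisimpleModule R (N i)] :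
    IsSemisimpleModule R (∀ i, N i) := by
  classical
  cases nonempty_fintype ι
  exact isSemisimpleModule_of_isSemisimpleModule_submodule'
    (p := fun i => LinearMap.range (LinearMap.single R N i))
    (fun i => IsSemisimpleModule.range _)
    (by simp_rw [LinearMap.range_eq_map, Submodule.iSup_map_single, Submodule.pi_top])

lemma FJ_semisimple_subsingleton (Q : Type*) [AddCommGroup Q] [Module R Q] [Subsingleton Q] :
    IsSemisimpleModule R Q := by
  haveI : Subsingleton (Submodule R Q) :=
    ⟨fun a b => by
      ext v
      have : v = 0 := Subsingleton.elim v 0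
      simp [this]⟩
  exact (isSemisimpleModule_iff R Q).mpr Subsingleton.instComplementedLattice

lemma FJ_finLength_subsingleton (Q : Type*) [AddCommGroup Q] [Module R Q] [Subsingleton Q] :
    IsFiniteLength R Q := .of_subsingleton

lemma FJ_finLength_simple (Q : Type*) [AddCommGroup Q] [Module R Q] [IsSimpleModule R Q] :
    IsFiniteLength R Q := by
  haveI : IsSimpleModule R (Q ⧸ (⊥ : Submodule R Q)) :=
    IsSimpleModule.congr (Submodule.quotEquivOfEqBot ⊥ rfl)
  exact .of_simple_quotient (N := (⊥ : Submodule R Q)) .of_subsingleton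

/-- Main auxiliary form of Formanek–Jategaonkar, stated for an arbitrary
`Module R M` instance compatible with `f`. -/
theorem FJ_aux {R S : Type*} [Ring R] [Ring S] (f : R →+* S)
    {n : ℕ} (x : Fin n → S)
    (hnorm : ∀ i : Fin n, {s : S | ∃ r : R, s = x i * f r} = {s : S | ∃ r : R, s = f r * x i})
    (hsurj : Function.Surjective (fun c : Fin n → R => ∑ i, f (c i) * x i))
    {M : Type*} [AddCommGroup M] [Module S M] [IsSimpleModule S M]
    [Module R M] (hsmul : ∀ (r : R) (v : M), r • v = f r • v) :
    IsSemisimpleModule R M ∧ IsFiniteLength R M := by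
  classical
  -- both directions of the normalizing condition
  have h1 : ∀ (i : Fin n) (r : R), ∃ r' : R, x i * f r = f r' * x i := by
    intro i r
    have : x i * f r ∈ {s : S | ∃ r : R, s = x i * f r} := ⟨r, rfl⟩
    rw [hnorm i] at this
    exact this
  have h2 : ∀ (i : Fin n) (r' : R), ∃ r : R, f r' * x i = x i * f r := by
    intro i r'
    have : f r' * x i ∈ {s : S | ∃ r : R, s = f r * x i} := ⟨r', rfl⟩
    rw [← hnorm i] at this
    exact this
  haveI : Nontrivial M := IsSimpleModule.nontrivial S M
  obtain ⟨m, hm⟩ := exists_ne (0 : M)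
  -- every element of M is of the form s • m
  have hsp : ∀ v : M, ∃ s : S, s • m = v := by
    intro v
    have hne : Submodule.span S {m} ≠ ⊥ := by
      intro h
      exact hm (by simpa [h] using Submodule.mem_span_singleton_self (R := S) m)
    have htop : Submodule.span S {m} = ⊤ :=
      (eq_bot_or_eq_top (Submodule.span S {m})).resolve_left hne
    have : v ∈ Submodule.span S {m} := htop ▸ Submodule.mem_top
    exact Submodule.mem_span_singleton.mp this
  -- M is finitely generated over R
  have hfg : (⊤ : Submodule R M).FG := by
    refine ⟨Finset.univ.image (fun i => x i • m), ?_⟩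
    apply le_antisymm le_top
    intro v _
    obtain ⟨s, hs⟩ := hsp v
    obtain ⟨c, hc⟩ := hsurj s
    have : v = ∑ i, c i • (x i • m) := by
      rw [← hs, ← hc]
      simp only [Finset.sum_smul]
      refine Finset.sum_congr rfl fun i _ => ?_
      rw [mul_smul, hsmul]
    rw [this]
    refine Submodule.sum_mem _ fun i _ => Submodule.smul_mem _ _ ?_
    apply Submodule.subset_span
    simp only [Finset.coe_image, Finset.coe_univ, Set.image_univ]
    exact ⟨i, rfl⟩
  haveI : IsCoatomic (Submodule R M) :=
    CompleteLattice.coatomic_of_top_compact ((Submodule.fg_iff_compact _).mp hfg)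
  obtain ⟨N, hN⟩ : ∃ N : Submodule R M, IsCoatom N := by
    rcases eq_top_or_exists_le_coatom (⊥ : Submodule R M) with h | ⟨N, hN, -⟩
    · exact absurd (h ▸ Submodule.mem_top : m ∈ (⊥ : Submodule R M)) (by simpa using hm)
    · exact ⟨N, hN⟩
  -- the submodules P i
  let P : Fin n → Submodule R M := fun i =>
    { carrier := {v | x i • v ∈ N}
      add_mem' := fun {a b} ha hb => by
        simp only [Set.mem_setOf_eq, smul_add] at *
        exact N.add_mem ha hb
      zero_mem' := by simp
      smul_mem' := fun r v hv => by
        obtain ⟨r', hr'⟩ := h1 i r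
        show x i • (r • v) ∈ N
        rw [hsmul, ← mul_smul, hr', mul_smul, ← hsmul]
        exact N.smul_mem r' hv }
  have memP : ∀ (i : Fin n) (v : M), v ∈ P i ↔ x i • v ∈ N := fun i v => Iff.rfl
  -- the intersection of the P i is zero
  have hinf : (⨅ i, P i) = ⊥ := by
    -- the largest S-submodule inside N
    let T : Submodule S M :=
      { carrier := {v | ∀ s : S, s • v ∈ N}
        add_mem' := fun {a b} ha hb s => by
          rw [smul_add]; exact N.add_mem (ha s) (hb s)
        zero_mem' := fun s => by simp
        smul_mem' := fun s v hv t => by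
          rw [← mul_smul]; exact hv (t * s) }
    have hT : T = ⊥ := by
      refine (eq_bot_or_eq_top T).resolve_right fun h => hN.1 ?_
      rw [Submodule.eq_top_iff']
      intro v
      have : v ∈ T := h ▸ Submodule.mem_top
      simpa using this 1
    rw [eq_bot_iff]
    intro v hv
    have hvT : v ∈ T := by
      intro s
      obtain ⟨c, hc⟩ := hsurj s
      rw [← hc]
      show (∑ i, f (c i) * x i) • v ∈ N
      rw [Finset.sum_smul]
      refine N.sum_mem fun i _ => ?_
      rw [mul_smul, ← hsmul]
      exact N.smul_mem _ ((Submodule.mem_iInf P).mp hv i)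
    rw [hT] at hvT
    exact hvT
  -- each P i is either ⊤ or a coatom
  have hP : ∀ i, P i = ⊤ ∨ IsCoatom (P i) := by
    intro i
    by_cases hPi : P i = ⊤
    · exact Or.inl hPi
    refine Or.inr ⟨hPi, ?_⟩
    intro Q hQ
    obtain ⟨q₀, hq₀Q, hq₀P⟩ := SetLike.exists_of_lt hQ
    -- the image of Q under v ↦ x i • v, pulled back mod N
    let W : Submodule R M :=
      { carrier := {w | ∃ q ∈ Q, w - x i • q ∈ N}
        add_mem' := by
          rintro a b ⟨qa, hqa, ha⟩ ⟨qb, hqb, hb⟩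
          refine ⟨qa + qb, Q.add_mem hqa hqb, ?_⟩
          rw [smul_add]
          have heq : a + b - (x i • qa + x i • qb) = (a - x i • qa) + (b - x i • qb) := by abel
          rw [heq]
          exact N.add_mem ha hb
        zero_mem' := ⟨0, Q.zero_mem, by simp⟩
        smul_mem' := by
          rintro r w ⟨q, hqQ, hq⟩
          obtain ⟨r'', hr''⟩ := h2 i r
          refine ⟨r'' • q, Q.smul_mem _ hqQ, ?_⟩
          rw [hsmul r w, hsmul r'' q, ← mul_smul, ← hr'', mul_smul, ← smul_sub, ← hsmul]
          exact N.smul_mem r hq }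
    have hNW : N < W := by
      refine lt_of_le_of_ne (fun w hw => ⟨0, Q.zero_mem, by simpa using hw⟩) fun hEq => ?_
      have : x i • q₀ ∈ W := ⟨q₀, hq₀Q, by simp⟩
      rw [← hEq] at this
      exact hq₀P this
    have hW : W = ⊤ := hN.2 W hNW
    rw [Submodule.eq_top_iff']
    intro v
    have : x i • v ∈ W := hW ▸ Submodule.mem_top
    obtain ⟨q, hqQ, hsub⟩ := this
    have : v - q ∈ P i := by
      show x i • (v - q) ∈ N
      rw [smul_sub]
      exact hsub
    have : v - q ∈ Q := hQ.le this
    simpa using Q.add_mem this hqQ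
  -- each quotient M ⧸ P i is semisimple and of finite length
  have hQuot : ∀ i, IsSemisimpleModule R (M ⧸ P i) ∧ IsFiniteLength R (M ⧸ P i) := by
    intro i
    rcases hP i with h | h
    · haveI : Subsingleton (M ⧸ P i) :=
        Submodule.Quotient.subsingleton_iff.mpr h
      exact ⟨FJ_semisimple_subsingleton _, FJ_finLength_subsingleton _⟩
    · haveI : IsSimpleModule R (M ⧸ P i) := isSimpleModule_iff_isCoatom.mpr h
      exact ⟨inferInstance, FJ_finLength_simple _⟩
  haveI : ∀ i, IsSemisimpleModule R (M ⧸ P i) := fun i => (hQuot i).1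
  haveI : ∀ i, IsNoetherian R (M ⧸ P i) := fun i =>
    (isFiniteLength_iff_isNoetherian_isArtinian.mp (hQuot i).2).1
  haveI : ∀ i, IsArtinian R (M ⧸ P i) := fun i =>
    (isFiniteLength_iff_isNoetherian_isArtinian.mp (hQuot i).2).2
  -- the embedding of M into the product of the quotients
  let φ : M →ₗ[R] ∀ i, M ⧸ P i := LinearMap.pi (fun i => (P i).mkQ)
  have hφ : Function.Injective φ := by
    rw [← LinearMap.ker_eq_bot, LinearMap.ker_pi]
    simpa [Submodule.ker_mkQ] using hinf
  haveI : IsSemisimpleModule R (∀ i, M ⧸ P i) := FJ_pi_semisimple _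
  haveI : IsNoetherian R M := isNoetherian_of_injective φ hφ
  haveI : IsArtinian R M := isArtinian_of_injective φ hφ
  refine ⟨?_, isFiniteLength_iff_isNoetherian_isArtinian.mpr ⟨‹_›, ‹_›⟩⟩
  haveI : IsSemisimpleModule R (LinearMap.range φ) := inferInstance
  exact IsSemisimpleModule.congr (LinearEquiv.ofInjective φ hφ)

end Aux

/-- (Formanek–Jategaonkar)  Let `R ⊆ S` be rings with `S` a finite free normalizing
extension of `R`: `S = Σᵢ R xᵢ` with `xᵢ R = R xᵢ`, the representation being unique
(freeness).  If `M` is a simple left `S`-module, then `M` viewed as a left `R`-module is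
semisimple of finite length. -/
theorem stmt11 (R S : Type*) [Ring R] [Ring S] (f : R →+* S)
    (hf : Function.Injective f)
    (n : ℕ) (x : Fin n → S)
    (hnorm : ∀ i : Fin n, {s : S | ∃ r : R, s = x i * f r} = {s : S | ∃ r : R, s = f r * x i})
    (hfree : Function.Bijective (fun c : Fin n → R => ∑ i, f (c i) * x i))
    (M : Type*) [AddCommGroup M] [Module S M] [IsSimpleModule S M] :
    letI : Module R M := Module.compHom M f
    IsSemisimpleModule R M ∧ IsFiniteLength R M := by
  letI : Module R M := Module.compHom M f
  exact FJ_aux f x hnorm hfree.surjective (fun r v => rfl)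
end

section
/- Let k be a field, R a k-algebra, and G a polycyclic-by-finite group acting on R by k-algebra automorphisms. Then there is a chain of subalgebras R = R_0 ⊆ R_1 ⊆ ... ⊆ R_m = R # k[G] such that for each i, either R_{i+1} is isomorphic to a skew Laurent extension R_i[x, x^{-1}; σ] for some automorphism σ of R_i, or R_{i+1} is a finite free normalizing extension of R_i. Consequently, if R is left noetherian then R # k[G] is left noetherian. -/
open Pointwise


theorem aux_fin {k S : Type*} [Field k] [Ring S] [Algebra k S]
    (A B : Subalgebra k S) (hAB : A ≤ B) (n : ℕ) (xs : Fin n → S)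
    (hxs : ∀ j, xs j ∈ B)
    (hsurj : Set.range (fun c : Fin n → ↥A => ∑ j, (c j : S) * xs j) = (B : Set S))
    (hA : IsNoetherianRing ↥A) : IsNoetherianRing ↥B := by
  classical
  letI : Module ↥A ↥B := Module.compHom ↥B (Subalgebra.inclusion hAB).toRingHom
  have hsmul : ∀ (a : ↥A) (b : ↥B), ((a • b : ↥B) : S) = (a : S) * (b : S) := fun a b => rfl
  letI : IsScalarTower ↥A ↥B ↥B := ⟨fun a b c => by
    apply Subtype.ext
    rw [smul_eq_mul, smul_eq_mul]
    rw [Subalgebra.coe_mul, hsmul, hsmul, Subalgebra.coe_mul, mul_assoc]⟩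
  haveI : IsNoetherianRing ↥A := hA
  haveI : Module.Finite ↥A ↥B := by
    refine ⟨⟨(Finset.univ : Finset (Fin n)).image (fun j => (⟨xs j, hxs j⟩ : ↥B)), ?_⟩⟩
    rw [eq_top_iff]
    rintro b -
    have hb : (b : S) ∈ (B : Set S) := b.2
    rw [← hsurj] at hb
    obtain ⟨c, hc⟩ := hb
    have hbe : b = ∑ j, c j • (⟨xs j, hxs j⟩ : ↥B) := by
      apply Subtype.ext
      rw [← hc, AddSubmonoidClass.coe_finset_sum]
      exact Finset.sum_congr rfl fun j _ => rfl
    rw [hbe]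
    apply Submodule.sum_mem
    intro j _
    apply Submodule.smul_mem
    apply Submodule.subset_span
    simp only [Finset.coe_image, Set.mem_image, Finset.mem_coe, Finset.mem_univ]
    exact ⟨j, trivial, rfl⟩
  exact isNoetherian_of_tower ↥A (isNoetherian_of_isNoetherianRing_of_finite ↥A ↥B)


set_option maxHeartbeats 1000000 in
theorem aux_laurent {k S : Type*} [Field k] [Ring S] [Algebra k S]
    (A B : Subalgebra k S) (hAB : A ≤ B) (x : Sˣ)
    (hx : (x : S) ∈ B) (hxi : ((x⁻¹ : Sˣ) : S) ∈ B)
    (hconj : ∀ r ∈ A, (x : S) * r * ((x⁻¹ : Sˣ) : S) ∈ A ∧ ((x⁻¹ : Sˣ) : S) * r * (x : S) ∈ A)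
    (hinj : Function.Injective
      (fun f : ℤ →₀ ↥A => f.sum fun j r => (r : S) * ((x ^ j : Sˣ) : S)))
    (hrange : Set.range
      (fun f : ℤ →₀ ↥A => f.sum fun j r => (r : S) * ((x ^ j : Sˣ) : S)) = (B : Set S))
    (hA : IsNoetherianRing ↥A) : IsNoetherianRing ↥B := by
  classical
  -- the powers of x in S
  set X : ℤ → S := fun j => ((x ^ j : Sˣ) : S) with hXdef
  have hXadd : ∀ i j, X i * X j = X (i + j) := by
    intro i j; simp only [hXdef]; rw [← Units.val_mul, ← zpow_add]
  have hXadd' : ∀ (i j : ℤ) (s : S), X i * (X j * s) = X (i + j) * s := by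
    intro i j s; rw [← mul_assoc, hXadd]
  have hXzero : X 0 = 1 := by simp [hXdef]
  have hXinv : ∀ j, (((x ^ j)⁻¹ : Sˣ) : S) = X (-j) := by
    intro j; simp only [hXdef]; rw [← zpow_neg]
  have hX1 : (x : S) = X 1 := by simp [hXdef]
  have hXm1 : ((x⁻¹ : Sˣ) : S) = X (-1) := by
    simp only [hXdef]; norm_num
  -- conjugation by powers of x preserves A
  have hCM : ∀ j : ℤ, (∀ a ∈ A, X j * a * X (-j) ∈ A) ∧ (∀ a ∈ A, X (-j) * a * X j ∈ A) := by
    intro j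
    induction j using Int.induction_on with
    | zero => constructor <;> intro a ha <;> simpa [hXzero] using ha
    | succ p ih =>
      constructor
      · intro a ha
        have h2 := (hconj _ (ih.1 a ha)).1
        rw [hX1, hXm1] at h2
        have he : X ((p : ℤ) + 1) * a * X (-((p : ℤ) + 1))
            = X 1 * (X p * a * X (-p)) * X (-1) := by
          rw [show ((p : ℤ) + 1) = 1 + p by ring, ← hXadd 1 p,
            show (-(1 + (p : ℤ))) = -p + -1 by ring, ← hXadd (-p) (-1)]
          simp only [mul_assoc]
        rw [he]; exact h2
      · intro a ha
        have h2 := (hconj _ (ih.2 a ha)).2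
        rw [hX1, hXm1] at h2
        have he : X (-((p : ℤ) + 1)) * a * X ((p : ℤ) + 1)
            = X (-1) * (X (-p) * a * X p) * X 1 := by
          rw [show ((p : ℤ) + 1) = p + 1 by ring, ← hXadd p 1,
            show (-((p : ℤ) + 1)) = -1 + -p by ring, ← hXadd (-1) (-p)]
          simp only [mul_assoc]
        rw [he]; exact h2
    | pred p ih =>
      constructor
      · intro a ha
        have h2 := (hconj _ (ih.1 a ha)).2
        rw [hX1, hXm1] at h2
        have he : X (-(p : ℤ) - 1) * a * X (-(-(p : ℤ) - 1))
            = X (-1) * (X (-p) * a * X (-(-p))) * X 1 := by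
          rw [show (-(-(p:ℤ)-1)) = (-(-p)) + 1 by ring, ← hXadd (-(-p)) 1,
            show (-(p:ℤ) - 1) = -1 + -p by ring, ← hXadd (-1) (-p)]
          simp only [mul_assoc]
        rw [he]; exact h2
      · intro a ha
        have h2 := (hconj _ (ih.2 a ha)).1
        rw [hX1, hXm1] at h2
        have he : X (-(-(p:ℤ) - 1)) * a * X (-(p:ℤ) - 1)
            = X 1 * (X (-(-p)) * a * X (-p)) * X (-1) := by
          rw [show (-(-(p:ℤ)-1)) = 1 + (-(-p)) by ring, ← hXadd 1 (-(-p)),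
            show (-(p:ℤ) - 1) = -p + -1 by ring, ← hXadd (-p) (-1)]
          simp only [mul_assoc]
        rw [he]; exact h2
  -- twisted coefficients
  set conj : ℤ → ↥A → ↥A := fun j a => ⟨X j * a * X (-j), (hCM j).1 a a.2⟩ with hconjdef
  have hconj_val : ∀ j (a : ↥A), ((conj j a : ↥A) : S) = X j * a * X (-j) := fun _ _ => rfl
  have hconj_zero : ∀ j, conj j 0 = 0 := by
    intro j; apply Subtype.ext; simp [hconj_val]
  have hconj_add : ∀ j (a b : ↥A), conj j (a + b) = conj j a + conj j b := by
    intro j a b; apply Subtype.ext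
    show X j * ((a : S) + (b : S)) * X (-j) = X j * a * X (-j) + X j * b * X (-j)
    rw [mul_add, add_mul]
  have hconj_conj : ∀ i j (a : ↥A), conj i (conj j a) = conj (i + j) a := by
    intro i j a; apply Subtype.ext
    show X i * (X j * a * X (-j)) * X (-i) = X (i + j) * a * X (-(i + j))
    rw [show (-(i + j) : ℤ) = -j + -i by ring, ← hXadd (-j) (-i), ← hXadd i j]
    simp only [mul_assoc]
  have hconj_id : ∀ a : ↥A, conj 0 a = a := by
    intro a; apply Subtype.ext
    show X 0 * a * X (-0) = (a : S)
    rw [neg_zero, hXzero, one_mul, mul_one]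
  have hconj_injective : ∀ j : ℤ, Function.Injective (conj j) := by
    intro j a b h
    have := congrArg (conj (-j)) h
    rwa [hconj_conj, hconj_conj, show (-j + j : ℤ) = 0 by ring, hconj_id, hconj_id] at this
  have hconj_eq_zero : ∀ j (a : ↥A), conj j a = 0 ↔ a = 0 := by
    intro j a
    constructor
    · intro h; apply hconj_injective j; rw [h, hconj_zero]
    · rintro rfl; exact hconj_zero j
  have hconj_mul : ∀ j (a b : ↥A), conj j (a * b) = conj j a * conj j b := by
    intro j a b; apply Subtype.ext
    show X j * ((a : S) * (b : S)) * X (-j) = (X j * a * X (-j)) * (X j * b * X (-j))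
    simp only [mul_assoc, hXadd']
    rw [show (-j + j : ℤ) = 0 by ring, hXzero, one_mul]
  -- the additive equivalence E : (ℤ →₀ ↥A) ≃+ ↥B
  set F0 : (ℤ →₀ ↥A) → S := fun f => f.sum fun j r => (r : S) * X j with hF0def
  have hF0eq : (fun f : ℤ →₀ ↥A => f.sum fun j r => (r : S) * ((x ^ j : Sˣ) : S)) = F0 := rfl
  have hF0add : ∀ f g, F0 (f + g) = F0 f + F0 g := by
    intro f g
    exact Finsupp.sum_add_index' (by intro j; show ((0 : ↥A) : S) * X j = 0; simp)
      (by intro j a b; show ((a : S) + (b : S)) * X j = _; rw [add_mul])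
  have hF0single : ∀ j (r : ↥A), F0 (Finsupp.single j r) = (r : S) * X j := by
    intro j r
    exact Finsupp.sum_single_index (by show ((0 : ↥A) : S) * X j = 0; simp)
  have hF0mem : ∀ f, F0 f ∈ B := by
    intro f
    have : F0 f ∈ (B : Set S) := by rw [← hrange]; exact ⟨f, rfl⟩
    exact this
  have hbij : Function.Bijective (fun f : ℤ →₀ ↥A => (⟨F0 f, hF0mem f⟩ : ↥B)) := by
    constructor
    · intro f g h
      apply hinj
      exact congrArg Subtype.val h
    · rintro ⟨s, hs⟩
      have : s ∈ (B : Set S) := hs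
      rw [← hrange] at this
      obtain ⟨f, hf⟩ := this
      exact ⟨f, Subtype.ext hf⟩
  set E : (ℤ →₀ ↥A) ≃+ ↥B :=
    AddEquiv.mk' (Equiv.ofBijective _ hbij) (fun f g => Subtype.ext (hF0add f g)) with hEdef
  have hEval : ∀ f, ((E f : ↥B) : S) = F0 f := fun f => rfl
  set cr : ↥B → (ℤ →₀ ↥A) := fun b => E.symm b with hcrdef
  have hcr_add : ∀ b b', cr (b + b') = cr b + cr b' := fun b b' => map_add E.symm b b'
  have hcr_sub : ∀ b b', cr (b - b') = cr b - cr b' := fun b b' => map_sub E.symm b b'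
  have hcr_zero : cr 0 = 0 := map_zero E.symm
  have hEcr : ∀ b, E (cr b) = b := fun b => E.apply_symm_apply b
  have hcrE : ∀ f, cr (E f) = f := fun f => E.symm_apply_apply f
  -- distinguished elements
  set xB : ↥B := ⟨(x : S), hx⟩ with hxBdef
  set incl : ↥A → ↥B := fun a => ⟨(a : S), hAB a.2⟩ with hincldef
  -- left multiplication by elements of A is coefficientwise
  have hmulA : ∀ (a : ↥A) (f : ℤ →₀ ↥A),
      incl a * E f = E (Finsupp.mapRange (fun r => a * r) (mul_zero a) f) := by
    intro a f
    induction f using Finsupp.induction_linear with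
    | zero => apply Subtype.ext; simp [hEval, Finsupp.mapRange_zero, map_zero E, hF0def]
    | add f g hf hg =>
      rw [Finsupp.mapRange_add (fun r s => mul_add a r s), map_add E, map_add E, mul_add, hf, hg]
    | single j r =>
      rw [Finsupp.mapRange_single]
      apply Subtype.ext
      show (a : S) * (((E (Finsupp.single j r)) : ↥B) : S) = _
      rw [hEval, hEval, hF0single, hF0single]
      show (a : S) * ((r : S) * X j) = ((a : S) * (r : S)) * X j
      rw [mul_assoc]
  have hcrA : ∀ (a : ↥A) (b : ↥B) (j : ℤ), cr (incl a * b) j = a * cr b j := by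
    intro a b j
    conv_lhs => rw [← hEcr b]
    rw [hmulA, hcrE, Finsupp.mapRange_apply]
  -- left multiplication by x shifts and twists coefficients
  have hmulX : ∀ f : ℤ →₀ ↥A, xB * E f
      = E (Finsupp.mapDomain (· + 1) (Finsupp.mapRange (conj 1) (hconj_zero 1) f)) := by
    intro f
    induction f using Finsupp.induction_linear with
    | zero => apply Subtype.ext; simp [hEval, Finsupp.mapRange_zero, Finsupp.mapDomain_zero,
        map_zero E, hF0def]
    | add f g hf hg =>
      rw [Finsupp.mapRange_add (fun r s => hconj_add 1 r s), Finsupp.mapDomain_add,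
        map_add E, map_add E, mul_add, hf, hg]
    | single j r =>
      rw [Finsupp.mapRange_single, Finsupp.mapDomain_single]
      apply Subtype.ext
      show (x : S) * (((E (Finsupp.single j r)) : ↥B) : S) = _
      rw [hEval, hEval, hF0single, hF0single, hconj_val, hX1]
      simp only [mul_assoc, hXadd, hXadd']
      rw [show (-1 + (j + 1) : ℤ) = j by ring]
  have hcrX' : ∀ (b : ↥B) (j : ℤ), cr (xB * b) (j + 1) = conj 1 (cr b j) := by
    intro b j
    conv_lhs => rw [← hEcr b]
    rw [hmulX, hcrE, Finsupp.mapDomain_apply (add_left_injective 1), Finsupp.mapRange_apply]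
  have hcrX : ∀ (b : ↥B) (j : ℤ), cr (xB * b) j = conj 1 (cr b (j - 1)) := by
    intro b j
    have h := hcrX' b (j - 1)
    rwa [sub_add_cancel] at h
  -- power shifts
  have hcrXpow : ∀ (kk : ℕ) (b : ↥B) (j : ℤ), cr (xB ^ kk * b) j = 0 ↔ cr b (j - kk) = 0 := by
    intro kk
    induction kk with
    | zero => intro b j; rw [pow_zero, one_mul]; norm_num
    | succ p ih =>
      intro b j
      rw [pow_succ, mul_assoc, ih (xB * b) j, hcrX, hconj_eq_zero,
        show (j - (p : ℤ) - 1) = j - ((p + 1 : ℕ) : ℤ) by push_cast; ring]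
  have hlow : ∀ b : ↥B, ∃ kk : ℕ, ∀ j : ℤ, j < 0 → cr (xB ^ kk * b) j = 0 := by
    intro b
    set kk := (cr b).support.sup (fun j => (-j).toNat) with hkk
    refine ⟨kk, ?_⟩
    intro j hj
    rw [hcrXpow]
    by_contra h
    have hmem : j - (kk : ℤ) ∈ (cr b).support := Finsupp.mem_support_iff.2 h
    have h2 : (-(j - (kk : ℤ))).toNat ≤ kk := hkk ▸ Finset.le_sup (f := fun j : ℤ => (-j).toNat) hmem
    omega
  have hhigh : ∀ b : ↥B, ∃ n : ℕ, ∀ j : ℤ, (n : ℤ) < j → cr b j = 0 := by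
    intro b
    refine ⟨(cr b).support.sup Int.toNat, ?_⟩
    intro j hj
    by_contra h
    have hmem : j ∈ (cr b).support := Finsupp.mem_support_iff.2 h
    have h2 := Finset.le_sup (f := Int.toNat) hmem
    omega
  -- recovery of b from xB ^ kk * b
  have hrecover : ∀ (I : Submodule ↥B ↥B) (kk : ℕ) (b : ↥B), xB ^ kk * b ∈ I → b ∈ I := by
    intro I kk b hmem
    set y : ↥B := ⟨((x⁻¹ : Sˣ) : S), hxi⟩ with hydef
    have hyx : y * xB = 1 := Subtype.ext (x.inv_mul)
    have hxy : xB * y = 1 := Subtype.ext (x.mul_inv)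
    have hyxpow : ∀ m : ℕ, y ^ m * xB ^ m = 1 := by
      intro m
      induction m with
      | zero => simp
      | succ p ih =>
        rw [pow_succ y, pow_succ', mul_assoc, ← mul_assoc y, hyx, one_mul, ih]
    have : b = y ^ kk * (xB ^ kk * b) := by rw [← mul_assoc, hyxpow, one_mul]
    rw [this]
    have := I.smul_mem (y ^ kk) hmem
    rwa [smul_eq_mul] at this
  -- leading coefficient ideals
  set LC : Submodule ↥B ↥B → ℕ → Submodule ↥A ↥A := fun I n =>
    { carrier := {a | ∃ b, b ∈ I ∧ (∀ j : ℤ, j < 0 → cr b j = 0) ∧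
        (∀ j : ℤ, (n : ℤ) < j → cr b j = 0) ∧ conj (-(n : ℤ)) (cr b n) = a}
      add_mem' := by
        rintro a a' ⟨b, hbI, hbl, hbh, rfl⟩ ⟨b', hbI', hbl', hbh', rfl⟩
        refine ⟨b + b', I.add_mem hbI hbI', ?_, ?_, ?_⟩
        · intro j hj; rw [hcr_add, Finsupp.add_apply, hbl j hj, hbl' j hj, add_zero]
        · intro j hj; rw [hcr_add, Finsupp.add_apply, hbh j hj, hbh' j hj, add_zero]
        · rw [hcr_add, Finsupp.add_apply, hconj_add]
      zero_mem' := by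
        refine ⟨0, I.zero_mem, ?_, ?_, ?_⟩
        · intro j hj; rw [hcr_zero]; rfl
        · intro j hj; rw [hcr_zero]; rfl
        · rw [hcr_zero]; show conj _ 0 = 0; exact hconj_zero _
      smul_mem' := by
        rintro c a ⟨b, hbI, hbl, hbh, rfl⟩
        refine ⟨incl (conj n c) * b, ?_, ?_, ?_, ?_⟩
        · have := I.smul_mem (incl (conj n c)) hbI; rwa [smul_eq_mul] at this
        · intro j hj; rw [hcrA, hbl j hj, mul_zero]
        · intro j hj; rw [hcrA, hbh j hj, mul_zero]
        · rw [hcrA, hconj_mul, hconj_conj, show (-(n:ℤ) + n) = 0 by ring, hconj_id]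
          rfl } with hLCdef
  have hLCmem : ∀ (I : Submodule ↥B ↥B) (n : ℕ) (a : ↥A), a ∈ LC I n ↔
      ∃ b, b ∈ I ∧ (∀ j : ℤ, j < 0 → cr b j = 0) ∧
        (∀ j : ℤ, (n : ℤ) < j → cr b j = 0) ∧ conj (-(n : ℤ)) (cr b n) = a := by
    intro I n a; rfl
  -- monotonicity of LC
  have hLCmonoI : ∀ (n : ℕ) (I J : Submodule ↥B ↥B), I ≤ J → LC I n ≤ LC J n := by
    rintro n I J hIJ a ⟨b, hbI, hbl, hbh, rfl⟩
    exact ⟨b, hIJ hbI, hbl, hbh, rfl⟩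
  have hLCmonoN : ∀ (I : Submodule ↥B ↥B) (n : ℕ), LC I n ≤ LC I (n + 1) := by
    rintro I n a ⟨b, hbI, hbl, hbh, rfl⟩
    refine ⟨xB * b, ?_, ?_, ?_, ?_⟩
    · have := I.smul_mem xB hbI; rwa [smul_eq_mul] at this
    · intro j hj; rw [hcrX, hbl (j - 1) (by omega), hconj_zero]
    · intro j hj
      rw [hcrX, hbh (j - 1) (by push_cast at hj ⊢; omega), hconj_zero]
    · rw [hcrX, show (((n + 1 : ℕ) : ℤ) - 1) = (n : ℤ) by push_cast; ring, hconj_conj,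
        show (-((n+1:ℕ):ℤ) + 1) = -(n:ℤ) by push_cast; ring]
  have hLCmonoN' : ∀ (I : Submodule ↥B ↥B) (n m : ℕ), n ≤ m → LC I n ≤ LC I m := by
    intro I n m h
    induction h with
    | refl => exact le_refl _
    | step h ih => exact le_trans ih (hLCmonoN _ _)
  -- determination: equal leading coefficient ideals force equality
  have hkey : ∀ (I J : Submodule ↥B ↥B), I ≤ J → (∀ n, LC I n = LC J n) →
      ∀ n : ℕ, ∀ b, b ∈ J → (∀ j : ℤ, j < 0 → cr b j = 0) →
        (∀ j : ℤ, (n : ℤ) < j → cr b j = 0) → b ∈ I := by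
    intro I J hIJ hLC n
    induction n with
    | zero =>
      intro b hbJ hbl hbh
      have hmem : conj (-(0 : ℕ) : ℤ) (cr b ((0:ℕ) : ℤ)) ∈ LC J 0 := ⟨b, hbJ, hbl, hbh, rfl⟩
      rw [← hLC 0] at hmem
      obtain ⟨g, hgI, hgl, hgh, hglead⟩ := hmem
      have hg : cr g ((0:ℕ):ℤ) = cr b ((0:ℕ):ℤ) := hconj_injective _ hglead
      have hbg : cr b = cr g := by
        ext j
        rcases lt_trichotomy j 0 with h | h | h
        · rw [hbl j h, hgl j h]
        · subst h; exact_mod_cast hg.symm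
        · rw [hbh j (by exact_mod_cast h), hgh j (by exact_mod_cast h)]
      have : b = g := by rw [← hEcr b, hbg, hEcr]
      rw [this]; exact hgI
    | succ p ih =>
      intro b hbJ hbl hbh
      have hmem : conj (-((p+1:ℕ)) : ℤ) (cr b ((p+1:ℕ) : ℤ)) ∈ LC J (p+1) :=
        ⟨b, hbJ, hbl, hbh, rfl⟩
      rw [← hLC (p+1)] at hmem
      obtain ⟨g, hgI, hgl, hgh, hglead⟩ := hmem
      have hg : cr g ((p+1:ℕ):ℤ) = cr b ((p+1:ℕ):ℤ) := hconj_injective _ hglead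
      have h1 : ∀ j : ℤ, j < 0 → cr (b - g) j = 0 := by
        intro j hj; rw [hcr_sub, Finsupp.sub_apply, hbl j hj, hgl j hj, sub_zero]
      have h2 : ∀ j : ℤ, (p : ℤ) < j → cr (b - g) j = 0 := by
        intro j hj
        rw [hcr_sub, Finsupp.sub_apply]
        rcases eq_or_lt_of_le (show (p : ℤ) + 1 ≤ j by omega) with h | h
        · rw [show j = ((p+1:ℕ):ℤ) by push_cast; omega, hg]
          exact sub_self _
        · rw [hbh j (by push_cast; omega), hgh j (by push_cast; omega), sub_zero]
      have hbgI : b - g ∈ I := ih (b - g) (J.sub_mem hbJ (hIJ hgI)) h1 h2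
      have : b = (b - g) + g := by rw [sub_add_cancel]
      rw [this]
      exact I.add_mem hbgI hgI
  have hdet : ∀ (I J : Submodule ↥B ↥B), I ≤ J → (∀ n, LC I n = LC J n) → J ≤ I := by
    intro I J hIJ hLC b hbJ
    obtain ⟨kk, hkk⟩ := hlow b
    obtain ⟨n, hn⟩ := hhigh (xB ^ kk * b)
    have hb' : xB ^ kk * b ∈ J := by
      have := J.smul_mem (xB ^ kk) hbJ; rwa [smul_eq_mul] at this
    exact hrecover I kk b (hkey I J hIJ hLC n (xB ^ kk * b) hb' hkk hn)
  -- conclude by the two-parameter stabilization argument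
  rw [isNoetherianRing_iff]
  rw [← monotone_stabilizes_iff_noetherian]
  intro F
  have hstabA : ∀ D : ℕ →o Submodule ↥A ↥A, ∃ n, ∀ m, n ≤ m → D n = D m :=
    monotone_stabilizes_iff_noetherian.mpr hA
  obtain ⟨N₁, hN₁⟩ := hstabA ⟨fun n => LC (F n) n,
    fun a b hab => le_trans (hLCmonoN' (F a) a b hab) (hLCmonoI b (F a) (F b) (F.mono hab))⟩
  have hdiag : ∀ n m : ℕ, N₁ ≤ n → N₁ ≤ m → LC (F m) n = LC (F N₁) N₁ := by
    intro n m h1 h2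
    apply le_antisymm
    · calc LC (F m) n ≤ LC (F m) (max n m) := hLCmonoN' _ _ _ (le_max_left _ _)
        _ ≤ LC (F (max n m)) (max n m) := hLCmonoI _ _ _ (F.mono (le_max_right _ _))
        _ = LC (F N₁) N₁ := (hN₁ (max n m) (le_trans h1 (le_max_left _ _))).symm
    · calc LC (F N₁) N₁ ≤ LC (F N₁) n := hLCmonoN' _ _ _ h1
        _ ≤ LC (F m) n := hLCmonoI _ _ _ (F.mono h2)
  choose sfun hsfun using fun n : ℕ => hstabA
    ⟨fun m => LC (F m) n, fun a b hab => hLCmonoI n (F a) (F b) (F.mono hab)⟩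
  set N := max N₁ ((Finset.range (N₁ + 1)).sup sfun) with hN
  refine ⟨N, ?_⟩
  intro m hm
  have hNN₁ : N₁ ≤ N := le_max_left _ _
  have hLCeq : ∀ n, LC (F N) n = LC (F m) n := by
    intro n
    rcases le_or_gt N₁ n with h | h
    · rw [hdiag n N h hNN₁, hdiag n m h (le_trans hNN₁ hm)]
    · have hs : sfun n ≤ N :=
        le_trans (Finset.le_sup (Finset.mem_range.2 (by omega))) (le_max_right _ _)
      exact (hsfun n N hs).symm.trans (hsfun n m (le_trans hs hm))
  exact le_antisymm (F.mono hm) (hdet (F N) (F m) (F.mono hm) hLCeq)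



theorem aux_single_support {α M : Type*} [Zero M] (a : α) (m : M) :
    ↑(Finsupp.single a m).support ⊆ ({a} : Set α) := by
  intro g hg
  rw [Finset.mem_coe] at hg
  have h2 := Finsupp.support_single_subset hg
  simpa using h2

theorem aux_add_support {α M : Type*} [AddZeroClass M] (f g : α →₀ M) :
    ↑(f + g).support ⊆ (↑f.support ∪ ↑g.support : Set α) := by
  classical
  intro a ha
  rw [Finset.mem_coe] at ha
  have := Finsupp.support_add ha
  simpa using this

section Smash

variable {k R G S : Type*} [Field k] [Ring R] [Algebra k R] [Group G] [Ring S] [Algebra k S]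
variable (φ : G →* (R ≃ₐ[k] R)) (ι : R →ₐ[k] S) (u : G →* Sˣ)

theorem smash_mulRule (hrel : ∀ (g : G) (r : R), (u g : S) * ι r = ι (φ g r) * (u g : S))
    (g g' : G) (r r' : R) :
    (ι r * (u g : S)) * (ι r' * (u g' : S)) = ι (r * φ g r') * (u (g * g') : S) := by
  rw [map_mul ι, map_mul u, Units.val_mul, mul_assoc (ι r), ← mul_assoc ((u g : S)), hrel,
    mul_assoc, ← mul_assoc (ι r)]

variable (e : (G →₀ R) ≃ₗ[k] S)
variable (he : ∀ (g : G) (r : R), e (Finsupp.single g r) = ι r * (u g : S))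
variable (hrel : ∀ (g : G) (r : R), (u g : S) * ι r = ι (φ g r) * (u g : S))

include he in
theorem smash_symm_single (g : G) (r : R) :
    e.symm (ι r * (u g : S)) = Finsupp.single g r := by
  rw [← he, e.symm_apply_apply]

include he in
theorem smash_expand (s : S) :
    s = ∑ g ∈ (e.symm s).support, ι ((e.symm s) g) * (u g : S) := by
  conv_lhs => rw [← e.apply_symm_apply s, ← Finsupp.sum_single (e.symm s), Finsupp.sum]
  rw [map_sum]
  exact Finset.sum_congr rfl fun g _ => he g _

include he in
theorem smash_symm_u (g : G) : e.symm ((u g : S)) = Finsupp.single g 1 := by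
  rw [show ((u g : S)) = ι 1 * (u g : S) by rw [map_one, one_mul], smash_symm_single ι u e he]

include hrel he in
theorem smash_suppMul (s t : S) (Xs Ys : Set G)
    (hs : ↑(e.symm s).support ⊆ Xs) (ht : ↑(e.symm t).support ⊆ Ys) :
    ↑(e.symm (s * t)).support ⊆ Xs * Ys := by
  classical
  have hsum : s * t = ∑ g ∈ (e.symm s).support, ∑ g' ∈ (e.symm t).support,
      ι ((e.symm s) g * φ g ((e.symm t) g')) * (u (g * g') : S) := by
    conv_lhs => rw [smash_expand ι u e he s, smash_expand ι u e he t]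
    rw [Finset.sum_mul_sum]
    exact Finset.sum_congr rfl fun g _ => Finset.sum_congr rfl fun g' _ =>
      smash_mulRule φ ι u hrel g g' _ _
  have hsymm : e.symm (s * t) = ∑ g ∈ (e.symm s).support, ∑ g' ∈ (e.symm t).support,
      Finsupp.single (g * g') ((e.symm s) g * φ g ((e.symm t) g')) := by
    rw [hsum, map_sum]
    refine Finset.sum_congr rfl fun g _ => ?_
    rw [map_sum]
    exact Finset.sum_congr rfl fun g' _ => smash_symm_single ι u e he _ _
  intro g'' hg''
  rw [Finset.mem_coe, hsymm] at hg''
  have h3 := Finsupp.support_finset_sum hg''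
  rw [Finset.mem_biUnion] at h3
  obtain ⟨g, hg, h4⟩ := h3
  have h5 := Finsupp.support_finset_sum h4
  rw [Finset.mem_biUnion] at h5
  obtain ⟨g', hg', h6⟩ := h5
  have h7 := Finsupp.support_single_subset h6
  rw [Finset.mem_singleton] at h7
  subst h7
  exact Set.mul_mem_mul (hs hg) (ht hg')

/-- The image of `R # k[H]` in `S`, for a subgroup `H ≤ G`. -/
def smashSub (hrel : ∀ (g : G) (r : R), (u g : S) * ι r = ι (φ g r) * (u g : S))
    (he : ∀ (g : G) (r : R), e (Finsupp.single g r) = ι r * (u g : S))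
    (H : Subgroup G) : Subalgebra k S where
  carrier := {s | ↑(e.symm s).support ⊆ (H : Set G)}
  mul_mem' := by
    intro a b ha hb
    refine subset_trans (smash_suppMul φ ι u e he hrel a b _ _ ha hb) ?_
    rw [Set.mul_subset_iff]
    intro x hx y hy
    exact H.mul_mem hx hy
  one_mem' := by
    show ↑(e.symm 1).support ⊆ (H : Set G)
    rw [show (1 : S) = ι 1 * (u 1 : S) by rw [map_one, map_one, Units.val_one, one_mul],
      smash_symm_single ι u e he]
    exact subset_trans (aux_single_support _ _) (Set.singleton_subset_iff.2 H.one_mem)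
  add_mem' := by
    intro a b ha hb
    show ↑(e.symm (a + b)).support ⊆ (H : Set G)
    rw [map_add]
    exact subset_trans (aux_add_support _ _) (Set.union_subset ha hb)
  zero_mem' := by
    show ↑(e.symm 0).support ⊆ (H : Set G)
    rw [map_zero]
    simp
  algebraMap_mem' := by
    intro c
    show ↑(e.symm (algebraMap k S c)).support ⊆ (H : Set G)
    rw [← ι.commutes c,
      show ι (algebraMap k R c) = ι (algebraMap k R c) * (u 1 : S) by
        rw [map_one, Units.val_one, mul_one],
      smash_symm_single ι u e he]
    exact subset_trans (aux_single_support _ _) (Set.singleton_subset_iff.2 H.one_mem)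

theorem smashSub_mem_iota (H : Subgroup G) (r : R) : ι r ∈ smashSub φ ι u e hrel he H := by
  show ↑(e.symm (ι r)).support ⊆ (H : Set G)
  rw [show ι r = ι r * (u 1 : S) by rw [map_one, Units.val_one, mul_one],
    smash_symm_single ι u e he]
  exact subset_trans (aux_single_support _ _) (Set.singleton_subset_iff.2 H.one_mem)

theorem smashSub_mem_u (H : Subgroup G) (g : G) (hg : g ∈ H) :
    (u g : S) ∈ smashSub φ ι u e hrel he H := by
  show ↑(e.symm ((u g : S))).support ⊆ (H : Set G)
  rw [smash_symm_u ι u e he]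
  exact subset_trans (aux_single_support _ _) (Set.singleton_subset_iff.2 hg)

theorem smashSub_bot : smashSub φ ι u e hrel he ⊥ = ι.range := by
  apply le_antisymm
  · intro s hs
    have hs' : (e.symm s).support ⊆ {1} := by
      intro g hg
      have := hs hg
      rw [Finset.mem_singleton]
      simpa using this
    rw [Finsupp.support_subset_singleton] at hs'
    refine ⟨(e.symm s) 1, ?_⟩
    have h2 : s = e (e.symm s) := (e.apply_symm_apply s).symm
    conv_rhs => rw [h2, hs']
    rw [he]
    simp
  · rintro s ⟨r, rfl⟩
    exact smashSub_mem_iota φ ι u e he hrel ⊥ r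

theorem smashSub_top : smashSub φ ι u e hrel he ⊤ = ⊤ := by
  rw [eq_top_iff]
  intro s _
  show ↑(e.symm s).support ⊆ ((⊤ : Subgroup G) : Set G)
  intro g _
  simp

theorem smashSub_mono {H H' : Subgroup G} (h : H ≤ H') :
    smashSub φ ι u e hrel he H ≤ smashSub φ ι u e hrel he H' := by
  intro s hs
  intro g hg
  exact h (hs hg)

include hrel he in
theorem smash_conj_mem (H K : Subgroup G) (hN : ∀ g ∈ K, ∀ h ∈ H, g * h * g⁻¹ ∈ H)
    (g0 : G) (hg0 : g0 ∈ K) (s : S) (hs : s ∈ smashSub φ ι u e hrel he H) :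
    (u g0 : S) * s * (u g0⁻¹ : S) ∈ smashSub φ ι u e hrel he H := by
  have h1 : ↑(e.symm ((u g0 : S) * s)).support ⊆ ({g0} : Set G) * (H : Set G) := by
    refine smash_suppMul φ ι u e he hrel _ _ _ _ ?_ hs
    rw [smash_symm_u ι u e he]
    exact aux_single_support _ _
  have h2 : ↑(e.symm ((u g0 : S) * s * (u g0⁻¹ : S))).support
      ⊆ (({g0} : Set G) * (H : Set G)) * ({g0⁻¹} : Set G) := by
    refine smash_suppMul φ ι u e he hrel _ _ _ _ h1 ?_
    rw [smash_symm_u ι u e he]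
    exact aux_single_support _ _
  refine subset_trans h2 ?_
  rintro g'' ⟨g1, hg1, y, hy, rfl⟩
  obtain ⟨a, ha, b, hb, rfl⟩ := hg1
  rw [Set.mem_singleton_iff] at ha hy
  rw [ha, hy]
  exact hN g0 hg0 b hb

include hrel he in
theorem smash_dec (H K : Subgroup G) (hHK : H ≤ K)
    {T : Type*} (xm : T → G) (hxK : ∀ t, xm t ∈ K)
    (hd : ∀ t t' : T, xm t * (xm t')⁻¹ ∈ H → t = t')
    (hc : ∀ g ∈ K, ∃ t, g * (xm t)⁻¹ ∈ H) :
    Function.Injective (fun f : T →₀ ↥(smashSub φ ι u e hrel he H) =>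
      f.sum fun t r => (r : S) * (u (xm t) : S))
    ∧ Set.range (fun f : T →₀ ↥(smashSub φ ι u e hrel he H) =>
      f.sum fun t r => (r : S) * (u (xm t) : S))
      = ((smashSub φ ι u e hrel he K : Subalgebra k S) : Set S) := by
  classical
  set AH := smashSub φ ι u e hrel he H with hAH
  set AK := smashSub φ ι u e hrel he K with hAK
  set Fm : (T →₀ ↥AH) → S := fun f => f.sum fun t r => (r : S) * (u (xm t) : S) with hFmdef
  have hFm_zero : Fm 0 = 0 := Finsupp.sum_zero_index
  have hFm_add : ∀ f f', Fm (f + f') = Fm f + Fm f' := fun f f' =>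
    Finsupp.sum_add_index' (fun t => by show ((0 : ↥AH) : S) * _ = 0; simp)
      (fun t a b => by show ((a : S) + (b : S)) * _ = _; rw [add_mul])
  have hFm_single : ∀ t (r : ↥AH), Fm (Finsupp.single t r) = (r : S) * (u (xm t) : S) :=
    fun t r => Finsupp.sum_single_index (by show ((0 : ↥AH) : S) * _ = 0; simp)
  have hsupp_term : ∀ (r : ↥AH) (t : T),
      ↑(e.symm ((r : S) * (u (xm t) : S))).support ⊆ (H : Set G) * ({xm t} : Set G) := by
    intro r t
    refine smash_suppMul φ ι u e he hrel _ _ _ _ r.2 ?_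
    rw [smash_symm_u ι u e he]
    exact aux_single_support _ _
  have hFm_expand : ∀ f : T →₀ ↥AH,
      Fm f = ∑ t ∈ f.support, ((f t : S) * (u (xm t) : S)) := fun f => rfl
  -- coefficient extraction
  have hcoef : ∀ (f : T →₀ ↥AH) (t : T) (g : G), g ∈ (H : Set G) * ({xm t} : Set G) →
      e.symm (Fm f) g = e.symm ((f t : S) * (u (xm t) : S)) g := by
    intro f t g hg
    rw [hFm_expand, map_sum, Finsupp.finset_sum_apply]
    apply Finset.sum_eq_single t
    · intro t' ht' hne
      by_contra hne0
      have hmem : g ∈ (e.symm ((f t' : S) * (u (xm t') : S))).support :=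
        Finsupp.mem_support_iff.2 hne0
      have h2 : g ∈ (H : Set G) * ({xm t'} : Set G) := hsupp_term _ _ hmem
      obtain ⟨a, ha, b, hb, hab⟩ := hg
      obtain ⟨a', ha', b', hb', hab'⟩ := h2
      rw [Set.mem_singleton_iff] at hb hb'
      subst hb; subst hb'
      have : xm t' * (xm t)⁻¹ ∈ H := by
        have hx : a' * xm t' = a * xm t := hab'.trans hab.symm
        have h4 : xm t' * (xm t)⁻¹ = a'⁻¹ * a := by
          have h3 : a' * (xm t' * (xm t)⁻¹) = a' * (a'⁻¹ * a) := by
            rw [← mul_assoc, hx, mul_inv_cancel_right, mul_inv_cancel_left]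
          exact mul_left_cancel h3
        rw [h4]
        exact H.mul_mem (H.inv_mem ha') ha
      exact hne (hd t' t this)
    · intro ht
      rw [Finsupp.notMem_support_iff.1 ht]
      show e.symm (((0 : ↥AH) : S) * _) _ = _
      simp
  constructor
  · -- injectivity
    intro f f' hEq
    have hterm : ∀ t, (f t : S) * (u (xm t) : S) = (f' t : S) * (u (xm t) : S) := by
      intro t
      apply e.symm.injective
      apply Finsupp.ext
      intro g
      by_cases hg : g ∈ (H : Set G) * ({xm t} : Set G)
      · rw [← hcoef f t g hg, ← hcoef f' t g hg, hEq]
      · rw [Finsupp.notMem_support_iff.1 (fun hmem => hg (hsupp_term (f t) t hmem)),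
          Finsupp.notMem_support_iff.1 (fun hmem => hg (hsupp_term (f' t) t hmem))]
    apply DFunLike.ext
    intro t
    apply Subtype.ext
    have := hterm t
    calc (f t : S) = (f t : S) * (u (xm t) : S) * ((u (xm t))⁻¹ : Sˣ) := by
          rw [mul_assoc, Units.mul_inv, mul_one]
      _ = (f' t : S) * (u (xm t) : S) * ((u (xm t))⁻¹ : Sˣ) := by rw [this]
      _ = (f' t : S) := by rw [mul_assoc, Units.mul_inv, mul_one]
  · -- range
    apply Set.eq_of_subset_of_subset
    · rintro s ⟨f, rfl⟩
      show Fm f ∈ AK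
      show ↑(e.symm (Fm f)).support ⊆ (K : Set G)
      intro g hg
      rw [Finset.mem_coe, hFm_expand, map_sum] at hg
      have h3 := Finsupp.support_finset_sum hg
      rw [Finset.mem_biUnion] at h3
      obtain ⟨t, ht, h4⟩ := h3
      have h5 : g ∈ (H : Set G) * ({xm t} : Set G) := hsupp_term _ _ h4
      obtain ⟨a, ha, b, hb, hab⟩ := h5
      rw [Set.mem_singleton_iff] at hb
      rw [← hab, hb]
      exact K.mul_mem (hHK ha) (hxK t)
    · intro s hs
      have hs' : ↑(e.symm s).support ⊆ (K : Set G) := hs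
      choose tOf htOf using hc
      have hmemH : ∀ (g : G) (hg : g ∈ K),
          ι ((e.symm s) g) * (u g : S) * ((u (xm (tOf g hg)))⁻¹ : Sˣ)
            ∈ smashSub φ ι u e hrel he H := by
        intro g hg
        have h1 : ι ((e.symm s) g) * (u g : S) * ((u (xm (tOf g hg)))⁻¹ : Sˣ)
            = ι ((e.symm s) g) * (u (g * (xm (tOf g hg))⁻¹) : S) := by
          rw [map_mul u, map_inv u, Units.val_mul, mul_assoc]
        rw [h1]
        show ↑(e.symm _).support ⊆ (H : Set G)
        rw [smash_symm_single ι u e he]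
        exact subset_trans (aux_single_support _ _)
          (Set.singleton_subset_iff.2 (htOf g hg))
      set FmHom : (T →₀ ↥AH) →+ S :=
        { toFun := Fm, map_zero' := hFm_zero, map_add' := hFm_add } with hFmHom
      refine ⟨∑ g ∈ (e.symm s).support.attach,
        Finsupp.single (tOf g.1 (hs' g.2))
          ⟨ι ((e.symm s) g.1) * (u g.1 : S) * ((u (xm (tOf g.1 (hs' g.2))))⁻¹ : Sˣ),
            hmemH g.1 (hs' g.2)⟩, ?_⟩
      show Fm _ = s
      have hmap : Fm (∑ g ∈ (e.symm s).support.attach,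
          Finsupp.single (tOf g.1 (hs' g.2))
            (⟨ι ((e.symm s) g.1) * (u g.1 : S) * ((u (xm (tOf g.1 (hs' g.2))))⁻¹ : Sˣ),
              hmemH g.1 (hs' g.2)⟩ : ↥AH))
          = ∑ g ∈ (e.symm s).support.attach,
            Fm (Finsupp.single (tOf g.1 (hs' g.2))
              (⟨ι ((e.symm s) g.1) * (u g.1 : S) * ((u (xm (tOf g.1 (hs' g.2))))⁻¹ : Sˣ),
                hmemH g.1 (hs' g.2)⟩ : ↥AH)) := map_sum FmHom _ _
      rw [hmap]
      have hterm2 : ∀ g ∈ (e.symm s).support.attach,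
          Fm (Finsupp.single (tOf g.1 (hs' g.2))
            (⟨ι ((e.symm s) g.1) * (u g.1 : S) * ((u (xm (tOf g.1 (hs' g.2))))⁻¹ : Sˣ),
              hmemH g.1 (hs' g.2)⟩ : ↥AH))
          = ι ((e.symm s) g.1) * (u g.1 : S) := by
        intro g _
        rw [hFm_single]
        show ι ((e.symm s) g.1) * (u g.1 : S) * ((u (xm (tOf g.1 (hs' g.2))))⁻¹ : Sˣ)
            * (u (xm (tOf g.1 (hs' g.2))) : S) = _
        rw [mul_assoc, Units.inv_mul, mul_one]
      rw [Finset.sum_congr rfl hterm2]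
      rw [Finset.sum_attach ((e.symm s).support) (fun g => ι ((e.symm s) g) * (u g : S))]
      exact (smash_expand ι u e he s).symm

end Smash

set_option maxHeartbeats 1600000 in

/-- Let `G` be a polycyclic-by-finite group acting on a `k`-algebra `R`, and let
`S = R # k[G]` be the smash product (encoded by `ι : R → S`, `u : G → Sˣ` with the skew
group algebra relations and basis).  Then there is a chain of subalgebras
`ι(R) = R_0 ⊆ R_1 ⊆ ... ⊆ R_m = S` such that each step is either a skew Laurent extension
or a finite free normalizing extension.  Consequently, if `R` is left noetherian then `S`
is left noetherian. -/
theorem stmt14 (k R G S : Type*) [Field k] [Ring R] [Algebra k R] [Group G]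
    [Ring S] [Algebra k S]
    -- G is polycyclic-by-finite: subnormal chain with cyclic quotients
    (hpoly : ∃ (m : ℕ) (Gs : Fin (m + 1) → Subgroup G), Gs 0 = ⊥ ∧
      Gs (Fin.last m) = ⊤ ∧ (∀ i : Fin m, Gs i.castSucc ≤ Gs i.succ) ∧
      (∀ i : Fin m, ∃ _ : ((Gs i.castSucc).subgroupOf (Gs i.succ)).Normal,
        IsCyclic (↥(Gs i.succ) ⧸ (Gs i.castSucc).subgroupOf (Gs i.succ))))
    -- the action and the smash product structure
    (φ : G →* (R ≃ₐ[k] R)) (ι : R →ₐ[k] S) (u : G →* Sˣ)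
    (hι : Function.Injective ι)
    (hrel : ∀ (g : G) (r : R), (u g : S) * ι r = ι (φ g r) * (u g : S))
    (hbasis : Function.Bijective (fun f : G →₀ R => f.sum (fun g r => ι r * (u g : S)))) :
    (∃ (m' : ℕ) (Rs : Fin (m' + 1) → Subalgebra k S), Rs 0 = ι.range ∧
      Rs (Fin.last m') = ⊤ ∧ (∀ i : Fin m', Rs i.castSucc ≤ Rs i.succ) ∧
      ∀ i : Fin m',
        -- either a skew Laurent extension
        (∃ x : Sˣ, (x : S) ∈ Rs i.succ ∧ ((x⁻¹ : Sˣ) : S) ∈ Rs i.succ ∧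
          (∀ r ∈ Rs i.castSucc, (x : S) * r * ((x⁻¹ : Sˣ) : S) ∈ Rs i.castSucc ∧
            ((x⁻¹ : Sˣ) : S) * r * (x : S) ∈ Rs i.castSucc) ∧
          Function.Injective
            (fun f : ℤ →₀ ↥(Rs i.castSucc) => f.sum fun j r => (r : S) * ((x ^ j : Sˣ) : S)) ∧
          Set.range
            (fun f : ℤ →₀ ↥(Rs i.castSucc) => f.sum fun j r => (r : S) * ((x ^ j : Sˣ) : S))
            = (Rs i.succ : Set S)) ∨
        -- or a finite free normalizing extension
        (∃ (n : ℕ) (xs : Fin n → S), (∀ j, xs j ∈ Rs i.succ) ∧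
          (∀ j, {s : S | ∃ r ∈ Rs i.castSucc, s = xs j * r}
              = {s : S | ∃ r ∈ Rs i.castSucc, s = r * xs j}) ∧
          Function.Injective (fun c : Fin n → ↥(Rs i.castSucc) => ∑ j, (c j : S) * xs j) ∧
          Set.range (fun c : Fin n → ↥(Rs i.castSucc) => ∑ j, (c j : S) * xs j)
            = (Rs i.succ : Set S))) ∧
    (IsNoetherianRing R → IsNoetherianRing S) := by
  classical
  obtain ⟨m, Gs, hG0, hGlast, hGle, hGcyc⟩ := hpoly
  -- build the linear equivalence (G →₀ R) ≃ₗ[k] S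
  set Φ : (G →₀ R) →ₗ[k] S :=
    Finsupp.lsum k (fun g => (LinearMap.mulRight k ((u g : S))).comp ι.toLinearMap) with hΦ
  have hΦapply : ∀ f : G →₀ R, Φ f = f.sum fun g r => ι r * (u g : S) := by
    intro f
    rw [hΦ, Finsupp.lsum_apply]
    rfl
  have hΦbij : Function.Bijective Φ := by
    have hfun : ⇑Φ = fun f : G →₀ R => f.sum fun g r => ι r * (u g : S) := funext hΦapply
    rw [hfun]
    exact hbasis
  set e : (G →₀ R) ≃ₗ[k] S := LinearEquiv.ofBijective Φ hΦbij with hedef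
  have he : ∀ (g : G) (r : R), e (Finsupp.single g r) = ι r * (u g : S) := by
    intro g r
    show Φ (Finsupp.single g r) = _
    rw [hΦapply]
    exact Finsupp.sum_single_index (by simp)
  set Rs : Fin (m + 1) → Subalgebra k S := fun i => smashSub φ ι u e hrel he (Gs i) with hRsdef
  have h0 : Rs 0 = ι.range := by
    rw [hRsdef]
    show smashSub φ ι u e hrel he (Gs 0) = ι.range
    rw [hG0]
    exact smashSub_bot φ ι u e he hrel
  have hlast : Rs (Fin.last m) = ⊤ := by
    rw [hRsdef]
    show smashSub φ ι u e hrel he (Gs (Fin.last m)) = ⊤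
    rw [hGlast]
    exact smashSub_top φ ι u e he hrel
  have hmono : ∀ i : Fin m, Rs i.castSucc ≤ Rs i.succ :=
    fun i => smashSub_mono φ ι u e he hrel (hGle i)
  have hstep : ∀ i : Fin m,
      (∃ x : Sˣ, (x : S) ∈ Rs i.succ ∧ ((x⁻¹ : Sˣ) : S) ∈ Rs i.succ ∧
        (∀ r ∈ Rs i.castSucc, (x : S) * r * ((x⁻¹ : Sˣ) : S) ∈ Rs i.castSucc ∧
          ((x⁻¹ : Sˣ) : S) * r * (x : S) ∈ Rs i.castSucc) ∧
        Function.Injective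
          (fun f : ℤ →₀ ↥(Rs i.castSucc) => f.sum fun j r => (r : S) * ((x ^ j : Sˣ) : S)) ∧
        Set.range
          (fun f : ℤ →₀ ↥(Rs i.castSucc) => f.sum fun j r => (r : S) * ((x ^ j : Sˣ) : S))
          = (Rs i.succ : Set S)) ∨
      (∃ (n : ℕ) (xs : Fin n → S), (∀ j, xs j ∈ Rs i.succ) ∧
        (∀ j, {s : S | ∃ r ∈ Rs i.castSucc, s = xs j * r}
            = {s : S | ∃ r ∈ Rs i.castSucc, s = r * xs j}) ∧
        Function.Injective (fun c : Fin n → ↥(Rs i.castSucc) => ∑ j, (c j : S) * xs j) ∧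
        Set.range (fun c : Fin n → ↥(Rs i.castSucc) => ∑ j, (c j : S) * xs j)
          = (Rs i.succ : Set S)) := by
    intro i
    obtain ⟨hNorm, hCyc⟩ := hGcyc i
    have hHK : Gs i.castSucc ≤ Gs i.succ := hGle i
    have hN : ∀ g ∈ Gs i.succ, ∀ h ∈ Gs i.castSucc, g * h * g⁻¹ ∈ Gs i.castSucc := by
      intro g hgK h hhH
      have hh : (⟨h, hHK hhH⟩ : ↥(Gs i.succ)) ∈ (Gs i.castSucc).subgroupOf (Gs i.succ) := by
        rwa [Subgroup.mem_subgroupOf]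
      have h2 := hNorm.conj_mem _ hh ⟨g, hgK⟩
      rwa [Subgroup.mem_subgroupOf] at h2
    haveI := hCyc
    obtain ⟨q, hq⟩ := IsCyclic.exists_generator
      (α := ↥(Gs i.succ) ⧸ (Gs i.castSucc).subgroupOf (Gs i.succ))
    set π := QuotientGroup.mk' ((Gs i.castSucc).subgroupOf (Gs i.succ)) with hπdef
    have hker : ∀ z : ↥(Gs i.succ), π z = 1 ↔ (z : G) ∈ Gs i.castSucc := by
      intro z
      rw [hπdef, QuotientGroup.mk'_apply, QuotientGroup.eq_one_iff, Subgroup.mem_subgroupOf]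
    rcases finite_or_infinite (↥(Gs i.succ) ⧸ (Gs i.castSucc).subgroupOf (Gs i.succ))
      with hFin | hInf
    · -- FINITE quotient: finite free normalizing extension
      right
      haveI := Fintype.ofFinite (↥(Gs i.succ) ⧸ (Gs i.castSucc).subgroupOf (Gs i.succ))
      set eqv := Fintype.equivFin (↥(Gs i.succ) ⧸ (Gs i.castSucc).subgroupOf (Gs i.succ))
        with heqv
      choose rep hrep using fun t => QuotientGroup.mk'_surjective
        ((Gs i.castSucc).subgroupOf (Gs i.succ)) (eqv.symm t)
      set xm : Fin (Fintype.card _) → G := fun t => ((rep t : ↥(Gs i.succ)) : G) with hxmdef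
      have hxK : ∀ t, xm t ∈ Gs i.succ := fun t => (rep t).2
      have hd : ∀ t t', xm t * (xm t')⁻¹ ∈ Gs i.castSucc → t = t' := by
        intro t t' hmem
        have h2 : π (rep t * (rep t')⁻¹) = 1 := (hker _).2 hmem
        rw [map_mul, map_inv, mul_inv_eq_one, hrep, hrep] at h2
        exact eqv.symm.injective h2
      have hc : ∀ g ∈ Gs i.succ, ∃ t, g * (xm t)⁻¹ ∈ Gs i.castSucc := by
        intro g hg
        refine ⟨eqv (π ⟨g, hg⟩), ?_⟩
        have h2 : π (⟨g, hg⟩ * (rep (eqv (π ⟨g, hg⟩)))⁻¹) = 1 := by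
          rw [map_mul, map_inv, hrep, Equiv.symm_apply_apply, mul_inv_cancel]
        exact (hker _).1 h2
      obtain ⟨hinj', hrange'⟩ := smash_dec φ ι u e he hrel
        (Gs i.castSucc) (Gs i.succ) hHK xm hxK hd hc
      have hcomp : (fun c : Fin (Fintype.card _) → ↥(Rs i.castSucc) =>
            ∑ j, (c j : S) * ((u (xm j) : S)))
          = (fun f : Fin (Fintype.card _) →₀ ↥(smashSub φ ι u e hrel he (Gs i.castSucc)) =>
              f.sum fun t r => (r : S) * (u (xm t) : S)) ∘ ⇑Finsupp.equivFunOnFinite.symm := by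
        funext c
        show _ = (Finsupp.equivFunOnFinite.symm c).sum fun t r => (r : S) * (u (xm t) : S)
        rw [Finsupp.sum_fintype _ _ (fun t => by
          show ((0 : ↥(smashSub φ ι u e hrel he (Gs i.castSucc))) : S) * _ = 0; simp)]
        rfl
      refine ⟨Fintype.card _, fun t => (u (xm t) : S), ?_, ?_, ?_, ?_⟩
      · intro t
        exact smashSub_mem_u φ ι u e he hrel (Gs i.succ) (xm t) (hxK t)
      · intro t
        apply Set.eq_of_subset_of_subset
        · rintro s ⟨r, hr, rfl⟩
          refine ⟨(u (xm t) : S) * r * (u (xm t)⁻¹ : S),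
            smash_conj_mem φ ι u e he hrel (Gs i.castSucc) (Gs i.succ) hN (xm t) (hxK t) r hr,
            ?_⟩
          have h1 : (u (xm t)⁻¹ : S) * (u (xm t) : S) = 1 := by
            rw [← Units.val_mul, ← map_mul, inv_mul_cancel, map_one, Units.val_one]
          rw [mul_assoc ((u (xm t) : S) * r), h1, mul_one]
        · rintro s ⟨r, hr, rfl⟩
          have hmem := smash_conj_mem φ ι u e he hrel (Gs i.castSucc) (Gs i.succ) hN
            ((xm t)⁻¹) ((Gs i.succ).inv_mem (hxK t)) r hr
          rw [inv_inv] at hmem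
          refine ⟨(u (xm t)⁻¹ : S) * r * (u (xm t) : S), hmem, ?_⟩
          have h1 : (u (xm t) : S) * (u (xm t)⁻¹ : S) = 1 := by
            rw [← Units.val_mul, ← map_mul, mul_inv_cancel, map_one, Units.val_one]
          rw [← mul_assoc, ← mul_assoc, h1, one_mul]
      · rw [hcomp]
        exact hinj'.comp (Equiv.injective _)
      · rw [hcomp, Function.Surjective.range_comp (Equiv.surjective _)]
        exact hrange'
    · -- INFINITE quotient: skew Laurent extension
      left
      obtain ⟨qb, hqb⟩ := QuotientGroup.mk'_surjective ((Gs i.castSucc).subgroupOf (Gs i.succ)) q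
      have hg0K : (qb : G) ∈ Gs i.succ := qb.2
      have hqinf : ¬IsOfFinOrder q := by
        intro hfin
        have h1 : (Set.univ : Set (↥(Gs i.succ) ⧸ (Gs i.castSucc).subgroupOf (Gs i.succ))).Finite :=
          hfin.finite_zpowers.subset (fun z _ => hq z)
        exact Set.infinite_univ h1
      have hzinj : Function.Injective fun n : ℤ => q ^ n :=
        injective_zpow_iff_not_isOfFinOrder.2 hqinf
      set xm : ℤ → G := fun j => (qb : G) ^ j with hxmdef
      have hcoe : ∀ j : ℤ, ((qb ^ j : ↥(Gs i.succ)) : G) = (qb : G) ^ j := fun j => rfl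
      have hxK : ∀ j : ℤ, xm j ∈ Gs i.succ := fun j => by
        show (qb : G) ^ j ∈ _
        rw [← hcoe]
        exact (qb ^ j).2
      have hd : ∀ t t' : ℤ, xm t * (xm t')⁻¹ ∈ Gs i.castSucc → t = t' := by
        intro t t' hmem
        have h1 : ((qb ^ (t - t') : ↥(Gs i.succ)) : G) ∈ Gs i.castSucc := by
          rw [hcoe, zpow_sub]
          exact hmem
        have h2 : π (qb ^ (t - t')) = 1 := (hker _).2 h1
        rw [map_zpow, hqb] at h2
        have h3 : q ^ (t - t') = q ^ (0 : ℤ) := by rw [h2, zpow_zero]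
        have h4 := hzinj h3
        omega
      have hc : ∀ g ∈ Gs i.succ, ∃ t : ℤ, g * (xm t)⁻¹ ∈ Gs i.castSucc := by
        intro g hg
        obtain ⟨j, hj⟩ := Subgroup.mem_zpowers_iff.1 (hq (π ⟨g, hg⟩))
        refine ⟨j, ?_⟩
        have h2 : π (⟨g, hg⟩ * (qb ^ j)⁻¹) = 1 := by
          rw [map_mul, map_inv, map_zpow, hqb, hj, mul_inv_cancel]
        exact (hker _).1 h2
      obtain ⟨hinj', hrange'⟩ := smash_dec φ ι u e he hrel
        (Gs i.castSucc) (Gs i.succ) hHK xm hxK hd hc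
      have hfun : (fun f : ℤ →₀ ↥(Rs i.castSucc) =>
            f.sum fun j r => (r : S) * ((u (qb : G) ^ j : Sˣ) : S))
          = (fun f : ℤ →₀ ↥(smashSub φ ι u e hrel he (Gs i.castSucc)) =>
              f.sum fun t r => (r : S) * (u (xm t) : S)) := by
        funext f
        refine Finsupp.sum_congr fun j _ => ?_
        rw [← map_zpow]
      refine ⟨u (qb : G), ?_, ?_, ?_, ?_, ?_⟩
      · exact smashSub_mem_u φ ι u e he hrel (Gs i.succ) (qb : G) hg0K
      · rw [← map_inv u]
        exact smashSub_mem_u φ ι u e he hrel (Gs i.succ) ((qb : G)⁻¹)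
          ((Gs i.succ).inv_mem hg0K)
      · intro r hr
        constructor
        · rw [← map_inv u]
          exact smash_conj_mem φ ι u e he hrel (Gs i.castSucc) (Gs i.succ) hN
            (qb : G) hg0K r hr
        · have hmem := smash_conj_mem φ ι u e he hrel (Gs i.castSucc) (Gs i.succ) hN
            ((qb : G)⁻¹) ((Gs i.succ).inv_mem hg0K) r hr
          rw [inv_inv, map_inv] at hmem
          exact hmem
      · rw [hfun]
        exact hinj'
      · rw [hfun]
        exact hrange'
  refine ⟨⟨m, Rs, h0, hlast, hmono, hstep⟩, ?_⟩
  -- the noetherian conclusion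
  intro hR
  haveI := hR
  have hNoeth : ∀ i : Fin (m + 1), IsNoetherianRing ↥(Rs i) := by
    intro i
    induction i using Fin.induction with
    | zero =>
      rw [h0]
      exact isNoetherianRing_of_ringEquiv R (AlgEquiv.ofInjective ι hι).toRingEquiv
    | succ i ih =>
      rcases hstep i with ⟨x, hx1, hx2, hx3, hx4, hx5⟩ | ⟨n, xs, hxs1, _, _, hxs4⟩
      · exact aux_laurent (Rs i.castSucc) (Rs i.succ) (hmono i) x hx1 hx2 hx3 hx4 hx5 ih
      · exact aux_fin (Rs i.castSucc) (Rs i.succ) (hmono i) n xs hxs1 hxs4 ih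
  have hfinal := hNoeth (Fin.last m)
  rw [hlast] at hfinal
  exact isNoetherianRing_of_ringEquiv _ (Subalgebra.topEquiv (R := k) (A := S)).toRingEquiv
end
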